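/- arXiv:2005.08409 — 8 statements merged into one kernel-verified Lean document; each statement's English description precedes it below -/
import Mathlib

section
/- Let f:ℝⁿ×𝕌→ℝⁿ be locally Lipschitz (𝕌⊆ℝᵐ), and let V:ℝⁿ×ℝⁿ→ℝ≥0 be locally Lipschitz. Suppose there exist a constant κ_c∈ℝ with κ_c≠0 and a K∞ function ρ_uc such that at every point (x,x̂) where V is differentiable and for all u,û∈𝕌: (∂V/∂x)(x,x̂)·f(x,u) + (∂V/∂x̂)(x,x̂)·f(x̂,û) ≤ −κ_c·V(x,x̂) + ρ_uc(‖u−û‖). Let ν,ν̂:[t_k,t_{k+1}]→𝕌 be measurable bounded input signals, and let x(·), x̂(·) be solutions on [t_k,t_{k+1}] of ẋ(t)=f(x(t),ν(t)) and ẋ̂(t)=f(x̂(t),ν̂(t)) respectively. Then V(x(t_{k+1}), x̂(t_{k+1})) ≤ e^{−κ_c(t_{k+1}−t_k)}·V(x(t_k), x̂(t_k)) + ((1−e^{−κ_c(t_{k+1}−t_k)})/κ_c)·ρ_uc(‖ν−ν̂‖∞). -/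
/-- A class `K∞` comparison function. -/
def KInf (α : ℝ → ℝ) : Prop :=
  ContinuousOn α (Set.Ici 0) ∧ StrictMonoOn α (Set.Ici 0) ∧ α 0 = 0 ∧
    Filter.Tendsto α Filter.atTop Filter.atTop


open Set MeasureTheory Filter Metric Topology

/-- 1-D "FTC through a null set" for Lipschitz functions: if `φ` is Lipschitz on `[a,b]`
and has derivative `≤ c` at every point of a full-measure subset of `(a,b)`,
then `φ b - φ a ≤ c * (b - a)`. -/
lemma lipschitz_sub_le_of_ae_deriv_le {φ : ℝ → ℝ} {L : NNReal} {a b c : ℝ} (hab : a ≤ b)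
    (hφ : LipschitzOnWith L φ (Icc a b)) {S : Set ℝ} (hS : S ⊆ Ioo a b)
    (hnull : volume (Ioo a b \ S) = 0)
    (hder : ∀ s ∈ S, ∃ d : ℝ, HasDerivAt φ d s ∧ d ≤ c) :
    φ b - φ a ≤ c * (b - a) := by
  have hC : (0:ℝ) < 1 + (b - a) + ((L:ℝ) + |c| + 1) := by
    have := abs_nonneg c; have := L.coe_nonneg; linarith
  set C : ℝ := 1 + (b - a) + ((L:ℝ) + |c| + 1) with hCdef
  have key : ∀ ε : ℝ, 0 < ε → ε ≤ 1 → φ b - φ a ≤ c * (b - a) + C * ε := by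
    intro ε hε hε1
    -- open superset of the bad set, of measure < ε
    obtain ⟨U, hUsup, hUopen, hUvol⟩ :=
      Set.exists_isOpen_lt_of_lt (Ioo a b \ S) (ENNReal.ofReal ε)
        (by rw [hnull]; exact ENNReal.ofReal_pos.2 hε)
    have hUfin : ∀ t, volume (U ∩ Ioc a t) ≠ ⊤ :=
      fun t => ne_top_of_lt (lt_of_le_of_lt (measure_mono Set.inter_subset_left)
        (hUvol.trans_le le_top))
    set m : ℝ → ℝ := fun t => (volume (U ∩ Ioc a t)).toReal with hmdef
    have hm_mono : ∀ ⦃t₁ t₂⦄, t₁ ≤ t₂ → m t₁ ≤ m t₂ := by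
      intro t₁ t₂ h
      exact ENNReal.toReal_mono (hUfin t₂)
        (measure_mono (Set.inter_subset_inter_right _ (Set.Ioc_subset_Ioc_right h)))
    have hm_lip : ∀ ⦃t₁ t₂⦄, t₁ ≤ t₂ → m t₂ - m t₁ ≤ t₂ - t₁ := by
      intro t₁ t₂ h
      have h1 : volume (U ∩ Ioc a t₂) ≤ volume (U ∩ Ioc a t₁) + volume (Ioc t₁ t₂) := by
        refine le_trans (measure_mono ?_) (measure_union_le _ _)
        rintro z ⟨hzU, hz⟩
        rcases le_or_gt z t₁ with h'|h'
        · exact Or.inl ⟨hzU, hz.1, h'⟩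
        · exact Or.inr ⟨h', hz.2⟩
      have h2 : volume (Ioc t₁ t₂) = ENNReal.ofReal (t₂ - t₁) := by
        simp [Real.volume_Ioc]
      rw [h2] at h1
      have := ENNReal.toReal_mono (by
        exact ENNReal.add_ne_top.2 ⟨hUfin t₁, ENNReal.ofReal_ne_top⟩) h1
      rw [ENNReal.toReal_add (hUfin t₁) ENNReal.ofReal_ne_top,
        ENNReal.toReal_ofReal (by linarith)] at this
      simp only [hmdef]
      linarith
    have hm_cont : Continuous m := by
      rw [Metric.continuous_iff]
      intro t δ hδ
      refine ⟨δ, hδ, fun s hs => ?_⟩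
      rw [Real.dist_eq] at hs ⊢
      rcases le_total s t with h|h
      · have h1 := hm_lip h
        have h2 := hm_mono h
        rw [abs_sub_comm, abs_of_nonneg (by linarith)]
        calc m t - m s ≤ t - s := h1
        _ ≤ |s - t| := by rw [abs_sub_comm]; exact le_abs_self _
        _ < δ := hs
      · have h1 := hm_lip h
        have h2 := hm_mono h
        rw [abs_of_nonneg (by linarith)]
        calc m s - m t ≤ s - t := h1
        _ ≤ |s - t| := le_abs_self _
        _ < δ := hs
    set K : ℝ := (L:ℝ) + |c + ε| with hKdef
    have hK0 : 0 ≤ K := by positivity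
    set B : ℝ → ℝ := fun t => φ a + ε + (c + ε) * (t - a) + K * m t with hBdef
    have hma : m a = 0 := by simp [hmdef]
    have hBa : φ a < B a := by simp [hBdef, hma]; linarith
    have hBcont : Continuous B := by continuity
    set s : Set ℝ := {t | φ t ≤ B t} ∩ Icc a b with hsdef
    have hs_closed : IsClosed s := by
      have A : ContinuousOn (fun t => (φ t, B t)) (Icc a b) :=
        hφ.continuousOn.prodMk hBcont.continuousOn
      simp only [hsdef, Set.inter_comm]
      exact A.preimage_isClosed_of_isClosed isClosed_Icc
        (OrderClosedTopology.isClosed_le' : IsClosed {p : ℝ × ℝ | p.1 ≤ p.2})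
    have main : Icc a b ⊆ {t | φ t ≤ B t} := by
      apply hs_closed.Icc_subset_of_forall_exists_gt hBa.le
      rintro t ⟨(htB : φ t ≤ B t), htab⟩ y hy
      rcases htB.lt_or_eq with hlt | heq
      · -- strict inequality: continuity
        refine nonempty_of_mem (inter_mem ?_ (Ioc_mem_nhdsGT_of_mem ⟨le_rfl, hy⟩))
        have A : ContinuousOn (fun t => (φ t, B t)) (Icc a b) :=
          hφ.continuousOn.prodMk hBcont.continuousOn
        have h1 : ∀ᶠ z in 𝓝[Icc a b] t, φ z < B z :=
          A t (Ico_subset_Icc_self htab)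
            (IsOpen.mem_nhds (isOpen_lt continuous_fst continuous_snd) hlt)
        have h2 : ∀ᶠ z in 𝓝[>] t, φ z < B z :=
          nhdsWithin_le_of_mem (Icc_mem_nhdsGT_of_mem htab) h1
        exact h2.mono fun z hz => hz.le
      · -- equality: t ≠ a
        have hta : t ≠ a := by
          rintro rfl; exact absurd heq.symm hBa.ne'
        have htIoo : t ∈ Ioo a b := ⟨lt_of_le_of_ne htab.1 (Ne.symm hta), htab.2⟩
        by_cases htS : t ∈ S
        · -- differentiability point
          obtain ⟨d, hd, hdc⟩ := hder t htS
          have hslope : Tendsto (slope φ t) (𝓝[>] t) (𝓝 d) :=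
            (hasDerivAt_iff_tendsto_slope.1 hd).mono_left
              (nhdsWithin_mono _ fun z hz => ne_of_gt hz)
          have h1 : ∀ᶠ z in 𝓝[>] t, slope φ t z < c + ε :=
            hslope (Iio_mem_nhds (by linarith))
          have h2 : ∀ᶠ z in 𝓝[>] t, z ∈ Ioc t (min y b) :=
            Ioc_mem_nhdsGT_of_mem ⟨le_rfl, lt_min hy htab.2⟩
          obtain ⟨z, hz1, hz2⟩ := (h1.and h2).exists
          refine ⟨z, ⟨?_, hz2.1, le_trans hz2.2 (min_le_left _ _)⟩⟩
          -- φ z ≤ B z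
          have hzt : 0 < z - t := sub_pos.2 hz2.1
          have : (φ z - φ t) / (z - t) < c + ε := by
            have := hz1
            rwa [slope_def_field] at this
          have h3 : φ z - φ t ≤ (c + ε) * (z - t) := by
            rw [div_lt_iff₀ hzt] at this; linarith
          have h4 : B z - B t = (c + ε) * (z - t) + K * (m z - m t) := by
            simp only [hBdef]; ring
          have h5 : 0 ≤ K * (m z - m t) :=
            mul_nonneg hK0 (by linarith [hm_mono hz2.1.le])
          simp only [Set.mem_setOf_eq]
          linarith [heq]
        · -- t in the open set U
          have htU : t ∈ U := hUsup ⟨htIoo, htS⟩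
          obtain ⟨η, hη, hball⟩ := Metric.isOpen_iff.1 hUopen t htU
          set z : ℝ := min (t + η / 2) (min y b) with hzdef
          have hzt : t < z := lt_min (by linarith) (lt_min hy htab.2)
          have hzU : Ioc t z ⊆ U := by
            intro w hw
            apply hball
            rw [Metric.mem_ball, Real.dist_eq, abs_of_pos (sub_pos.2 hw.1)]
            have : w ≤ t + η / 2 := le_trans hw.2 (min_le_left _ _)
            linarith
          have hzb : z ≤ b := le_trans (min_le_right _ _) (min_le_right _ _)
          have hzy : z ≤ y := le_trans (min_le_right _ _) (min_le_left _ _)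
          -- m z - m t ≥ z - t
          have hm_gain : z - t ≤ m z - m t := by
            have hdisj : Disjoint (U ∩ Ioc a t) (Ioc t z) := by
              refine Set.disjoint_left.2 ?_
              rintro w ⟨_, _, hw2⟩ ⟨hw3, _⟩
              exact absurd hw3 (not_lt.2 hw2)
            have hsub : (U ∩ Ioc a t) ∪ Ioc t z ⊆ U ∩ Ioc a z := by
              rintro w (⟨hw1, hw2, hw3⟩ | ⟨hw1, hw2⟩)
              · exact ⟨hw1, hw2, le_trans hw3 hzt.le⟩
              · exact ⟨hzU ⟨hw1, hw2⟩, lt_of_le_of_lt htab.1 hw1, hw2⟩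
            have h1 : volume (U ∩ Ioc a t) + volume (Ioc t z) ≤ volume (U ∩ Ioc a z) := by
              rw [← measure_union hdisj measurableSet_Ioc]
              exact measure_mono hsub
            have h2 : volume (Ioc t z) = ENNReal.ofReal (z - t) := by simp [Real.volume_Ioc]
            rw [h2] at h1
            have h3 := ENNReal.toReal_mono (hUfin z) h1
            rw [ENNReal.toReal_add (hUfin t) ENNReal.ofReal_ne_top,
              ENNReal.toReal_ofReal (by linarith)] at h3
            simp only [hmdef]; linarith
          refine ⟨z, ⟨?_, hzt, hzy⟩⟩
          -- φ z ≤ B z using Lipschitz bound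
          have hφz : φ z - φ t ≤ L * (z - t) := by
            have := hφ.dist_le_mul z ⟨le_trans htab.1 hzt.le, hzb⟩ t
              ⟨htab.1, htab.2.le⟩
            rw [Real.dist_eq, Real.dist_eq, abs_of_pos (sub_pos.2 hzt)] at this
            calc φ z - φ t ≤ |φ z - φ t| := le_abs_self _
            _ ≤ L * (z - t) := this
          have hB4 : B z - B t = (c + ε) * (z - t) + K * (m z - m t) := by
            simp only [hBdef]; ring
          have hce : 0 ≤ c + ε + |c + ε| := by have := neg_abs_le (c + ε); linarith
          have : (L:ℝ) * (z - t) ≤ (c + ε) * (z - t) + K * (m z - m t) := by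
            have h5 : K * (z - t) ≤ K * (m z - m t) :=
              mul_le_mul_of_nonneg_left hm_gain hK0
            have : (L:ℝ) * (z - t) ≤ (c + ε + K) * (z - t) := by
              apply mul_le_mul_of_nonneg_right _ (by linarith)
              simp only [hKdef]; linarith
            nlinarith
          simp only [Set.mem_setOf_eq]
          linarith [heq]
    -- evaluate at b
    have hb := main ⟨hab, le_rfl⟩
    have hmb : m b ≤ ε := by
      have h1 : volume (U ∩ Ioc a b) ≤ ENNReal.ofReal ε :=
        le_trans (measure_mono Set.inter_subset_left) hUvol.le
      calc m b ≤ (ENNReal.ofReal ε).toReal := ENNReal.toReal_mono ENNReal.ofReal_ne_top h1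
      _ = ε := ENNReal.toReal_ofReal hε.le
    have hmbnn : 0 ≤ m b := ENNReal.toReal_nonneg
    simp only [hBdef, Set.mem_setOf_eq] at hb
    have hKe : K * m b ≤ ((L:ℝ) + |c| + 1) * ε := by
      have : K ≤ (L:ℝ) + |c| + 1 := by
        simp only [hKdef]
        have := abs_add_le c ε
        have : |c + ε| ≤ |c| + 1 := le_trans (abs_add_le c ε) (by rw [abs_of_pos hε]; linarith)
        linarith
      calc K * m b ≤ K * ε := mul_le_mul_of_nonneg_left hmb hK0
      _ ≤ ((L:ℝ) + |c| + 1) * ε := mul_le_mul_of_nonneg_right this hε.le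
    have : φ b - φ a ≤ ε + (c + ε) * (b - a) + ((L:ℝ) + |c| + 1) * ε := by linarith
    calc φ b - φ a ≤ ε + (c + ε) * (b - a) + ((L:ℝ) + |c| + 1) * ε := this
    _ = c * (b - a) + (1 + (b - a) + ((L:ℝ) + |c| + 1)) * ε := by ring
    _ = c * (b - a) + C * ε := by rw [hCdef]
  -- conclude
  refine le_of_forall_pos_le_add fun δ hδ => ?_
  have hεpos : 0 < min 1 (δ / C) := lt_min one_pos (div_pos hδ hC)
  have h1 := key _ hεpos (min_le_left _ _)
  have h2 : C * min 1 (δ / C) ≤ δ := by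
    calc C * min 1 (δ / C) ≤ C * (δ / C) :=
      mul_le_mul_of_nonneg_left (min_le_right _ _) hC.le
    _ = δ := by field_simp
  linarith

section aux2

variable (n) in
private lemma haarE : Measure.IsAddHaarMeasure (volume : Measure ((Fin n → ℝ) × (Fin n → ℝ))) := by
  rw [Measure.volume_eq_prod]; exact Measure.prod.instIsAddHaarMeasure _ _

variable (n) in
private lemma leftInvE : Measure.IsAddLeftInvariant (volume : Measure ((Fin n → ℝ) × (Fin n → ℝ))) := by
  rw [Measure.volume_eq_prod]; infer_instance

/-- The set of non-differentiability points of a locally Lipschitz function is null. -/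
lemma locallyLipschitz_ae_diff {V : ((Fin n → ℝ) × (Fin n → ℝ)) → ℝ} (hV : LocallyLipschitz V) :
    volume {q : (Fin n → ℝ) × (Fin n → ℝ) | ¬ DifferentiableAt ℝ V q} = 0 := by
  haveI := haarE n
  apply measure_null_of_locally_null
  intro q hq
  obtain ⟨K, t, ht, hK⟩ := hV q
  obtain ⟨r, hr, hball⟩ := Metric.mem_nhds_iff.1 ht
  obtain ⟨g, hg, hEq⟩ := (hK.mono hball).extend_real
  have h1 : volume {p : (Fin n → ℝ) × (Fin n → ℝ) | ¬ DifferentiableAt ℝ g p} = 0 := by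
    have := hg.ae_differentiableAt (μ := volume)
    rwa [ae_iff] at this
  refine ⟨{q' | ¬ DifferentiableAt ℝ V q'} ∩ Metric.ball q r,
    inter_mem self_mem_nhdsWithin (nhdsWithin_le_nhds (Metric.ball_mem_nhds q hr)), ?_⟩
  apply measure_mono_null (t := {p | ¬ DifferentiableAt ℝ g p}) _ h1
  rintro p ⟨hp1, hp2⟩
  intro hd
  have hVg : V =ᶠ[nhds p] g :=
    Filter.eventuallyEq_iff_exists_mem.2 ⟨Metric.ball q r,
      (Metric.isOpen_ball).mem_nhds hp2, fun z hz => hEq hz⟩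
  exact hp1 (hd.congr_of_eventuallyEq hVg)

/-- Fubini slicing: a null set meets almost every line in a null set. -/
lemma slice_null {N : Set ((Fin n → ℝ) × (Fin n → ℝ))} (hNm : MeasurableSet N)
    (hN : volume N = 0) (w : (Fin n → ℝ) × (Fin n → ℝ)) :
    ∀ᵐ y : (Fin n → ℝ) × (Fin n → ℝ), volume {s : ℝ | y + s • w ∈ N} = 0 := by
  haveI := leftInvE n
  have hPm : MeasurableSet {p : ((Fin n → ℝ) × (Fin n → ℝ)) × ℝ | p.1 + p.2 • w ∈ N} :=
    (Continuous.add continuous_fst (continuous_snd.smul continuous_const)).measurable hNm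
  have hswap : MeasurableSet {p : ℝ × ((Fin n → ℝ) × (Fin n → ℝ)) | p.2 + p.1 • w ∈ N} :=
    (Continuous.add continuous_snd (continuous_fst.smul continuous_const)).measurable hNm
  have h1 : ((volume : Measure ℝ).prod (volume : Measure ((Fin n → ℝ) × (Fin n → ℝ))))
      {p | p.2 + p.1 • w ∈ N} = 0 := by
    rw [Measure.measure_prod_null hswap]
    refine ae_of_all _ fun s => ?_
    have heq : (Prod.mk s ⁻¹' {p : ℝ × ((Fin n → ℝ) × (Fin n → ℝ)) | p.2 + p.1 • w ∈ N})
        = (fun y : (Fin n → ℝ) × (Fin n → ℝ) => s • w + y) ⁻¹' N := by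
      ext y; simp [add_comm]
    have h0 : volume ((fun y : (Fin n → ℝ) × (Fin n → ℝ) => s • w + y) ⁻¹' N) = 0 := by
      rw [measure_preimage_add, hN]
    simpa [heq] using h0
  have h2 : (((volume : Measure ((Fin n → ℝ) × (Fin n → ℝ)))).prod (volume : Measure ℝ))
      {p | p.1 + p.2 • w ∈ N} = 0 := by
    rw [← MeasureTheory.Measure.prod_swap, Measure.map_apply measurable_swap hPm]
    exact h1
  have h3 := Measure.measure_ae_null_of_prod_null h2
  rw [← Measure.volume_eq_prod] at h2
  filter_upwards [h3] with y hy
  simpa using hy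
end aux2

/-- Key Dini-derivative bound along the vector field direction. -/
lemma dini_bound {n : ℕ} {V : ((Fin n → ℝ) × (Fin n → ℝ)) → ℝ} (hVl : LocallyLipschitz V)
    {F : ((Fin n → ℝ) × (Fin n → ℝ)) → ((Fin n → ℝ) × (Fin n → ℝ))} (hF : Continuous F)
    {c : ((Fin n → ℝ) × (Fin n → ℝ)) → ℝ} (hc : Continuous c)
    (hb : ∀ q, DifferentiableAt ℝ V q → fderiv ℝ V q (F q) ≤ c q)
    (p : (Fin n → ℝ) × (Fin n → ℝ)) {δ : ℝ} (hδ : 0 < δ) :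
    ∃ h₀ > 0, ∃ ε₀ > 0, ∃ K : NNReal, LipschitzOnWith K V (Metric.ball p ε₀) ∧
      ∀ h ∈ Ioc (0:ℝ) h₀, V (p + h • F p) - V p ≤ (c p + δ) * h := by
  haveI := haarE n
  classical
  obtain ⟨K, t, ht, hK⟩ := hVl p
  obtain ⟨R, hR, hballR⟩ := Metric.mem_nhds_iff.1 ht
  set w := F p with hw
  -- neighborhood where `c` and `F` are controlled
  have hW : {q | c q < c p + δ/2} ∩ ({q | ‖F q - w‖ < δ/(2*((K:ℝ)+1))} ∩ Metric.ball p R)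
      ∈ 𝓝 p := by
    refine inter_mem ?_ (inter_mem ?_ (Metric.ball_mem_nhds p hR))
    · exact (isOpen_lt hc continuous_const).mem_nhds (by simp [hw]; linarith)
    · refine (isOpen_lt ((hF.sub continuous_const).norm) continuous_const).mem_nhds ?_
      simp only [Set.mem_setOf_eq, hw, Pi.sub_apply, sub_self, norm_zero]
      positivity
  obtain ⟨r, hr, hball⟩ := Metric.mem_nhds_iff.1 hW
  have hrR : Metric.ball p r ⊆ Metric.ball p R :=
    fun q hq => ((hball hq).2.2)
  have hsubt : Metric.ball p r ⊆ t := fun q hq => hballR (hrR hq)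
  have hKr : LipschitzOnWith K V (Metric.ball p r) := hK.mono hsubt
  set h₀ := r / (2 * (‖w‖ + 1)) with hh₀
  have hh₀pos : 0 < h₀ := by positivity
  refine ⟨h₀, hh₀pos, r, hr, K, hKr, ?_⟩
  intro h hh
  -- the null sets
  set N := {q : (Fin n → ℝ) × (Fin n → ℝ) | ¬ DifferentiableAt ℝ V q} with hN
  have hNm : MeasurableSet N := (measurableSet_of_differentiableAt ℝ V).compl
  have hNnull : volume N = 0 := locallyLipschitz_ae_diff hVl
  have hae := slice_null hNm hNnull w
  set G := {y : (Fin n → ℝ) × (Fin n → ℝ) | volume {s : ℝ | y + s • w ∈ N} = 0} with hG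
  have hGc : volume Gᶜ = 0 := by
    rw [hG, Set.compl_setOf]
    rw [ae_iff] at hae
    exact hae
  -- main estimate for good y near p
  have main : ∀ y ∈ G, dist y p < r/2 → V (y + h • w) - V y ≤ (c p + δ) * h := by
    intro y hyG hyp
    have hseg : ∀ s ∈ Icc (0:ℝ) h, y + s • w ∈ Metric.ball p r := by
      intro s hs
      have h1 : ‖y + s • w - p‖ ≤ ‖y - p‖ + s * ‖w‖ := by
        calc ‖y + s • w - p‖ = ‖(y - p) + s • w‖ := by ring_nf
        _ ≤ ‖y - p‖ + ‖s • w‖ := norm_add_le _ _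
        _ = ‖y - p‖ + |s| * ‖w‖ := by rw [norm_smul, Real.norm_eq_abs]
        _ = ‖y - p‖ + s * ‖w‖ := by rw [abs_of_nonneg hs.1]
      have h2 : s * ‖w‖ ≤ h₀ * ‖w‖ :=
        mul_le_mul_of_nonneg_right (le_trans hs.2 hh.2) (norm_nonneg w)
      have h3 : h₀ * ‖w‖ < r/2 := by
        rw [hh₀]
        rw [div_mul_eq_mul_div, div_lt_div_iff₀ (by positivity) (by norm_num)]
        nlinarith [norm_nonneg w]
      rw [Metric.mem_ball, dist_eq_norm]
      rw [dist_eq_norm] at hyp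
      linarith
    have hlip : LipschitzOnWith (K * ‖w‖₊) (fun s : ℝ => V (y + s • w)) (Icc 0 h) := by
      have inner_lip : LipschitzWith ‖w‖₊ (fun s : ℝ => y + s • w) := by
        apply LipschitzWith.of_dist_le_mul
        intro s s'
        simp only [dist_eq_norm]
        rw [show y + s • w - (y + s' • w) = (s - s') • w by module, norm_smul,
          Real.norm_eq_abs]
        rw [mul_comm]
        rfl
      exact LipschitzOnWith.comp hKr (inner_lip.lipschitzOnWith (s := Icc 0 h)) (fun s hs => hseg s hs)
    have := lipschitz_sub_le_of_ae_deriv_le (c := c p + δ) (le_of_lt hh.1) hlip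
      (S := Ioo 0 h ∩ {s | y + s • w ∉ N}) (Set.inter_subset_left) ?_ ?_
    · simpa using this
    · apply measure_mono_null _ hyG
      rintro s ⟨hs1, hs2⟩
      by_contra hcon
      exact hs2 ⟨hs1, hcon⟩
    · rintro s ⟨hs1, hs2⟩
      have hdiff : DifferentiableAt ℝ V (y + s • w) := not_not.1 hs2
      have hinner : HasDerivAt (fun s : ℝ => y + s • w) w s := by
        simpa using (HasDerivAt.const_add y ((hasDerivAt_id s).smul_const w))
      refine ⟨fderiv ℝ V (y + s • w) w, hdiff.hasFDerivAt.comp_hasDerivAt s hinner, ?_⟩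
      set q := y + s • w with hq
      have hqball : q ∈ Metric.ball p r := hseg s ⟨hs1.1.le, hs1.2.le⟩
      have hqW := hball hqball
      have hsplit : fderiv ℝ V q w = fderiv ℝ V q (F q) + fderiv ℝ V q (w - F q) := by
        rw [← map_add]
        congr 1
        abel
      have hb1 : fderiv ℝ V q (F q) ≤ c q := hb q hdiff
      have hb2 : c q < c p + δ/2 := hqW.1
      have hnorm : ‖fderiv ℝ V q‖ ≤ K :=
        norm_fderiv_le_of_lipschitzOn ℝ (Metric.isOpen_ball.mem_nhds hqball) hKr
      have hb3 : fderiv ℝ V q (w - F q) ≤ (K:ℝ) * (δ/(2*((K:ℝ)+1))) := by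
        calc fderiv ℝ V q (w - F q) ≤ ‖fderiv ℝ V q (w - F q)‖ := le_abs_self _
        _ ≤ ‖fderiv ℝ V q‖ * ‖w - F q‖ := (fderiv ℝ V q).le_opNorm _
        _ ≤ (K:ℝ) * (δ/(2*((K:ℝ)+1))) := by
            apply mul_le_mul hnorm _ (norm_nonneg _) K.coe_nonneg
            rw [norm_sub_rev]
            exact hqW.2.1.le
      have hb4 : (K:ℝ) * (δ/(2*((K:ℝ)+1))) ≤ δ/2 := by
        rw [mul_div_assoc']
        rw [div_le_div_iff₀ (by positivity) (by norm_num)]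
        nlinarith [K.coe_nonneg]
      linarith [hsplit ▸ (by linarith : fderiv ℝ V q (F q) + fderiv ℝ V q (w - F q) ≤ c p + δ)]
  -- approximate p by good points
  have hVc : Continuous V := hVl.continuous
  have happrox : ∀ k : ℕ, ∃ y, y ∈ G ∧ dist y p < min (r/2) (1/(k+1)) := by
    intro k
    have hpos : 0 < min (r/2) (1/((k:ℝ)+1)) := lt_min (by positivity) (by positivity)
    have hballpos : 0 < volume (Metric.ball p (min (r/2) (1/(k+1)))) :=
      Metric.measure_ball_pos _ _ hpos
    by_contra hcon
    push_neg at hcon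
    have : Metric.ball p (min (r/2) (1/(k+1))) ⊆ Gᶜ := by
      intro y hy hyG
      exact absurd (hcon y hyG) (not_le.2 (Metric.mem_ball.1 hy))
    exact absurd (measure_mono_null this hGc) (ne_of_gt hballpos)
  choose y hyG hyd using happrox
  have hy_tendsto : Tendsto y atTop (𝓝 p) := by
    rw [tendsto_iff_dist_tendsto_zero]
    apply squeeze_zero (fun k => dist_nonneg) (fun k => (hyd k).le.trans (min_le_right _ _))
    exact tendsto_one_div_add_atTop_nhds_zero_nat
  have hlim : Tendsto (fun k => V (y k + h • w) - V (y k)) atTop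
      (𝓝 (V (p + h • w) - V p)) := by
    apply Tendsto.sub
    · exact (hVc.tendsto _).comp (by
        have : Tendsto (fun k => y k + h • w) atTop (𝓝 (p + h • w)) :=
          hy_tendsto.add tendsto_const_nhds
        exact this)
    · exact (hVc.tendsto _).comp hy_tendsto
  refine le_of_tendsto hlim (Eventually.of_forall fun k => ?_)
  exact main (y k) (hyG k) (lt_of_lt_of_le (hyd k) (min_le_left _ _))

set_option maxHeartbeats 1000000 in
/-- Lemma on the evolution of `V` between impulses: if the locally Lipschitz
function `V` satisfies the differential inequality (c2) at every point of differentiability,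
then along any pair of solutions of `ẋ = f(x, ν(t))`, `ẋ̂ = f(x̂, ν̂(t))` on `[t₀, t₁]`
with measurable bounded inputs taking values in `𝕌`, one has
`V(x(t₁), x̂(t₁)) ≤ e^{-κc(t₁-t₀)} V(x(t₀), x̂(t₀)) + ((1-e^{-κc(t₁-t₀)})/κc) ρ(‖ν-ν̂‖∞)`.
Here `ℝⁿ = Fin n → ℝ` carries the sup-norm. -/
theorem stmt2 {n m : ℕ} (𝕌 : Set (Fin m → ℝ))
    (f : (Fin n → ℝ) → (Fin m → ℝ) → (Fin n → ℝ))
    (hf : LocallyLipschitz fun p : (Fin n → ℝ) × (Fin m → ℝ) => f p.1 p.2)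
    (V : (Fin n → ℝ) × (Fin n → ℝ) → ℝ)
    (hVl : LocallyLipschitz V) (hVnn : ∀ p, 0 ≤ V p)
    (κc : ℝ) (hκc : κc ≠ 0) (ρ : ℝ → ℝ) (hρ : KInf ρ)
    (hc2 : ∀ (x x' : Fin n → ℝ) (u u' : Fin m → ℝ), u ∈ 𝕌 → u' ∈ 𝕌 →
      DifferentiableAt ℝ V (x, x') →
      fderiv ℝ V (x, x') (f x u, f x' u') ≤ -κc * V (x, x') + ρ ‖u - u'‖)
    (t₀ t₁ : ℝ) (ht : t₀ < t₁)
    (ν ν' : ℝ → (Fin m → ℝ))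
    (hνm : Measurable ν) (hν'm : Measurable ν')
    (hν𝕌 : ∀ t, ν t ∈ 𝕌) (hν'𝕌 : ∀ t, ν' t ∈ 𝕌)
    (hνb : ∃ C, ∀ t, ‖ν t‖ ≤ C) (hν'b : ∃ C, ∀ t, ‖ν' t‖ ≤ C)
    (x x' : ℝ → (Fin n → ℝ))
    (hx : ∀ t ∈ Set.Icc t₀ t₁, HasDerivWithinAt x (f (x t) (ν t)) (Set.Icc t₀ t₁) t)
    (hx' : ∀ t ∈ Set.Icc t₀ t₁, HasDerivWithinAt x' (f (x' t) (ν' t)) (Set.Icc t₀ t₁) t) :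
    V (x t₁, x' t₁) ≤ Real.exp (-(κc * (t₁ - t₀))) * V (x t₀, x' t₀) +
      ((1 - Real.exp (-(κc * (t₁ - t₀)))) / κc) *
        ρ (⨆ t : Set.Icc t₀ t₁, ‖ν t.1 - ν' t.1‖) := by
  classical
  set γ : ℝ → (Fin n → ℝ) × (Fin n → ℝ) := fun t => (x t, x' t) with hγdef
  set wf : ℝ → (Fin n → ℝ) × (Fin n → ℝ) := fun t => (f (x t) (ν t), f (x' t) (ν' t))
    with hwfdef
  have hγ : ∀ t ∈ Icc t₀ t₁, HasDerivWithinAt γ (wf t) (Icc t₀ t₁) t :=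
    fun t h => (hx t h).prodMk (hx' t h)
  have γcont : ContinuousOn γ (Icc t₀ t₁) := fun t h => (hγ t h).continuousWithinAt
  set g : ℝ → ℝ := fun t => V (γ t) with hgdef
  have gcont : ContinuousOn g (Icc t₀ t₁) := hVl.continuous.comp_continuousOn γcont
  set M : ℝ := ⨆ t : Icc t₀ t₁, ‖ν t.1 - ν' t.1‖ with hMdef
  obtain ⟨C, hC⟩ := hνb
  obtain ⟨C', hC'⟩ := hν'b
  have bddM : BddAbove (Set.range fun t : Icc t₀ t₁ => ‖ν t.1 - ν' t.1‖) := by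
    refine ⟨C + C', ?_⟩
    rintro _ ⟨t, rfl⟩
    exact (norm_sub_le _ _).trans (add_le_add (hC _) (hC' _))
  have hMt : ∀ t ∈ Icc t₀ t₁, ‖ν t - ν' t‖ ≤ M :=
    fun t h => le_ciSup bddM (⟨t, h⟩ : Icc t₀ t₁)
  have hM0 : 0 ≤ M := le_trans (norm_nonneg _) (hMt t₀ ⟨le_rfl, ht.le⟩)
  have hρ_le : ∀ t ∈ Icc t₀ t₁, ρ ‖ν t - ν' t‖ ≤ ρ M :=
    fun t h => hρ.2.1.monotoneOn (norm_nonneg _) hM0 (hMt t h)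
  -- Gronwall
  have key := le_gronwallBound_of_liminf_deriv_right_le
    (f := g) (f' := fun t => -κc * g t + ρ M) (δ := g t₀) (K := -κc) (ε := ρ M)
    (a := t₀) (b := t₁) gcont ?_ le_rfl (fun s _ => le_rfl) t₁ ⟨ht.le, le_rfl⟩
  · rw [gronwallBound_of_K_ne_0 (neg_ne_zero.2 hκc)] at key
    have key' : g t₁ ≤ g t₀ * Real.exp (-κc * (t₁ - t₀))
        + ρ M / -κc * (Real.exp (-κc * (t₁ - t₀)) - 1) := key
    have e1 : -κc * (t₁ - t₀) = -(κc * (t₁ - t₀)) := by ring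
    rw [e1] at key'
    have e2 : ρ M / -κc * (Real.exp (-(κc * (t₁ - t₀))) - 1)
        = ((1 - Real.exp (-(κc * (t₁ - t₀)))) / κc) * ρ M := by
      rw [div_mul_eq_mul_div, div_mul_eq_mul_div, div_eq_div_iff (neg_ne_zero.2 hκc) hκc]
      ring
    rw [e2] at key'
    have egoal : V (x t₁, x' t₁) = g t₁ := rfl
    have egoal0 : V (x t₀, x' t₀) = g t₀ := rfl
    rw [egoal, egoal0]
    calc g t₁ ≤ g t₀ * Real.exp (-(κc * (t₁ - t₀)))
        + ((1 - Real.exp (-(κc * (t₁ - t₀)))) / κc) * ρ M := key'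
    _ = Real.exp (-(κc * (t₁ - t₀))) * g t₀
        + ((1 - Real.exp (-(κc * (t₁ - t₀)))) / κc) * ρ M := by
        rw [mul_comm]
  -- the liminf slope estimate
  intro t htI r hr
  have htIcc : t ∈ Icc t₀ t₁ := ⟨htI.1, htI.2.le⟩
  set p := γ t with hpdef
  set F : ((Fin n → ℝ) × (Fin n → ℝ)) → ((Fin n → ℝ) × (Fin n → ℝ)) :=
    fun q => (f q.1 (ν t), f q.2 (ν' t)) with hFdef
  have hFc : Continuous F := by
    refine Continuous.prodMk ?_ ?_
    · exact hf.continuous.comp (continuous_fst.prodMk continuous_const)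
    · exact hf.continuous.comp (continuous_snd.prodMk continuous_const)
  set cf : ((Fin n → ℝ) × (Fin n → ℝ)) → ℝ := fun q => -κc * V q + ρ ‖ν t - ν' t‖
    with hcfdef
  have hcfc : Continuous cf := (continuous_const.mul hVl.continuous).add continuous_const
  have hb : ∀ q, DifferentiableAt ℝ V q → fderiv ℝ V q (F q) ≤ cf q := by
    intro q hd
    have h2 := hc2 q.1 q.2 (ν t) (ν' t) (hν𝕌 t) (hν'𝕌 t) (by rw [Prod.mk.eta]; exact hd)
    rw [Prod.mk.eta] at h2
    exact h2
  have hcp : cf p < r :=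
    lt_of_le_of_lt (by
      have : ρ ‖ν t - ν' t‖ ≤ ρ M := hρ_le t htIcc
      simp only [hcfdef]
      linarith) hr
  have hδ4 : 0 < (r - cf p)/4 := div_pos (by linarith) (by norm_num)
  obtain ⟨h₀, hh₀, ε₀, hε₀, K, hKlip, hmain⟩ := dini_bound hVl hFc hcfc hb p hδ4
  have hFp : F p = wf t := rfl
  set w := wf t with hwdef
  set σ := (r - cf p)/(4*((K:ℝ)+1)) with hσdef
  have hσ : 0 < σ := div_pos (by linarith) (by positivity)
  -- eventualities
  have ev1 : ∀ᶠ z in 𝓝[>] t, z ∈ Ioc t t₁ := Ioc_mem_nhdsGT_of_mem ⟨le_rfl, htI.2⟩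
  have htend : Tendsto (slope γ t) (𝓝[Icc t₀ t₁ \ {t}] t) (𝓝 w) :=
    hasDerivWithinAt_iff_tendsto_slope.1 (hγ t htIcc)
  have ev2' : ∀ᶠ z in 𝓝[Icc t₀ t₁ \ {t}] t, ‖slope γ t z - w‖ < σ := by
    have := htend (Metric.ball_mem_nhds w hσ)
    filter_upwards [this] with z hz
    have hz' : slope γ t z ∈ Metric.ball w σ := hz
    rw [Metric.mem_ball, dist_eq_norm] at hz'
    exact hz'
  have hle : 𝓝[>] t ≤ 𝓝[Icc t₀ t₁ \ {t}] t := by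
    rw [← nhdsWithin_Ioc_eq_nhdsGT htI.2]
    apply nhdsWithin_mono
    rintro z ⟨hz1, hz2⟩
    exact ⟨⟨le_trans htI.1 hz1.le, hz2⟩, ne_of_gt hz1⟩
  have ev2 : ∀ᶠ z in 𝓝[>] t, ‖slope γ t z - w‖ < σ := hle ev2'
  set b0 := min h₀ (ε₀/(2*(‖w‖ + σ + 1))) with hb0def
  have hb0 : 0 < b0 := lt_min hh₀ (by positivity)
  have ev3 : ∀ᶠ z in 𝓝[>] t, z < t + b0 := by
    filter_upwards [Ioo_mem_nhdsGT_of_mem (⟨le_rfl, by linarith⟩ : t ∈ Ico t (t + b0))]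
      with z hz
    exact hz.2
  apply Filter.Eventually.frequently
  filter_upwards [ev1, ev2, ev3] with z hz1 hz2 hz3
  set h := z - t with hhdef
  have hh : 0 < h := sub_pos.2 hz1.1
  have hhb0 : h < b0 := by simp only [hhdef]; linarith
  -- the approximation estimate
  have hslope_eq : γ z - γ t - h • w = h • (slope γ t z - w) := by
    rw [smul_sub]
    congr 1
    rw [slope_def_module, smul_inv_smul₀ (ne_of_gt hh)]
  have happrox : ‖γ z - γ t - h • w‖ ≤ h * σ := by
    rw [hslope_eq, norm_smul, Real.norm_eq_abs, abs_of_pos hh]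
    exact mul_le_mul_of_nonneg_left hz2.le hh.le
  -- memberships in the ball
  have hwnn : (0:ℝ) ≤ ‖w‖ := norm_nonneg _
  have hb0w : b0 * (‖w‖ + σ) < ε₀ := by
    have h1 : b0 ≤ ε₀/(2*(‖w‖ + σ + 1)) := min_le_right _ _
    have h2 : b0 * (‖w‖ + σ) ≤ (ε₀/(2*(‖w‖ + σ + 1))) * (‖w‖ + σ) :=
      mul_le_mul_of_nonneg_right h1 (by positivity)
    have h3 : (ε₀/(2*(‖w‖ + σ + 1))) * (‖w‖ + σ) < ε₀ := by
      rw [div_mul_eq_mul_div, div_lt_iff₀ (by positivity)]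
      nlinarith
    linarith
  have hmem1 : p + h • w ∈ Metric.ball p ε₀ := by
    rw [Metric.mem_ball, dist_eq_norm, add_sub_cancel_left, norm_smul, Real.norm_eq_abs,
      abs_of_pos hh]
    have ha1 : h * ‖w‖ ≤ b0 * ‖w‖ := mul_le_mul_of_nonneg_right hhb0.le hwnn
    have ha2 : b0 * ‖w‖ ≤ b0 * (‖w‖ + σ) := by nlinarith [hb0.le, hσ.le]
    linarith
  have hmem2 : γ z ∈ Metric.ball p ε₀ := by
    rw [Metric.mem_ball, dist_eq_norm]
    have : γ z - p = (γ z - γ t - h • w) + h • w := by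
      simp only [hpdef]; abel
    rw [this]
    have h4 : ‖(γ z - γ t - h • w) + h • w‖ ≤ h * σ + h * ‖w‖ := by
      refine le_trans (norm_add_le _ _) ?_
      have : ‖h • w‖ = h * ‖w‖ := by rw [norm_smul, Real.norm_eq_abs, abs_of_pos hh]
      linarith [happrox]
    have ha3 : h * σ + h * ‖w‖ ≤ b0 * (‖w‖ + σ) := by nlinarith [hσ.le, hwnn, hhb0.le, hh.le]
    linarith
  -- main bound
  have hbound1 : V (p + h • w) - V p ≤ (cf p + (r - cf p)/4) * h := by
    have := hmain h ⟨hh, le_trans hhb0.le (min_le_left _ _)⟩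
    rwa [hFp] at this
  have hbound2 : V (γ z) - V (p + h • w) ≤ (K:ℝ) * (h * σ) := by
    have hd := hKlip.dist_le_mul (γ z) hmem2 (p + h • w) hmem1
    rw [dist_eq_norm, dist_eq_norm] at hd
    have h5 : ‖γ z - (p + h • w)‖ ≤ h * σ := by
      have : γ z - (p + h • w) = γ z - γ t - h • w := by simp only [hpdef]; abel
      rw [this]; exact happrox
    calc V (γ z) - V (p + h • w) ≤ ‖V (γ z) - V (p + h • w)‖ := le_abs_self _
    _ ≤ (K:ℝ) * ‖γ z - (p + h • w)‖ := hd
    _ ≤ (K:ℝ) * (h * σ) := mul_le_mul_of_nonneg_left h5 K.coe_nonneg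
  have hKσ : (K:ℝ) * σ ≤ (r - cf p)/4 := by
    rw [hσdef, mul_div_assoc']
    rw [div_le_div_iff₀ (by positivity) (by norm_num)]
    nlinarith [K.coe_nonneg]
  have htotal : g z - g t ≤ (cf p + (r - cf p)/4 + (K:ℝ)*σ) * h := by
    have : g z - g t = (V (γ z) - V (p + h • w)) + (V (p + h • w) - V p) := by
      simp only [hgdef, hpdef]; ring
    rw [this]
    nlinarith [hbound1, hbound2]
  have hfinal : cf p + (r - cf p)/4 + (K:ℝ)*σ < r := by linarith
  rw [inv_mul_lt_iff₀ hh]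
  calc g z - g t ≤ (cf p + (r - cf p)/4 + (K:ℝ)*σ) * h := htotal
  _ < r * h := mul_lt_mul_of_pos_right hfinal hh
  _ = h * r := mul_comm _ _
end

section
/- Let f:ℝⁿ×𝕌→ℝⁿ be locally Lipschitz (𝕌⊆ℝᵐ), V:ℝⁿ×ℝⁿ→ℝ≥0 locally Lipschitz, κ_c∈ℝ with κ_c≠0, and ρ_uc a K∞ function such that at every point (x,x̂) where V is differentiable and for all u,û∈𝕌: (∂V/∂x)(x,x̂)·f(x,u) + (∂V/∂x̂)(x,x̂)·f(x̂,û) ≤ −κ_c·V(x,x̂) + ρ_uc(‖u−û‖). Let γ̂ be a K∞ function with V(x,y) ≤ V(x,z) + γ̂(‖y−z‖) for all x,y,z∈ℝⁿ. Fix τ>0, η≥0, û∈𝕌, and let x(·), x̂(·) be solutions on [0,τ] of the same ODE ẋ(t)=f(x(t),û) with constant input û, starting from x(0) and x̂(0) respectively. Then for every point z∈ℝⁿ with ‖z−x̂(τ)‖ ≤ η one has V(x(τ), z) ≤ e^{−κ_cτ}·V(x(0), x̂(0)) + γ̂(η). -/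
set_option maxHeartbeats 1000000

set_option maxHeartbeats 1000000

open Set Filter MeasureTheory Metric
open scoped Topology ENNReal NNReal

lemma ae_deriv_bound_sub_le {g : ℝ → ℝ} {a b L c : ℝ} (hab : a ≤ b)
    (hg : ContinuousOn g (Icc a b)) (hL : 0 ≤ L)
    (hloc : ∀ t ∈ Icc a b, ∀ᶠ u in 𝓝[Icc a b] t, |g u - g t| ≤ L * |u - t|)
    {N : Set ℝ} (hN : volume N = 0)
    (hd : ∀ t ∈ Ico a b, t ∉ N → ∃ g', HasDerivWithinAt g g' (Icc a b) t ∧ g' ≤ c) :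
    g b - g a ≤ c * (b - a) := by
  refine le_of_forall_pos_le_add (fun ε hε => ?_)
  set C : ℝ := L + |c| + 1 with hC
  have hCpos : 0 < C := by positivity
  obtain ⟨U, hNU, hUopen, hUvol⟩ := Set.exists_isOpen_lt_of_lt N (ENNReal.ofReal (ε / C))
    (by rw [hN]; exact ENNReal.ofReal_pos.2 (by positivity))
  have hUfin : volume U ≠ ∞ := (hUvol.trans ENNReal.ofReal_lt_top).ne
  set m : ℝ → ℝ := fun t => (volume (U ∩ Ioc a t)).toReal with hm
  have hfin : ∀ s : Set ℝ, volume (U ∩ s) ≠ ∞ :=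
    fun s => ((measure_mono inter_subset_left).trans_lt hUfin.lt_top).ne
  have hsplit : ∀ t, a ≤ t → ∀ u, t ≤ u →
      m u - m t = (volume (U ∩ Ioc t u)).toReal := by
    intro t hat u htu
    have h1 : Ioc a t ∪ Ioc t u = Ioc a u := Ioc_union_Ioc_eq_Ioc hat htu
    have h2 : U ∩ Ioc a u = (U ∩ Ioc a t) ∪ (U ∩ Ioc t u) := by
      rw [← inter_union_distrib_left, h1]
    have h3 : Disjoint (U ∩ Ioc a t) (U ∩ Ioc t u) :=
      (Set.Ioc_disjoint_Ioc_of_le le_rfl).mono inter_subset_right inter_subset_right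
    have h4 : volume (U ∩ Ioc a u) = volume (U ∩ Ioc a t) + volume (U ∩ Ioc t u) := by
      rw [h2, measure_union h3 (hUopen.measurableSet.inter measurableSet_Ioc)]
    simp only [hm]
    rw [h4, ENNReal.toReal_add (hfin _) (hfin _)]
    ring
  have hmono : ∀ t, a ≤ t → ∀ u, t ≤ u → 0 ≤ m u - m t := by
    intro t hat u htu
    rw [hsplit t hat u htu]; positivity
  have hlip : ∀ t, a ≤ t → ∀ u, t ≤ u → m u - m t ≤ u - t := by
    intro t hat u htu
    rw [hsplit t hat u htu]
    calc (volume (U ∩ Ioc t u)).toReal ≤ (volume (Ioc t u)).toReal := by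
          exact ENNReal.toReal_mono (by rw [Real.volume_Ioc]; exact ENNReal.ofReal_ne_top)
            (measure_mono inter_subset_right)
      _ = u - t := by rw [Real.volume_Ioc, ENNReal.toReal_ofReal (by linarith)]
  have hfull : ∀ t, a ≤ t → ∀ u, t ≤ u → Ioc t u ⊆ U → m u - m t = u - t := by
    intro t hat u htu hsub
    rw [hsplit t hat u htu, inter_eq_self_of_subset_right hsub, Real.volume_Ioc,
      ENNReal.toReal_ofReal (by linarith)]
  have hmc : ContinuousOn m (Icc a b) := by
    have : LipschitzOnWith 1 m (Icc a b) := by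
      refine LipschitzOnWith.of_dist_le_mul (fun t ht u hu => ?_)
      rw [Real.dist_eq, Real.dist_eq, NNReal.coe_one, one_mul]
      rcases le_total u t with h | h
      · rw [abs_of_nonneg (hmono u hu.1 t h), abs_of_nonneg (by linarith)]
        exact hlip u hu.1 t h
      · rw [abs_of_nonpos (by linarith [hmono t ht.1 u h]), abs_of_nonpos (by linarith)]
        linarith [hlip t ht.1 u h]
    exact this.continuousOn
  set F : ℝ → ℝ := fun t => g t - C * m t with hF
  have hFc : ContinuousOn F (Icc a b) := hg.sub (continuousOn_const.mul hmc)
  have hBc : ∀ x, HasDerivAt (fun t => F a + c * (t - a)) c x := by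
    intro x
    simpa using (((hasDerivAt_id x).sub_const a).const_mul c).const_add (F a)
  have key : ∀ ⦃t⦄, t ∈ Icc a b → F t ≤ F a + c * (t - a) := by
    refine image_le_of_liminf_slope_right_le_deriv_boundary hFc (by simp)
      (fun t _ => (hBc t).continuousAt.continuousWithinAt)
      (fun t _ => (hBc t).hasDerivWithinAt) ?_
    intro t ht r hr
    have htb : t < b := ht.2
    have hIoc : 𝓝[Ioc t b] t = 𝓝[>] t := nhdsWithin_Ioc_eq_nhdsGT htb
    have hmem : ∀ᶠ z in 𝓝[>] t, z ∈ Ioc t b := by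
      rw [← hIoc]; exact eventually_mem_nhdsWithin
    by_cases htN : t ∈ N
    · -- bad point: inside U
      obtain ⟨δ, hδ, hball⟩ := Metric.isOpen_iff.1 hUopen t (hNU htN)
      have hev1 : ∀ᶠ z in 𝓝[>] t, |g z - g t| ≤ L * |z - t| := by
        have hmono2 : 𝓝[Ioc t b] t ≤ 𝓝[Icc a b] t :=
          nhdsWithin_mono t (fun z hz => mem_Icc.2 ⟨ht.1.trans hz.1.le, hz.2⟩)
        rw [← hIoc]
        exact hmono2 (hloc t (Ico_subset_Icc_self ht))
      have hev2 : ∀ᶠ z in 𝓝[>] t, z < t + δ :=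
        eventually_nhdsWithin_of_eventually_nhds (Filter.Tendsto.eventually_lt_const
          (by linarith) Filter.tendsto_id)
      refine ((hev1.and (hev2.and hmem)).mono ?_).frequently
      rintro z ⟨h1, h2, h3⟩
      have hz : t < z := h3.1
      have hsub : Ioc t z ⊆ U := by
        intro w hw
        apply hball
        rw [Metric.mem_ball, Real.dist_eq, abs_of_pos (by linarith [hw.1])]
        linarith [hw.2, h2]
      have hmz : m z - m t = z - t := hfull t ht.1 z hz.le hsub
      have hgz : g z - g t ≤ L * (z - t) := by
        have := (abs_le.1 h1).2
        rwa [abs_of_pos (by linarith)] at this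
      rw [slope_def_field]
      rw [div_lt_iff₀ (by linarith)]
      have : F z - F t = (g z - g t) - C * (z - t) := by
        simp only [hF]; rw [show m z = m t + (z - t) by linarith]; ring
      rw [this]
      have hcr : -|c| - 1 < r := by
        have : -|c| ≤ c := neg_abs_le c
        linarith
      calc g z - g t - C * (z - t) ≤ L * (z - t) - C * (z - t) := by linarith
        _ = (-|c| - 1) * (z - t) := by rw [hC]; ring
        _ < r * (z - t) := by
            apply mul_lt_mul_of_pos_right hcr (by linarith)
    · -- good point
      obtain ⟨g', hg', hg'c⟩ := hd t ht htN
      have hslope : Tendsto (slope g t) (𝓝[>] t) (𝓝 g') := by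
        have h0 := hasDerivWithinAt_iff_tendsto_slope.1 hg'
        refine h0.mono_left ?_
        rw [← hIoc]
        exact nhdsWithin_mono t (fun z hz => ⟨⟨by linarith [ht.1, hz.1], hz.2⟩, ne_of_gt hz.1⟩)
      have hev : ∀ᶠ z in 𝓝[>] t, slope g t z < r :=
        hslope.eventually_lt_const (lt_of_le_of_lt hg'c hr)
      refine ((hev.and hmem).mono ?_).frequently
      rintro z ⟨h1, h3⟩
      have hz : t < z := h3.1
      have hmn : 0 ≤ m z - m t := hmono t ht.1 z hz.le
      rw [slope_def_field] at h1 ⊢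
      have hzt : z - t ≠ 0 := ne_of_gt (by linarith)
      have : (F z - F t) / (z - t) = (g z - g t) / (z - t) - C * ((m z - m t) / (z - t)) := by
        simp only [hF]; field_simp; ring
      rw [this]
      have : 0 ≤ C * ((m z - m t) / (z - t)) :=
        mul_nonneg hCpos.le (div_nonneg hmn (by linarith))
      linarith
  have hFb := key (right_mem_Icc.2 hab)
  have hma : m a = 0 := by simp [hm]
  have hmb : C * m b ≤ ε := by
    have h1 : m b ≤ ε / C := by
      have h0 : volume (U ∩ Ioc a b) ≤ ENNReal.ofReal (ε / C) :=
        (measure_mono (inter_subset_left)).trans hUvol.le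
      have := ENNReal.toReal_mono ENNReal.ofReal_ne_top h0
      rwa [ENNReal.toReal_ofReal (by positivity)] at this
    calc C * m b ≤ C * (ε / C) := by nlinarith
      _ = ε := by field_simp
  simp only [hF] at hFb
  rw [hma] at hFb
  linarith



lemma null_nondiff {n : ℕ} {V : ((Fin n → ℝ) × (Fin n → ℝ)) → ℝ} (hVl : LocallyLipschitz V) :
    volume {p : (Fin n → ℝ) × (Fin n → ℝ) | ¬ DifferentiableAt ℝ V p} = 0 := by
  haveI : Measure.IsAddHaarMeasure (volume : Measure ((Fin n → ℝ) × (Fin n → ℝ))) := by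
    rw [Measure.volume_eq_prod]; exact Measure.prod.instIsAddHaarMeasure _ _
  apply measure_null_of_locally_null
  intro p hp
  obtain ⟨K, t, ht, hlip⟩ := hVl p
  obtain ⟨r, hr, hball⟩ := Metric.mem_nhds_iff.1 ht
  refine ⟨{q | ¬ DifferentiableAt ℝ V q} ∩ ball p r,
    inter_mem_nhdsWithin _ (Metric.ball_mem_nhds p hr), ?_⟩
  have hae : ∀ᵐ q : (Fin n → ℝ) × (Fin n → ℝ),
      q ∈ ball p r → DifferentiableWithinAt ℝ V (ball p r) q :=
    (hlip.mono hball).ae_differentiableWithinAt_of_mem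
  refine measure_mono_null ?_ (ae_iff.1 hae)
  rintro q ⟨hq1, hq2⟩
  simp only [mem_setOf_eq, Classical.not_imp]
  refine ⟨hq2, fun hdwa => hq1 ?_⟩
  exact hdwa.differentiableAt (Metric.isOpen_ball.mem_nhds hq2)

lemma exists_good_offset {n : ℕ} {S : Set ((Fin n → ℝ) × (Fin n → ℝ))}
    (hSm : MeasurableSet S) (hS0 : volume S = 0)
    {cb : ℝ → ((Fin n → ℝ) × (Fin n → ℝ))} (hcb : Continuous cb)
    {r : ℝ} (hr : 0 < r) :
    ∃ w : (Fin n → ℝ) × (Fin n → ℝ), ‖w‖ < r ∧ volume {t : ℝ | w + cb t ∈ S} = 0 := by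
  haveI : Measure.IsAddHaarMeasure (volume : Measure ((Fin n → ℝ) × (Fin n → ℝ))) := by
    rw [Measure.volume_eq_prod]; exact Measure.prod.instIsAddHaarMeasure _ _
  set A₂ : Set (ℝ × ((Fin n → ℝ) × (Fin n → ℝ))) := {q | q.2 + cb q.1 ∈ S} with hA₂def
  have hmA₂ : MeasurableSet A₂ :=
    ((continuous_snd.add (hcb.comp continuous_fst)).measurable) hSm
  have hA₂ : (volume : Measure (ℝ × ((Fin n → ℝ) × (Fin n → ℝ)))) A₂ = 0 := by
    rw [Measure.volume_eq_prod, Measure.prod_apply hmA₂]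
    have hz : ∀ t : ℝ, volume (Prod.mk t ⁻¹' A₂) = 0 := by
      intro t
      have he : Prod.mk t ⁻¹' A₂ = (fun w => w + cb t) ⁻¹' S := rfl
      rw [he, measure_preimage_add_right]
      exact hS0
    simp [hz]
  set A : Set (((Fin n → ℝ) × (Fin n → ℝ)) × ℝ) := Prod.swap ⁻¹' A₂ with hAdef
  have hmA : MeasurableSet A := measurable_swap hmA₂
  have hA : (volume : Measure (((Fin n → ℝ) × (Fin n → ℝ)) × ℝ)) A = 0 := by
    rw [Measure.volume_eq_prod]
    have hswap := MeasureTheory.Measure.measurePreserving_swap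
      (μ := (volume : Measure ((Fin n → ℝ) × (Fin n → ℝ)))) (ν := (volume : Measure ℝ))
    rw [hswap.measure_preimage hmA₂.nullMeasurableSet]
    rw [Measure.volume_eq_prod] at hA₂
    exact hA₂
  have hae : ∀ᵐ w : (Fin n → ℝ) × (Fin n → ℝ), volume {t : ℝ | w + cb t ∈ S} = 0 := by
    rw [Measure.volume_eq_prod, Measure.prod_apply hmA] at hA
    have h0 := (lintegral_eq_zero_iff (measurable_measure_prodMk_left hmA)).1 hA
    filter_upwards [h0] with w hw
    exact hw
  by_contra hcon
  push_neg at hcon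
  have hsub : ball (0 : (Fin n → ℝ) × (Fin n → ℝ)) r ⊆
      {w | ¬ volume {t : ℝ | w + cb t ∈ S} = 0} := by
    intro w hw
    rw [Metric.mem_ball, dist_zero_right] at hw
    exact hcon w hw
  exact absurd (measure_mono_null hsub (ae_iff.1 hae))
    (Metric.measure_ball_pos _ _ hr).ne'



lemma exp_lip_aux {κ τ : ℝ} (hτ : 0 ≤ τ) :
    ∀ t ∈ Icc (0:ℝ) τ, ∀ u ∈ Icc (0:ℝ) τ,
      |Real.exp (κ * u) - Real.exp (κ * t)| ≤ Real.exp (|κ| * τ) * |κ| * |u - t| := by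
  intro t ht u hu
  have hder : ∀ s ∈ Icc (0:ℝ) τ, HasDerivWithinAt (fun s => Real.exp (κ * s))
      (Real.exp (κ * s) * κ) (Icc 0 τ) s := by
    intro s _
    simpa using (((hasDerivAt_id s).const_mul κ).exp).hasDerivWithinAt
  have hbound : ∀ s ∈ Icc (0:ℝ) τ, ‖Real.exp (κ * s) * κ‖ ≤ Real.exp (|κ| * τ) * |κ| := by
    intro s hs
    rw [Real.norm_eq_abs, abs_mul, Real.abs_exp]
    have : κ * s ≤ |κ| * τ := by
      calc κ * s ≤ |κ| * s := mul_le_mul_of_nonneg_right (le_abs_self κ) hs.1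
        _ ≤ |κ| * τ := mul_le_mul_of_nonneg_left hs.2 (abs_nonneg κ)
    exact mul_le_mul_of_nonneg_right (Real.exp_le_exp.2 this) (abs_nonneg κ)
  have := (convex_Icc (0:ℝ) τ).norm_image_sub_le_of_norm_hasDerivWithin_le hder hbound ht hu
  simpa [Real.norm_eq_abs] using this

/-- flow-scenario inequality: under the differential inequality (c2) and the
triangle-type condition `V(x,y) ≤ V(x,z) + γ̂(‖y-z‖)`, for two solutions `x, x̂` of the
ODE `ẋ = f(x, û)` with the same constant input `û ∈ 𝕌` on `[0,τ]`, and any point `z`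
with `‖z - x̂(τ)‖ ≤ η`, one has `V(x(τ), z) ≤ e^{-κc τ} V(x(0), x̂(0)) + γ̂(η)`. -/
theorem stmt3 {n m : ℕ} (𝕌 : Set (Fin m → ℝ))
    (f : (Fin n → ℝ) → (Fin m → ℝ) → (Fin n → ℝ))
    (hf : LocallyLipschitz fun p : (Fin n → ℝ) × (Fin m → ℝ) => f p.1 p.2)
    (V : (Fin n → ℝ) × (Fin n → ℝ) → ℝ)
    (hVl : LocallyLipschitz V) (hVnn : ∀ p, 0 ≤ V p)
    (κc : ℝ) (hκc : κc ≠ 0) (ρ γ : ℝ → ℝ) (hρ : KInf ρ) (hγ : KInf γ)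
    (hc2 : ∀ (x x' : Fin n → ℝ) (u u' : Fin m → ℝ), u ∈ 𝕌 → u' ∈ 𝕌 →
      DifferentiableAt ℝ V (x, x') →
      fderiv ℝ V (x, x') (f x u, f x' u') ≤ -κc * V (x, x') + ρ ‖u - u'‖)
    (htri : ∀ x y z : Fin n → ℝ, V (x, y) ≤ V (x, z) + γ ‖y - z‖)
    (τ η : ℝ) (hτ : 0 < τ) (hη : 0 ≤ η)
    (u' : Fin m → ℝ) (hu' : u' ∈ 𝕌)
    (x x' : ℝ → (Fin n → ℝ))
    (hx : ∀ t ∈ Set.Icc 0 τ, HasDerivWithinAt x (f (x t) u') (Set.Icc 0 τ) t)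
    (hx' : ∀ t ∈ Set.Icc 0 τ, HasDerivWithinAt x' (f (x' t) u') (Set.Icc 0 τ) t) :
    ∀ z : Fin n → ℝ, ‖z - x' τ‖ ≤ η →
      V (x τ, z) ≤ Real.exp (-(κc * τ)) * V (x 0, x' 0) + γ η := by
  intro z hz
  -- the coupled curve
  set c : ℝ → (Fin n → ℝ) × (Fin n → ℝ) := fun t => (x t, x' t) with hcdef
  set vf : ((Fin n → ℝ) × (Fin n → ℝ)) → ((Fin n → ℝ) × (Fin n → ℝ)) :=
    fun p => (f p.1 u', f p.2 u') with hvfdef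
  have hc : ∀ t ∈ Icc (0:ℝ) τ, HasDerivWithinAt c (vf (c t)) (Icc 0 τ) t :=
    fun t ht => (hx t ht).prodMk (hx' t ht)
  have hccont : ContinuousOn c (Icc 0 τ) := fun t ht => (hc t ht).continuousWithinAt
  -- extension of the curve to all of ℝ
  set σ : ℝ → ℝ := fun t => max 0 (min t τ) with hσdef
  have hσc : Continuous σ := continuous_const.max (continuous_id.min continuous_const)
  have hσmem : ∀ t, σ t ∈ Icc (0:ℝ) τ :=
    fun t => ⟨le_max_left _ _, max_le (le_of_lt hτ) (min_le_right _ _)⟩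
  set cb : ℝ → (Fin n → ℝ) × (Fin n → ℝ) := fun t => c (σ t) with hcbdef
  have hcbc : Continuous cb := hccont.comp_continuous hσc hσmem
  have hcb_eq : ∀ t ∈ Icc (0:ℝ) τ, cb t = c t := by
    intro t ht
    simp only [hcbdef, hσdef]
    rw [min_eq_left ht.2, max_eq_right ht.1]
  -- compact sets
  obtain ⟨R0, hR0⟩ := (isCompact_Icc.image_of_continuousOn hccont).isBounded.subset_closedBall 0
  set R : ℝ := max R0 0 with hRdef
  have hcR : ∀ t ∈ Icc (0:ℝ) τ, ‖c t‖ ≤ R := by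
    intro t ht
    have := hR0 (mem_image_of_mem c ht)
    rw [mem_closedBall, dist_zero_right] at this
    exact this.trans (le_max_left _ _)
  set K1 : Set ((Fin n → ℝ) × (Fin n → ℝ)) := closedBall 0 (R + 2) with hK1def
  have hK1c : IsCompact K1 := isCompact_closedBall _ _
  -- uniform Lipschitz constant for V near the curve
  have hVloc : ∀ p : (Fin n → ℝ) × (Fin n → ℝ),
      ∃ rK : ℝ × ℝ≥0, 0 < rK.1 ∧ LipschitzOnWith rK.2 V (ball p rK.1) := by
    intro p
    obtain ⟨K, t, ht, hlip⟩ := hVl p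
    obtain ⟨r, hr, hb⟩ := Metric.mem_nhds_iff.1 ht
    exact ⟨(r, K), hr, hlip.mono hb⟩
  choose rK hrK hKlip using hVloc
  obtain ⟨T, -, hTcov⟩ := hK1c.elim_nhds_subcover (fun p => ball p (rK p).1)
    (fun p _ => Metric.ball_mem_nhds p (hrK p))
  set LV : ℝ≥0 := T.sup (fun p => (rK p).2) with hLVdef
  have hLVball : ∀ q ∈ K1, ∃ r > 0, LipschitzOnWith LV V (ball q r) := by
    intro q hq
    obtain ⟨p, hpT, hqp⟩ := Set.mem_iUnion₂.1 (hTcov hq)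
    rw [Metric.mem_ball] at hqp
    refine ⟨(rK p).1 - dist q p, by linarith, ?_⟩
    have hw1 : LipschitzOnWith (rK p).2 V (ball q ((rK p).1 - dist q p)) := by
      apply (hKlip p).mono
      intro w hw
      rw [Metric.mem_ball] at hw ⊢
      calc dist w p ≤ dist w q + dist q p := dist_triangle _ _ _
        _ < (rK p).1 := by linarith
    exact fun a ha b hb => (hw1 ha hb).trans
      (by gcongr; exact_mod_cast Finset.le_sup (f := fun p => (rK p).2) hpT)
  have hfd : ∀ q ∈ K1, ‖fderiv ℝ V q‖ ≤ (LV : ℝ) := by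
    intro q hq
    obtain ⟨r, hr, hlip⟩ := hLVball q hq
    exact norm_fderiv_le_of_lipschitzOn ℝ (Metric.ball_mem_nhds q hr) hlip
  -- continuity and bounds for vf
  have hvfc : Continuous vf :=
    ((hf.continuous.comp (continuous_fst.prodMk continuous_const)).prodMk
      (hf.continuous.comp (continuous_snd.prodMk continuous_const)))
  obtain ⟨Mf0, hMf0⟩ := hK1c.exists_bound_of_continuousOn hvfc.continuousOn
  set Mf : ℝ := max Mf0 0 with hMfdef
  have hMf : ∀ p ∈ K1, ‖vf p‖ ≤ Mf := fun p hp => (hMf0 p hp).trans (le_max_left _ _)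
  have hMfnn : 0 ≤ Mf := le_max_right _ _
  have hVc : Continuous V := hVl.continuous
  obtain ⟨MV0, hMV0⟩ := hK1c.exists_bound_of_continuousOn hVc.continuousOn
  set MV : ℝ := max MV0 0 with hMVdef
  have hMV : ∀ p ∈ K1, |V p| ≤ MV := by
    intro p hp
    have := hMV0 p hp
    rw [Real.norm_eq_abs] at this
    exact this.trans (le_max_left _ _)
  have hMVnn : 0 ≤ MV := le_max_right _ _
  have huc := (hK1c.uniformContinuousOn_of_continuous hvfc.continuousOn)
  -- the exponential bound
  set Me : ℝ := Real.exp (|κc| * τ) with hMedef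
  have hMepos : 0 < Me := Real.exp_pos _
  have hMe : ∀ t ∈ Icc (0:ℝ) τ, Real.exp (κc * t) ≤ Me := by
    intro t ht
    rw [hMedef]
    apply Real.exp_le_exp.2
    calc κc * t ≤ |κc| * t := mul_le_mul_of_nonneg_right (le_abs_self κc) ht.1
      _ ≤ |κc| * τ := mul_le_mul_of_nonneg_left ht.2 (abs_nonneg κc)
  -- the null set of nondifferentiability
  set S : Set ((Fin n → ℝ) × (Fin n → ℝ)) := {p | ¬ DifferentiableAt ℝ V p} with hSdef
  have hSm : MeasurableSet S := (measurableSet_of_differentiableAt ℝ V).compl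
  have hS0 : volume S = 0 := null_nondiff hVl
  -- simplified differential inequality
  have hρ0 : ρ 0 = 0 := hρ.2.2.1
  have hc2' : ∀ p : (Fin n → ℝ) × (Fin n → ℝ), DifferentiableAt ℝ V p →
      fderiv ℝ V p (vf p) ≤ -κc * V p := by
    intro p hp
    have h := hc2 p.1 p.2 u' u' hu' hu' (by simpa using hp)
    simpa [hρ0] using h
  -- THE CORE INEQUALITY
  have step2 : V (c τ) ≤ Real.exp (-(κc * τ)) * V (c 0) := by
    refine le_of_forall_pos_le_add (fun ε hε => ?_)
    set D : ℝ := Real.exp (-(κc * τ)) with hDdef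
    have hDpos : 0 < D := Real.exp_pos _
    -- continuity choices
    have hc1 : ContinuousAt V (c τ) := hVc.continuousAt
    have hc0 : ContinuousAt V (c 0) := hVc.continuousAt
    obtain ⟨δ₁, hδ₁, h1⟩ := Metric.continuousAt_iff.1 hc1 (ε/3) (by positivity)
    obtain ⟨δ₂, hδ₂, h2⟩ := Metric.continuousAt_iff.1 hc0 (ε/(3*D)) (by positivity)
    set ε₁ : ℝ := ε / (3 * D * Me * ((LV : ℝ) + 1) * τ) with hε₁def
    have hε₁pos : 0 < ε₁ := by
      apply div_pos hε
      have : (0:ℝ) < (LV : ℝ) + 1 := by positivity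
      positivity
    obtain ⟨δuc, hδuc, huc'⟩ := Metric.uniformContinuousOn_iff.1 huc ε₁ hε₁pos
    set r' : ℝ := min 1 (min δ₁ (min δ₂ δuc)) with hr'def
    have hr'pos : 0 < r' := by
      simp only [hr'def, lt_min_iff]
      exact ⟨one_pos, hδ₁, hδ₂, hδuc⟩
    obtain ⟨w, hwr, hwnull⟩ := exists_good_offset hSm hS0 hcbc hr'pos
    have hw1 : ‖w‖ < 1 := lt_of_lt_of_le hwr (min_le_left _ _)
    have hwδ₁ : ‖w‖ < δ₁ := lt_of_lt_of_le hwr ((min_le_right _ _).trans (min_le_left _ _))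
    have hwδ₂ : ‖w‖ < δ₂ := lt_of_lt_of_le hwr
      ((min_le_right _ _).trans ((min_le_right _ _).trans (min_le_left _ _)))
    have hwδuc : ‖w‖ < δuc := lt_of_lt_of_le hwr
      ((min_le_right _ _).trans ((min_le_right _ _).trans (min_le_right _ _)))
    -- membership facts
    have hmem1 : ∀ t ∈ Icc (0:ℝ) τ, c t ∈ K1 := by
      intro t ht
      rw [hK1def, mem_closedBall, dist_zero_right]
      linarith [hcR t ht]
    have hmem2 : ∀ t ∈ Icc (0:ℝ) τ, w + c t ∈ K1 := by
      intro t ht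
      rw [hK1def, mem_closedBall, dist_zero_right]
      calc ‖w + c t‖ ≤ ‖w‖ + ‖c t‖ := norm_add_le _ _
        _ ≤ R + 2 := by linarith [hcR t ht]
    -- the perturbed scalar function
    set φ : ℝ → ℝ := fun t => Real.exp (κc * t) * V (w + c t) with hφdef
    have hφc : ContinuousOn φ (Icc 0 τ) :=
      ((Real.continuous_exp.comp (continuous_const.mul continuous_id)).continuousOn).mul
        (hVc.comp_continuousOn (continuousOn_const.add hccont))
    -- uniform local-in-time Lipschitz bound for φ
    set Lφ : ℝ := Me * ((LV : ℝ) * (Mf + 1)) + Me * |κc| * MV with hLφdef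
    have hLφnn : 0 ≤ Lφ := by positivity
    have hloc : ∀ t ∈ Icc (0:ℝ) τ, ∀ᶠ u in 𝓝[Icc (0:ℝ) τ] t, |φ u - φ t| ≤ Lφ * |u - t| := by
      intro t ht
      obtain ⟨r, hrpos, hlip⟩ := hLVball (w + c t) (hmem2 t ht)
      have hder := hc t ht
      have hlittle : ∀ᶠ u in 𝓝[Icc (0:ℝ) τ] t,
          ‖c u - c t - (u - t) • vf (c t)‖ ≤ 1 * ‖u - t‖ :=
        (hasDerivWithinAt_iff_isLittleO.1 hder).def one_pos
      have hnear : ∀ᶠ u in 𝓝[Icc (0:ℝ) τ] t, dist (c u) (c t) < r :=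
        (Metric.tendsto_nhds.1 (hccont t ht)) r hrpos
      filter_upwards [hlittle, hnear, eventually_mem_nhdsWithin] with u hu1 hu2 hu3
      have hcu : ‖c u - c t‖ ≤ (Mf + 1) * |u - t| := by
        have h4 : ‖c u - c t‖ ≤ ‖c u - c t - (u - t) • vf (c t)‖ + ‖(u - t) • vf (c t)‖ := by
          have h9 := norm_add_le (c u - c t - (u - t) • vf (c t)) ((u - t) • vf (c t))
          simpa using h9
        have h5 : ‖(u - t) • vf (c t)‖ ≤ |u - t| * Mf := by
          rw [norm_smul, Real.norm_eq_abs]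
          exact mul_le_mul_of_nonneg_left (hMf _ (hmem1 t ht)) (abs_nonneg _)
        rw [Real.norm_eq_abs] at hu1
        nlinarith [abs_nonneg (u - t)]
      have hVd : |V (w + c u) - V (w + c t)| ≤ (LV:ℝ) * ‖c u - c t‖ := by
        have hmemb1 : w + c u ∈ ball (w + c t) r := by
          rw [Metric.mem_ball, dist_eq_norm]
          rw [dist_eq_norm] at hu2
          simpa [add_sub_add_left_eq_sub] using hu2
        have hmemb2 : w + c t ∈ ball (w + c t) r := Metric.mem_ball_self hrpos
        have h8 := (lipschitzOnWith_iff_dist_le_mul.1 hlip) _ hmemb1 _ hmemb2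
        rw [Real.dist_eq, dist_eq_norm] at h8
        simpa [add_sub_add_left_eq_sub] using h8
      have hexp1 : Real.exp (κc * u) ≤ Me := hMe u hu3
      have hexpd : |Real.exp (κc*u) - Real.exp (κc*t)| ≤ Me * |κc| * |u - t| :=
        exp_lip_aux hτ.le t ht u hu3
      have hVt : |V (w + c t)| ≤ MV := hMV _ (hmem2 t ht)
      have hsplit : φ u - φ t
          = Real.exp (κc*u) * (V (w + c u) - V (w + c t))
            + (Real.exp (κc*u) - Real.exp (κc*t)) * V (w + c t) := by
        simp only [hφdef]; ring
      have h6 : |Real.exp (κc*u) * (V (w + c u) - V (w + c t))|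
          ≤ Me * ((LV:ℝ) * ((Mf+1) * |u - t|)) := by
        rw [abs_mul, Real.abs_exp]
        have hV2 : |V (w + c u) - V (w + c t)| ≤ (LV:ℝ) * ((Mf + 1) * |u - t|) := by
          calc |V (w + c u) - V (w + c t)| ≤ (LV:ℝ) * ‖c u - c t‖ := hVd
            _ ≤ (LV:ℝ) * ((Mf + 1) * |u - t|) :=
                mul_le_mul_of_nonneg_left hcu (NNReal.coe_nonneg _)
        exact mul_le_mul hexp1 hV2 (abs_nonneg _) hMepos.le
      have h7 : |(Real.exp (κc*u) - Real.exp (κc*t)) * V (w + c t)|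
          ≤ Me * |κc| * |u - t| * MV := by
        rw [abs_mul]
        exact mul_le_mul hexpd hVt (abs_nonneg _) (by positivity)
      calc |φ u - φ t| = |Real.exp (κc*u) * (V (w + c u) - V (w + c t))
            + (Real.exp (κc*u) - Real.exp (κc*t)) * V (w + c t)| := by rw [hsplit]
        _ ≤ |Real.exp (κc*u) * (V (w + c u) - V (w + c t))|
            + |(Real.exp (κc*u) - Real.exp (κc*t)) * V (w + c t)| := abs_add_le _ _
        _ ≤ Me * ((LV:ℝ) * ((Mf+1) * |u - t|)) + Me * |κc| * |u - t| * MV :=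
            add_le_add h6 h7
        _ = Lφ * |u - t| := by rw [hLφdef]; ring
    -- derivative bound at good times
    set cA : ℝ := Me * ((LV : ℝ) * ε₁) with hcAdef
    have hd : ∀ t ∈ Ico (0:ℝ) τ, t ∉ {s : ℝ | w + cb s ∈ S} →
        ∃ g', HasDerivWithinAt φ g' (Icc 0 τ) t ∧ g' ≤ cA := by
      intro t ht htN
      have ht' : t ∈ Icc (0:ℝ) τ := Ico_subset_Icc_self ht
      have hdiff : DifferentiableAt ℝ V (w + c t) := by
        simp only [mem_setOf_eq, hSdef] at htN
        rw [hcb_eq t ht'] at htN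
        exact not_not.1 htN
      have hinner : HasDerivWithinAt (fun s => w + c s) (vf (c t)) (Icc 0 τ) t :=
        (hc t ht').const_add w
      have hVcomp : HasDerivWithinAt (fun s => V (w + c s))
          (fderiv ℝ V (w + c t) (vf (c t))) (Icc 0 τ) t :=
        hdiff.hasFDerivAt.comp_hasDerivWithinAt t hinner
      have hexp : HasDerivAt (fun s : ℝ => Real.exp (κc * s)) (Real.exp (κc * t) * κc) t := by
        simpa using ((hasDerivAt_id t).const_mul κc).exp
      have hφd : HasDerivWithinAt φ
          (Real.exp (κc * t) * κc * V (w + c t)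
            + Real.exp (κc * t) * (fderiv ℝ V (w + c t) (vf (c t))))
          (Icc 0 τ) t := hexp.hasDerivWithinAt.mul hVcomp
      refine ⟨_, hφd, ?_⟩
      have hk1 : w + c t ∈ K1 := hmem2 t ht'
      have hk2 : c t ∈ K1 := hmem1 t ht'
      have hDnorm : ‖fderiv ℝ V (w + c t)‖ ≤ (LV : ℝ) := hfd _ hk1
      have hdistw : dist (c t) (w + c t) < δuc := by
        rw [dist_eq_norm]
        have h9 : c t - (w + c t) = -w := by abel
        rw [h9, norm_neg]
        exact hwδuc
      have hvfclose : ‖vf (c t) - vf (w + c t)‖ < ε₁ := by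
        have h9 := huc' (c t) hk2 (w + c t) hk1 hdistw
        rwa [dist_eq_norm] at h9
      have hsplit2 : fderiv ℝ V (w + c t) (vf (c t))
          = fderiv ℝ V (w + c t) (vf (w + c t))
            + fderiv ℝ V (w + c t) (vf (c t) - vf (w + c t)) := by
        rw [map_sub]; ring
      have hb1 : fderiv ℝ V (w + c t) (vf (w + c t)) ≤ -κc * V (w + c t) := hc2' _ hdiff
      have hb2 : fderiv ℝ V (w + c t) (vf (c t) - vf (w + c t)) ≤ (LV:ℝ) * ε₁ := by
        calc fderiv ℝ V (w + c t) (vf (c t) - vf (w + c t))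
            ≤ |fderiv ℝ V (w + c t) (vf (c t) - vf (w + c t))| := le_abs_self _
          _ = ‖fderiv ℝ V (w + c t) (vf (c t) - vf (w + c t))‖ := rfl
          _ ≤ ‖fderiv ℝ V (w + c t)‖ * ‖vf (c t) - vf (w + c t)‖ :=
              (fderiv ℝ V (w + c t)).le_opNorm _
          _ ≤ (LV:ℝ) * ε₁ :=
              mul_le_mul hDnorm hvfclose.le (norm_nonneg _) (NNReal.coe_nonneg _)
      have hepos : 0 < Real.exp (κc * t) := Real.exp_pos _
      have hele : Real.exp (κc * t) ≤ Me := hMe t ht'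
      have hLVε : (0:ℝ) ≤ (LV:ℝ) * ε₁ := by positivity
      have hDle : fderiv ℝ V (w + c t) (vf (c t)) ≤ -κc * V (w + c t) + (LV:ℝ)*ε₁ := by
        rw [hsplit2]; linarith
      calc Real.exp (κc * t) * κc * V (w + c t)
            + Real.exp (κc * t) * (fderiv ℝ V (w + c t) (vf (c t)))
          ≤ Real.exp (κc*t) * κc * V (w + c t)
            + Real.exp (κc*t) * (-κc * V (w + c t) + (LV:ℝ)*ε₁) := by nlinarith [hepos]
        _ = Real.exp (κc*t) * ((LV:ℝ)*ε₁) := by ring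
        _ ≤ Me * ((LV:ℝ)*ε₁) := mul_le_mul_of_nonneg_right hele hLVε
    have key := ae_deriv_bound_sub_le (le_of_lt hτ) hφc hLφnn hloc hwnull hd
    -- unfold the conclusion
    have h0' : φ 0 = V (w + c 0) := by simp [hφdef]
    have hτ' : φ τ = Real.exp (κc * τ) * V (w + c τ) := rfl
    have hDexp : D * Real.exp (κc * τ) = 1 := by
      rw [hDdef, ← Real.exp_add]
      simp
    -- final arithmetic
    have hA1 : V (c τ) ≤ V (w + c τ) + ε/3 := by
      have := h1 (x := w + c τ) (by rwa [dist_eq_norm, add_sub_cancel_right])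
      rw [Real.dist_eq] at this
      have := abs_sub_le_iff.1 this.le
      linarith [this.2]
    have hA2 : D * V (w + c 0) ≤ D * V (c 0) + ε/3 := by
      have := h2 (x := w + c 0) (by rwa [dist_eq_norm, add_sub_cancel_right])
      rw [Real.dist_eq] at this
      have h' := (abs_sub_le_iff.1 this.le).1
      have : V (w + c 0) ≤ V (c 0) + ε/(3*D) := by linarith
      calc D * V (w + c 0) ≤ D * (V (c 0) + ε/(3*D)) :=
            mul_le_mul_of_nonneg_left this hDpos.le
        _ = D * V (c 0) + ε/3 := by field_simp
    have hA3 : D * (cA * τ) ≤ ε/3 := by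
      rw [hcAdef, hε₁def]
      have hden : (0:ℝ) < 3 * D * Me * ((LV : ℝ) + 1) * τ := by positivity
      have heq : D * (Me * ((LV : ℝ) + 1) * (ε / (3 * D * Me * ((LV : ℝ) + 1) * τ)) * τ)
          = ε/3 := by field_simp
      have hle : D * (Me * ((LV:ℝ) * (ε / (3 * D * Me * ((LV : ℝ) + 1) * τ))) * τ)
          ≤ D * (Me * ((LV : ℝ) + 1) * (ε / (3 * D * Me * ((LV : ℝ) + 1) * τ)) * τ) := by
        have h01 : (LV : ℝ) ≤ (LV : ℝ) + 1 := by linarith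
        have hq : 0 ≤ ε / (3 * D * Me * ((LV : ℝ) + 1) * τ) := le_of_lt hε₁pos
        have hLVnn : (0:ℝ) ≤ (LV : ℝ) := NNReal.coe_nonneg _
        nlinarith [hτ.le, hMepos.le, hDpos.le]
      linarith [heq ▸ hle]
    -- combine
    have hVwτ : Real.exp (κc * τ) * V (w + c τ) ≤ V (w + c 0) + cA * τ := by
      have := key
      rw [hτ', h0'] at this
      linarith
    have : V (w + c τ) ≤ D * V (w + c 0) + D * (cA * τ) := by
      have h3 := mul_le_mul_of_nonneg_left hVwτ hDpos.le
      rw [← mul_assoc, hDexp, one_mul] at h3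
      linarith [h3]
    linarith [hA1, hA2, hA3, this]
  -- final triangle step
  have hmonoγ : γ ‖z - x' τ‖ ≤ γ η := by
    rcases eq_or_lt_of_le hz with h | h
    · rw [h]
    · exact (hγ.2.1 (mem_Ici.2 (norm_nonneg _)) (mem_Ici.2 hη) h).le
  calc V (x τ, z) ≤ V (x τ, x' τ) + γ ‖z - x' τ‖ := htri _ _ _
    _ ≤ Real.exp (-(κc * τ)) * V (x 0, x' 0) + γ η := by
        have : V (x τ, x' τ) ≤ Real.exp (-(κc * τ)) * V (x 0, x' 0) := step2
        linarith
end

section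
/- Let κ_c>0, κ_d≥1, τ>0, ε∈(0,1), p₁,p₂∈ℕ≥1 with p₁≤p₂, η≥0, and γ≥0, and set λ_f = max{e^{−κ_cτ(1−ε)}, e^{−κ_cτεp₁}·κ_d}. Let V, V⁺ ≥ 0 and l, l⁺ ∈ {0,…,p₂} satisfy one of: (flow) 0≤l≤p₂−1, l⁺=l+1, and V⁺ ≤ e^{−κ_cτ}·V + γ; or (jump) p₁≤l≤p₂, l⁺=0, and V⁺ ≤ κ_d·V + γ. Then V⁺·e^{κ_cτεl⁺} ≤ λ_f·(V·e^{κ_cτεl}) + e^{κ_cτε(p₂+1)}·γ. -/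
/-- one-step contraction estimate for the candidate alternating simulation
function `𝒱 = V·e^{κc τ ε l}` in the case `κd ≥ 1`, `κc > 0`. -/
theorem stmt6 (κc κd τ ε η γ : ℝ) (p₁ p₂ : ℕ)
    (hκc : 0 < κc) (hκd : 1 ≤ κd) (hτ : 0 < τ) (hε : ε ∈ Set.Ioo (0 : ℝ) 1)
    (hp₁ : 1 ≤ p₁) (hp : p₁ ≤ p₂) (hη : 0 ≤ η) (hγ : 0 ≤ γ)
    (V Vp : ℝ) (hV : 0 ≤ V) (hVp : 0 ≤ Vp)
    (l lp : ℕ) (hl : l ≤ p₂) (hlp : lp ≤ p₂)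
    (hstep : (l < p₂ ∧ lp = l + 1 ∧ Vp ≤ Real.exp (-(κc * τ)) * V + γ) ∨
             (p₁ ≤ l ∧ l ≤ p₂ ∧ lp = 0 ∧ Vp ≤ κd * V + γ)) :
    Vp * Real.exp (κc * τ * ε * lp) ≤
      max (Real.exp (-(κc * τ * (1 - ε)))) (Real.exp (-(κc * τ * ε * p₁)) * κd) *
        (V * Real.exp (κc * τ * ε * l)) + Real.exp (κc * τ * ε * (p₂ + 1)) * γ := by
  obtain ⟨hε0, hε1⟩ := hε
  have hκτ : 0 < κc * τ := mul_pos hκc hτ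
  have hκτε : 0 < κc * τ * ε := mul_pos hκτ hε0
  rcases hstep with ⟨hlt, hlp1, hVle⟩ | ⟨hple, _, hlp0, hVle⟩
  · subst hlp1
    have hexp : Real.exp (κc * τ * ε * (l + 1 : ℕ)) ≤ Real.exp (κc * τ * ε * (p₂ + 1)) := by
      apply Real.exp_le_exp.mpr
      have : ((l : ℝ) + 1) ≤ (p₂ : ℝ) + 1 := by
        have := (Nat.cast_le (α := ℝ)).mpr hl; linarith
      push_cast
      nlinarith
    have hE : 0 < Real.exp (κc * τ * ε * ((l : ℕ) + 1 : ℕ)) := Real.exp_pos _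
    have key : Vp * Real.exp (κc * τ * ε * ((l + 1 : ℕ) : ℝ)) ≤
        Real.exp (-(κc * τ * (1 - ε))) * (V * Real.exp (κc * τ * ε * l)) +
        Real.exp (κc * τ * ε * (p₂ + 1)) * γ := by
      have h1 : Vp * Real.exp (κc * τ * ε * ((l + 1 : ℕ) : ℝ)) ≤
          (Real.exp (-(κc * τ)) * V + γ) * Real.exp (κc * τ * ε * ((l + 1 : ℕ) : ℝ)) := by
        apply mul_le_mul_of_nonneg_right hVle (Real.exp_pos _).le
      refine h1.trans ?_
      have heq : Real.exp (-(κc * τ)) * Real.exp (κc * τ * ε * ((l + 1 : ℕ) : ℝ)) =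
          Real.exp (-(κc * τ * (1 - ε))) * Real.exp (κc * τ * ε * l) := by
        rw [← Real.exp_add, ← Real.exp_add]
        push_cast
        ring_nf
      have h2 : γ * Real.exp (κc * τ * ε * ((l + 1 : ℕ) : ℝ)) ≤
          Real.exp (κc * τ * ε * (p₂ + 1)) * γ := by
        rw [mul_comm]
        apply mul_le_mul_of_nonneg_right _ hγ
        apply Real.exp_le_exp.mpr
        have hcast : ((l : ℝ)) ≤ (p₂ : ℝ) := (Nat.cast_le (α := ℝ)).mpr hl
        push_cast
        nlinarith
      calc (Real.exp (-(κc * τ)) * V + γ) * Real.exp (κc * τ * ε * ((l + 1 : ℕ) : ℝ))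
          = Real.exp (-(κc * τ)) * Real.exp (κc * τ * ε * ((l + 1 : ℕ) : ℝ)) * V +
            γ * Real.exp (κc * τ * ε * ((l + 1 : ℕ) : ℝ)) := by ring
        _ ≤ Real.exp (-(κc * τ * (1 - ε))) * (V * Real.exp (κc * τ * ε * l)) +
            Real.exp (κc * τ * ε * (p₂ + 1)) * γ := by
            rw [heq]
            nlinarith [h2]
    refine key.trans ?_
    gcongr
    · exact le_max_left _ _
  · subst hlp0
    have hcast : ((p₁ : ℝ)) ≤ (l : ℝ) := (Nat.cast_le (α := ℝ)).mpr hple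
    have h1 : (1 : ℝ) ≤ Real.exp (-(κc * τ * ε * p₁)) * Real.exp (κc * τ * ε * l) := by
      rw [← Real.exp_add]
      have : (0:ℝ) ≤ -(κc * τ * ε * p₁) + κc * τ * ε * l := by nlinarith
      calc (1:ℝ) = Real.exp 0 := (Real.exp_zero).symm
        _ ≤ _ := Real.exp_le_exp.mpr this
    have h2 : (1 : ℝ) ≤ Real.exp (κc * τ * ε * (p₂ + 1)) := by
      have : (0:ℝ) ≤ κc * τ * ε * (p₂ + 1) := by positivity
      calc (1:ℝ) = Real.exp 0 := (Real.exp_zero).symm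
        _ ≤ _ := Real.exp_le_exp.mpr this
    have key : Vp * Real.exp (κc * τ * ε * (0 : ℕ)) ≤
        Real.exp (-(κc * τ * ε * p₁)) * κd * (V * Real.exp (κc * τ * ε * l)) +
        Real.exp (κc * τ * ε * (p₂ + 1)) * γ := by
      simp only [Nat.cast_zero, mul_zero, Real.exp_zero, mul_one]
      have hκd0 : 0 ≤ κd := le_trans zero_le_one hκd
      calc Vp ≤ κd * V + γ := hVle
        _ ≤ Real.exp (-(κc * τ * ε * p₁)) * κd * (V * Real.exp (κc * τ * ε * l)) +
            Real.exp (κc * τ * ε * (p₂ + 1)) * γ := by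
          have hA : κd * V ≤ Real.exp (-(κc * τ * ε * p₁)) * κd * (V * Real.exp (κc * τ * ε * l)) := by
            have := mul_le_mul_of_nonneg_left h1 (mul_nonneg hκd0 hV)
            nlinarith
          have hB : γ ≤ Real.exp (κc * τ * ε * (p₂ + 1)) * γ := by nlinarith
          linarith
    refine key.trans ?_
    gcongr
    · exact le_max_right _ _
end

section
/- Let κ_c≤0, 0<κ_d<1, τ>0, δ>p₂, p₁,p₂∈ℕ≥1 with p₁≤p₂, η≥0, and γ≥0, and set λ_f = max{e^{−κ_cτ}·κ_d^{1/δ}, κ_d^{(δ−p₂)/δ}}. Let V, V⁺ ≥ 0 and l, l⁺ ∈ {0,…,p₂} satisfy one of: (flow) 0≤l≤p₂−1, l⁺=l+1, and V⁺ ≤ e^{−κ_cτ}·V + γ; or (jump) p₁≤l≤p₂, l⁺=0, and V⁺ ≤ κ_d·V + γ. Then V⁺·κ_d^{l⁺/δ} ≤ λ_f·(V·κ_d^{l/δ}) + γ. -/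
/-- one-step contraction estimate for the candidate alternating simulation
function `𝒱 = V·κd^{l/δ}` in the case `κd < 1`, `κc ≤ 0`. -/
theorem stmt7 (κc κd τ δ η γ : ℝ) (p₁ p₂ : ℕ)
    (hκc : κc ≤ 0) (hκd0 : 0 < κd) (hκd1 : κd < 1) (hτ : 0 < τ) (hδ : (p₂ : ℝ) < δ)
    (hp₁ : 1 ≤ p₁) (hp : p₁ ≤ p₂) (hη : 0 ≤ η) (hγ : 0 ≤ γ)
    (V Vp : ℝ) (hV : 0 ≤ V) (hVp : 0 ≤ Vp)
    (l lp : ℕ) (hl : l ≤ p₂) (hlp : lp ≤ p₂)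
    (hstep : (l < p₂ ∧ lp = l + 1 ∧ Vp ≤ Real.exp (-(κc * τ)) * V + γ) ∨
             (p₁ ≤ l ∧ l ≤ p₂ ∧ lp = 0 ∧ Vp ≤ κd * V + γ)) :
    Vp * κd ^ ((lp : ℝ) / δ) ≤
      max (Real.exp (-(κc * τ)) * κd ^ ((1 : ℝ) / δ)) (κd ^ ((δ - (p₂ : ℝ)) / δ)) *
        (V * κd ^ ((l : ℝ) / δ)) + γ := by
  have hδ0 : (0:ℝ) < δ := lt_of_le_of_lt (Nat.cast_nonneg _) hδ
  have hκd0' : (0:ℝ) ≤ κd := hκd0.le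
  have hpowpos : ∀ x : ℝ, (0:ℝ) < κd ^ x := fun x => Real.rpow_pos_of_pos hκd0 x
  have hVκ : 0 ≤ V * κd ^ ((l:ℝ)/δ) := mul_nonneg hV (hpowpos _).le
  set M := max (Real.exp (-(κc * τ)) * κd ^ ((1 : ℝ) / δ)) (κd ^ ((δ - (p₂ : ℝ)) / δ)) with hM
  rcases hstep with ⟨hl', hlp', hVp'⟩ | ⟨hl1, hl2, hlp', hVp'⟩
  · subst hlp'
    have hle1 : κd ^ (((l+1 : ℕ):ℝ)/δ) ≤ 1 :=
      Real.rpow_le_one hκd0' hκd1.le (div_nonneg (Nat.cast_nonneg _) hδ0.le)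
    have hsplit : κd ^ (((l+1 : ℕ):ℝ)/δ) = κd ^ ((1:ℝ)/δ) * κd ^ ((l:ℝ)/δ) := by
      rw [← Real.rpow_add hκd0]
      congr 1
      push_cast
      ring
    calc Vp * κd ^ (((l+1 : ℕ):ℝ)/δ)
        ≤ (Real.exp (-(κc * τ)) * V + γ) * κd ^ (((l+1 : ℕ):ℝ)/δ) := by
          exact mul_le_mul_of_nonneg_right hVp' (hpowpos _).le
      _ = Real.exp (-(κc * τ)) * κd ^ ((1:ℝ)/δ) * (V * κd ^ ((l:ℝ)/δ))
          + γ * κd ^ (((l+1 : ℕ):ℝ)/δ) := by rw [hsplit]; ring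
      _ ≤ M * (V * κd ^ ((l:ℝ)/δ)) + γ := by
          gcongr
          · exact le_max_left _ _
          · nlinarith [hpowpos (((l+1 : ℕ):ℝ)/δ)]
  · subst hlp'
    have h1 : κd ≤ κd ^ ((δ - (p₂:ℝ) + l)/δ) := by
      have := Real.rpow_le_rpow_of_exponent_ge hκd0 hκd1.le
        (show (δ - (p₂:ℝ) + l)/δ ≤ 1 by
          rw [div_le_one hδ0]
          have : (l:ℝ) ≤ (p₂:ℝ) := Nat.cast_le.mpr hl2
          linarith)
      simpa using this
    have hsplit : κd ^ ((δ - (p₂:ℝ) + l)/δ) = κd ^ ((δ - (p₂:ℝ))/δ) * κd ^ ((l:ℝ)/δ) := by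
      rw [← Real.rpow_add hκd0, ← add_div]
    calc Vp * κd ^ (((0:ℕ):ℝ)/δ) = Vp := by norm_num
      _ ≤ κd * V + γ := hVp'
      _ ≤ κd ^ ((δ - (p₂:ℝ))/δ) * κd ^ ((l:ℝ)/δ) * V + γ := by
          gcongr
          rw [← hsplit]; exact h1
      _ = κd ^ ((δ - (p₂:ℝ))/δ) * (V * κd ^ ((l:ℝ)/δ)) + γ := by ring
      _ ≤ M * (V * κd ^ ((l:ℝ)/δ)) + γ := by gcongr; exact le_max_right _ _
end

section
/- Let κ_c≤0, 0<κ_d<1, τ>0, and p₂∈ℕ≥1 satisfy ln(κ_d) − κ_c·τ·p₂ < 0. Then there exists δ>p₂ such that max{e^{−κ_cτ}·κ_d^{1/δ}, κ_d^{(δ−p₂)/δ}} < 1 (equivalently, both κ_d^{(δ−p₂)/δ} < 1 and ln(κ_d) − κ_c·τ·δ < 0). -/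
/-- under the reverse dwell-time condition `ln(κd) - κc τ p₂ < 0` (with
`κc ≤ 0`, `0 < κd < 1`), there exists `δ > p₂` making the contraction rate
`λ_f = max(e^{-κc τ} κd^{1/δ}, κd^{(δ-p₂)/δ})` strictly less than `1`
(equivalently, `κd^{(δ-p₂)/δ} < 1` and `ln(κd) - κc τ δ < 0`). -/
theorem stmt9 (κc κd τ : ℝ) (p₂ : ℕ)
    (hκc : κc ≤ 0) (hκd0 : 0 < κd) (hκd1 : κd < 1) (hτ : 0 < τ) (hp₂ : 1 ≤ p₂)
    (hdwell : Real.log κd - κc * τ * p₂ < 0) :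
    ∃ δ : ℝ, (p₂ : ℝ) < δ ∧
      max (Real.exp (-(κc * τ)) * κd ^ ((1 : ℝ) / δ)) (κd ^ ((δ - (p₂ : ℝ)) / δ)) < 1 ∧
      κd ^ ((δ - (p₂ : ℝ)) / δ) < 1 ∧
      Real.log κd - κc * τ * δ < 0 := by
  set c : ℝ := -(κc * τ) with hc_def
  have hc : 0 ≤ c := by
    have : κc * τ ≤ 0 := mul_nonpos_of_nonpos_of_nonneg hκc hτ.le
    linarith
  set A : ℝ := -(Real.log κd) - c * p₂ with hA_def
  have hA : 0 < A := by
    have : Real.log κd - κc * τ * p₂ < 0 := hdwell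
    simp only [hA_def, hc_def]
    nlinarith
  have hcA : 0 < c + A := by linarith
  set δ : ℝ := (p₂ : ℝ) + A / (c + A) with hδ_def
  clear_value c A δ
  have hε : 0 < A / (c + A) := div_pos hA hcA
  have hpδ : (p₂ : ℝ) < δ := by linarith
  have hp2pos : (0 : ℝ) < (p₂ : ℝ) := by exact_mod_cast Nat.lt_of_lt_of_le Nat.zero_lt_one hp₂
  have hδpos : 0 < δ := lt_trans hp2pos hpδ
  have hkey : Real.log κd + c * δ < 0 := by
    have h1 : c * (A / (c + A)) < A := by
      have h2 : c / (c + A) < 1 := (div_lt_one hcA).mpr (by linarith)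
      have : c * (A / (c + A)) = A * (c / (c + A)) := by ring
      rw [this]
      nlinarith
    have : Real.log κd + c * (p₂ : ℝ) = -A := by simp [hA_def]; ring
    have hexp : Real.log κd + c * δ = -A + c * (A / (c + A)) := by
      rw [hδ_def]; linear_combination this + (mul_add c (p₂:ℝ) (A/(c+A)))
    linarith [hexp, h1]
  refine ⟨δ, hpδ, ?_, ?_, ?_⟩
  · have h2 : κd ^ ((δ - (p₂ : ℝ)) / δ) < 1 :=
      Real.rpow_lt_one hκd0.le hκd1 (div_pos (by linarith) hδpos)
    have h1 : Real.exp c * κd ^ ((1 : ℝ) / δ) < 1 := by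
      rw [Real.rpow_def_of_pos hκd0, ← Real.exp_add]
      rw [Real.exp_lt_one_iff]
      have heq : c + Real.log κd * (1 / δ) = (c * δ + Real.log κd) / δ := by
        field_simp
      rw [heq]
      exact div_neg_of_neg_of_pos (by linarith) hδpos
    exact max_lt h1 h2
  · exact Real.rpow_lt_one hκd0.le hκd1 (div_pos (by linarith) hδpos)
  · have : κc * τ * δ = -(c * δ) := by rw [hc_def]; ring
    rw [this]; linarith
end

section
/- Let f:ℝⁿ×𝕌→ℝⁿ be locally Lipschitz (𝕌⊆ℝᵐ), V:ℝⁿ×ℝⁿ→ℝ≥0 locally Lipschitz, κ_c∈ℝ with κ_c≠0, and ρ_uc a K∞ function such that at every point (x,x̂) where V is differentiable and for all u,û∈𝕌: (∂V/∂x)(x,x̂)·f(x,u) + (∂V/∂x̂)(x,x̂)·f(x̂,û) ≤ −κ_c·V(x,x̂) + ρ_uc(‖u−û‖). Let γ̂ be a K∞ function with V(x,y) ≤ V(x,z) + γ̂(‖y−z‖) for all x,y,z∈ℝⁿ. Fix τ>0, η≥0, μ≥0, and inputs u,û∈𝕌 with ‖u−û‖ ≤ μ. Let x(·) be a solution on [0,τ]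 of ẋ(t)=f(x(t),u) with constant input u and x̂(·) a solution on [0,τ] of ẋ̂(t)=f(x̂(t),û) with constant input û. Then for every z∈ℝⁿ with ‖z−x̂(τ)‖ ≤ η one has V(x(τ), z) ≤ e^{−κ_cτ}·V(x(0), x̂(0)) + γ̂(η) + ((1−e^{−κ_cτ})/κ_c)·ρ_uc(μ). -/
open MeasureTheory Set Filter Metric
open scoped Topology NNReal ENNReal

/-- 1-D inequality: a Lipschitz function whose derivative is `≤ c` off a null set
satisfies `φ b - φ a ≤ c * (b - a)`. -/
lemma lemD {φ : ℝ → ℝ} {K : ℝ≥0} (hφ : LipschitzWith K φ) {N : Set ℝ}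
    (hN : volume N = 0) {φ' : ℝ → ℝ} {c a b : ℝ} (hab : a ≤ b)
    (hd : ∀ s ∈ Icc a b, s ∉ N → HasDerivAt φ (φ' s) s ∧ φ' s ≤ c) :
    φ b - φ a ≤ c * (b - a) := by
  set M : ℝ := K + |c| + 1 with hM
  have hMpos : 0 < M := by positivity
  -- reduce to: ∀ ε > 0, φ b - φ a ≤ c * (b-a) + M * ε
  have key : ∀ ε : ℝ, 0 < ε → φ b - φ a ≤ c * (b - a) + M * ε := by
    intro ε hε
    obtain ⟨U, hNU, hUopen, hUmeas⟩ :=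
      Set.exists_isOpen_lt_of_lt N (ENNReal.ofReal ε)
        (by rw [hN]; exact ENNReal.ofReal_pos.2 hε)
    set ℓ : ℝ → ℝ := fun t => (volume (U ∩ Ioc a t)).toReal with hℓ
    have hfin : ∀ t, volume (U ∩ Ioc a t) ≠ ⊤ :=
      fun t => ((measure_mono inter_subset_left).trans_lt
        (hUmeas.trans_le le_top)).ne
  -- ℓ is monotone
    have hmono : Monotone ℓ := by
      intro s t hst
      exact ENNReal.toReal_mono (hfin t)
        (measure_mono (inter_subset_inter_right _ (Ioc_subset_Ioc_right hst)))
    have hℓa : ℓ a = 0 := by simp [hℓ]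
    -- slope bound: ℓ t' - ℓ t ≤ t' - t
    have hslope : ∀ s t : ℝ, s ≤ t → ℓ t - ℓ s ≤ t - s := by
      intro s t hst
      have h1 : volume (U ∩ Ioc a t) ≤ volume (U ∩ Ioc a s) + ENNReal.ofReal (t - s) := by
        rw [← Real.volume_Ioc (a := s) (b := t)]
        refine (measure_mono ?_).trans (measure_union_le _ _)
        rintro y ⟨hyU, hya, hyt⟩
        rcases le_or_gt y s with h | h
        · exact Or.inl ⟨hyU, hya, h⟩
        · exact Or.inr ⟨h, hyt⟩
      have := ENNReal.toReal_mono (by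
        exact ENNReal.add_ne_top.2 ⟨hfin s, ENNReal.ofReal_ne_top⟩) h1
      rw [ENNReal.toReal_add (hfin s) ENNReal.ofReal_ne_top,
        ENNReal.toReal_ofReal (by linarith)] at this
      simpa [hℓ] using by linarith [this]
    have hℓcont : Continuous ℓ := by
      refine LipschitzWith.continuous (K := 1) (LipschitzWith.of_dist_le_mul fun s t => ?_)
      rw [Real.dist_eq, Real.dist_eq, NNReal.coe_one, one_mul]
      rcases le_total s t with h | h
      · rw [abs_sub_comm (ℓ s) (ℓ t), abs_of_nonneg (sub_nonneg.2 (hmono h)),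
          abs_sub_comm s t, abs_of_nonneg (by linarith)]
        exact hslope s t h
      · rw [abs_of_nonneg (sub_nonneg.2 (hmono h)), abs_of_nonneg (by linarith)]
        exact hslope t s h
    -- open step
    have hopen : ∀ t, t ∈ U → a ≤ t → ∀ᶠ z in 𝓝[>] t, ℓ z = ℓ t + (z - t) := by
      intro t htU hat
      obtain ⟨ι, hι, hball⟩ := Metric.isOpen_iff.1 hUopen t htU
      filter_upwards [Ioo_mem_nhdsGT_of_mem ⟨le_rfl, lt_add_of_pos_right t hι⟩]
        with z hz
      have hsub : Ioc t z ⊆ U := by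
        intro y hy
        apply hball
        rw [Real.ball_eq_Ioo]
        constructor <;> [linarith [hy.1]; linarith [hy.2, hz.2]]
      have hdecomp : U ∩ Ioc a z = (U ∩ Ioc a t) ∪ Ioc t z := by
        apply Subset.antisymm
        · rintro y ⟨hyU, hya, hyz⟩
          rcases le_or_gt y t with h | h
          · exact Or.inl ⟨hyU, hya, h⟩
          · exact Or.inr ⟨h, hyz⟩
        · rintro y (⟨hyU, hya, hyt⟩ | ⟨hyt, hyz⟩)
          · exact ⟨hyU, hya, hyt.trans hz.1.le⟩
          · exact ⟨hsub ⟨hyt, hyz⟩, lt_of_le_of_lt hat hyt, hyz⟩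
      have hdisj : Disjoint (U ∩ Ioc a t) (Ioc t z) := by
        refine Set.disjoint_left.2 ?_
        rintro y ⟨_, _, hyt⟩ ⟨hyt', _⟩
        exact absurd hyt (not_le.2 hyt')
      have : volume (U ∩ Ioc a z) = volume (U ∩ Ioc a t) + volume (Ioc t z) := by
        rw [hdecomp, measure_union hdisj measurableSet_Ioc]
      simp only [hℓ]
      rw [this, ENNReal.toReal_add (hfin t) (by simp), Real.volume_Ioc,
        ENNReal.toReal_ofReal (by linarith [hz.1.le])]
    -- apply the fencing lemma
    have main : ∀ t ∈ Icc a b, φ t - M * ℓ t ≤ φ a + (c) * (t - a) := by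
      intro t ht
      refine image_le_of_liminf_slope_right_le_deriv_boundary
        (f := fun t => φ t - M * ℓ t) (B := fun t => φ a + c * (t - a))
        (B' := fun _ => c) ?_ ?_ ?_ ?_ ?_ ht
      · exact ((hφ.continuous.sub (continuous_const.mul hℓcont)).continuousOn)
      · simp [hℓa]
      · exact (continuous_const.add (continuous_const.mul
          (continuous_id.sub continuous_const))).continuousOn
      · intro s _
        simpa using ((hasDerivWithinAt_id s (Ici s)).sub_const a).const_mul c
          |>.const_add (φ a)
      · intro s hs r hcr
        by_cases hsN : s ∈ N
        · -- use the open cover; slope ≤ K - M < c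
          have := hopen s (hNU hsN) hs.1
          refine ((this.and self_mem_nhdsWithin).mono ?_).frequently
          rintro z ⟨hℓz, hz⟩
          have hz' : (0:ℝ) < z - s := sub_pos.2 hz
          have hφle : φ z - φ s ≤ K * (z - s) := by
            have := hφ.dist_le_mul z s
            rw [Real.dist_eq, Real.dist_eq, abs_of_pos hz'] at this
            calc φ z - φ s ≤ |φ z - φ s| := le_abs_self _
            _ ≤ K * (z - s) := this
          rw [slope_def_field]
          rw [div_lt_iff₀ hz']
          have : (φ z - M * ℓ z) - (φ s - M * ℓ s) = (φ z - φ s) - M * (z - s) := by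
            rw [hℓz]; ring
          rw [this]
          have hKM : (K : ℝ) - M ≤ c := by
            rw [hM]; have := abs_nonneg c; have := neg_abs_le c; linarith
          nlinarith [hz', hcr]
        · obtain ⟨hder, hle⟩ := hd s ⟨hs.1, hs.2.le⟩ hsN
          have htend : Tendsto (slope φ s) (𝓝[>] s) (𝓝 (φ' s)) :=
            (hasDerivAt_iff_tendsto_slope.1 hder).mono_left
              (nhdsWithin_mono _ fun y hy => ne_of_gt hy)
          have hev : ∀ᶠ z in 𝓝[>] s, slope φ s z < r :=
            htend (Iio_mem_nhds (lt_of_le_of_lt hle hcr))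
          refine ((hev.and self_mem_nhdsWithin).mono ?_).frequently
          rintro z ⟨hsl, hz⟩
          have hz' : (0:ℝ) < z - s := sub_pos.2 hz
          rw [slope_def_field] at hsl ⊢
          have hℓmono : 0 ≤ ℓ z - ℓ s := sub_nonneg.2 (hmono hz.le)
          rw [div_lt_iff₀ hz'] at hsl ⊢
          nlinarith [hMpos]
    have := main b ⟨hab, le_rfl⟩
    have hℓb : ℓ b ≤ ε := by
      have : volume (U ∩ Ioc a b) ≤ ENNReal.ofReal ε :=
        (measure_mono inter_subset_left).trans hUmeas.le
      calc ℓ b ≤ (ENNReal.ofReal ε).toReal := ENNReal.toReal_mono ENNReal.ofReal_ne_top this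
      _ = ε := ENNReal.toReal_ofReal hε.le
    nlinarith [hMpos]
  -- finish
  by_contra h
  push_neg at h
  set d := φ b - φ a - c * (b - a) with hd'
  have hdpos : 0 < d := by linarith
  have h1 := key (d / (2 * M)) (by positivity)
  have h2 : M * (d / (2*M)) = d / 2 := by field_simp
  nlinarith

/-- directional increment bound for a Lipschitz function whose gradient (where it exists,
near `p`) pairs with `g` to at most `r'`. -/
lemma lemC {E : Type*} [NormedAddCommGroup E] [NormedSpace ℝ E] [MeasurableSpace E]
    [BorelSpace E] [FiniteDimensional ℝ E] (μ : Measure E) [μ.IsAddHaarMeasure]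
    {Vt : E → ℝ} {K : ℝ≥0} (hV : LipschitzWith K Vt) (p g : E) {r' δ : ℝ}
    (hq : ∀ q ∈ Metric.ball p δ, DifferentiableAt ℝ Vt q → fderiv ℝ Vt q g ≤ r')
    {h : ℝ} (hh : 0 < h) (hhg : h * ‖g‖ < δ) :
    Vt (p + h • g) - Vt p ≤ r' * h := by
  obtain ⟨B, hDB, hBmeas, hB0⟩ :=
    exists_measurable_superset_of_null (ae_iff.1 (hV.ae_differentiableAt (μ := μ)))
  -- the set of bad (time, shift) pairs
  set S : Set (ℝ × E) := {q | p + q.2 + q.1 • g ∈ B} with hS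
  have hcont : Continuous fun q : ℝ × E => p + q.2 + q.1 • g := by
    fun_prop
  have hSmeas : MeasurableSet S := hcont.measurable hBmeas
  have hS0 : (volume : Measure ℝ).prod μ S = 0 := by
    rw [Measure.measure_prod_null hSmeas]
    refine Filter.Eventually.of_forall fun s => ?_
    have hset : Prod.mk s ⁻¹' S = (fun w => (p + s • g) + w) ⁻¹' B := by
      ext w
      simp only [hS, mem_preimage, mem_setOf_eq]
      rw [show p + w + s • g = p + s • g + w by abel]
    show μ (Prod.mk s ⁻¹' S) = 0
    rw [hset, measure_preimage_add]
    exact hB0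
  have hT0 : μ.prod (volume : Measure ℝ) (Prod.swap ⁻¹' S) = 0 := by
    calc μ.prod volume (Prod.swap ⁻¹' S)
        = Measure.map Prod.swap (μ.prod volume) S :=
          (Measure.map_apply measurable_swap hSmeas).symm
      _ = (volume : Measure ℝ).prod μ S := by rw [Measure.prod_swap]
      _ = 0 := hS0
  have hae : ∀ᵐ w ∂μ, volume {s : ℝ | p + w + s • g ∈ B} = 0 := by
    have := (Measure.measure_prod_null (hSmeas.preimage measurable_swap)).1 hT0
    filter_upwards [this] with w hw
    exact hw
  -- Lipschitz constant along the line
  have hline : ∀ w : E, LipschitzWith (K * ‖g‖₊) (fun s : ℝ => Vt (p + w + s • g)) := by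
    intro w
    refine hV.comp (LipschitzWith.of_dist_le_mul fun s t => ?_)
    rw [dist_eq_norm, dist_eq_norm,
      show p + w + s • g - (p + w + t • g) = (s - t) • g by rw [sub_smul]; abel]
    rw [norm_smul, Real.norm_eq_abs, ← Real.dist_eq, coe_nnnorm, mul_comm]
  -- main estimate for every small e > 0
  have key : ∀ e : ℝ, 0 < e → e + h * ‖g‖ < δ →
      Vt (p + h • g) - Vt p ≤ r' * h + 2 * K * e := by
    intro e he heδ
    -- pick a good shift w with ‖w‖ < e
    obtain ⟨w, hwball, hwgood⟩ :
        ∃ w, w ∈ Metric.ball (0 : E) e ∧ volume {s : ℝ | p + w + s • g ∈ B} = 0 := by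
      by_contra hcon
      push_neg at hcon
      have hsub : Metric.ball (0 : E) e ⊆ {w | ¬ volume {s : ℝ | p + w + s • g ∈ B} = 0} :=
        fun w hw => hcon w hw
      have h1 : μ (Metric.ball (0 : E) e) = 0 :=
        measure_mono_null hsub (ae_iff.1 hae)
      exact absurd h1 (Metric.isOpen_ball.measure_pos μ ⟨0, Metric.mem_ball_self he⟩).ne'
    rw [Metric.mem_ball, dist_zero_right] at hwball
    set φ : ℝ → ℝ := fun s => Vt (p + w + s • g) with hφ
    have hlem : φ h - φ 0 ≤ r' * (h - 0) := by
      refine lemD (hline w) hwgood (φ' := fun s => fderiv ℝ Vt (p + w + s • g) g)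
        hh.le fun s hs hsN => ?_
      have hdiff : DifferentiableAt ℝ Vt (p + w + s • g) := by
        by_contra hnd
        exact hsN (hDB hnd)
      have hcurve : HasDerivAt (fun s : ℝ => p + w + s • g) g s := by
        simpa using ((hasDerivAt_id s).smul_const g).const_add (p + w)
      refine ⟨hdiff.hasFDerivAt.comp_hasDerivAt s hcurve, ?_⟩
      refine hq _ ?_ hdiff
      rw [Metric.mem_ball, dist_eq_norm,
        show p + w + s • g - p = w + s • g by abel]
      calc ‖w + s • g‖ ≤ ‖w‖ + ‖s • g‖ := norm_add_le _ _
        _ ≤ e + h * ‖g‖ := by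
            rw [norm_smul, Real.norm_eq_abs, abs_of_nonneg hs.1]
            have : s * ‖g‖ ≤ h * ‖g‖ := by
              exact mul_le_mul_of_nonneg_right hs.2 (norm_nonneg g)
            linarith [hwball.le]
        _ < δ := heδ
    have h1 : |Vt (p + h • g) - φ h| ≤ K * e := by
      have := hV.dist_le_mul (p + h • g) (p + w + h • g)
      rw [Real.dist_eq, dist_eq_norm,
        show p + h • g - (p + w + h • g) = -w by abel, norm_neg] at this
      exact this.trans (by nlinarith [hwball, NNReal.coe_nonneg K])
    have h2 : |φ 0 - Vt p| ≤ K * e := by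
      have := hV.dist_le_mul (p + w + (0:ℝ) • g) p
      rw [Real.dist_eq, dist_eq_norm,
        show p + w + (0:ℝ) • g - p = w by rw [zero_smul]; abel] at this
      exact this.trans (by nlinarith [hwball, NNReal.coe_nonneg K])
    have := abs_le.1 h1
    have := abs_le.1 h2
    have hK0 : (0:ℝ) ≤ K := NNReal.coe_nonneg K
    nlinarith [hlem]
  -- let e → 0
  refine le_of_forall_pos_le_add fun ε hε => ?_
  set e := min ((δ - h * ‖g‖) / 2) (ε / (2 * K + 1)) with he
  have he1 : 0 < e := lt_min (by linarith) (by positivity)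
  have he2 : e + h * ‖g‖ < δ := by
    have := min_le_left ((δ - h * ‖g‖) / 2) (ε / (2 * K + 1))
    linarith
  have := key e he1 he2
  have h3 : 2 * (K:ℝ) * e ≤ ε := by
    have h4 : e ≤ ε / (2 * K + 1) := min_le_right _ _
    have hK0 : (0:ℝ) ≤ K := NNReal.coe_nonneg K
    rw [le_div_iff₀ (by positivity)] at h4
    nlinarith [he1.le]
  linarith

/-- flow-scenario estimate with input mismatch: under the differential
inequality (c2) and the triangle-type condition on `V`, for solutions `x` of `ẋ = f(x,u)`
and `x̂` of `ẋ̂ = f(x̂,û)` on `[0,τ]` with constant inputs `u, û ∈ 𝕌`, `‖u - û‖ ≤ μ`, and any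
`z` with `‖z - x̂(τ)‖ ≤ η`, one has
`V(x(τ), z) ≤ e^{-κc τ} V(x(0), x̂(0)) + γ̂(η) + ((1-e^{-κc τ})/κc) ρ_uc(μ)`. -/
theorem stmt10 {n m : ℕ} (𝕌 : Set (Fin m → ℝ))
    (f : (Fin n → ℝ) → (Fin m → ℝ) → (Fin n → ℝ))
    (hf : LocallyLipschitz fun p : (Fin n → ℝ) × (Fin m → ℝ) => f p.1 p.2)
    (V : (Fin n → ℝ) × (Fin n → ℝ) → ℝ)
    (hVl : LocallyLipschitz V) (hVnn : ∀ p, 0 ≤ V p)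
    (κc : ℝ) (hκc : κc ≠ 0) (ρ γ : ℝ → ℝ) (hρ : KInf ρ) (hγ : KInf γ)
    (hc2 : ∀ (x x' : Fin n → ℝ) (u u' : Fin m → ℝ), u ∈ 𝕌 → u' ∈ 𝕌 →
      DifferentiableAt ℝ V (x, x') →
      fderiv ℝ V (x, x') (f x u, f x' u') ≤ -κc * V (x, x') + ρ ‖u - u'‖)
    (htri : ∀ x y z : Fin n → ℝ, V (x, y) ≤ V (x, z) + γ ‖y - z‖)
    (τ η μ : ℝ) (hτ : 0 < τ) (hη : 0 ≤ η) (hμ : 0 ≤ μ)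
    (u u' : Fin m → ℝ) (hu : u ∈ 𝕌) (hu' : u' ∈ 𝕌) (huu' : ‖u - u'‖ ≤ μ)
    (x x' : ℝ → (Fin n → ℝ))
    (hx : ∀ t ∈ Set.Icc 0 τ, HasDerivWithinAt x (f (x t) u) (Set.Icc 0 τ) t)
    (hx' : ∀ t ∈ Set.Icc 0 τ, HasDerivWithinAt x' (f (x' t) u') (Set.Icc 0 τ) t) :
    ∀ z : Fin n → ℝ, ‖z - x' τ‖ ≤ η →
      V (x τ, z) ≤ Real.exp (-(κc * τ)) * V (x 0, x' 0) + γ η +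
        ((1 - Real.exp (-(κc * τ))) / κc) * ρ μ := by
  intro z hz
  have hρμ : ρ ‖u - u'‖ ≤ ρ μ := by
    rcases eq_or_lt_of_le huu' with h | h
    · rw [h]
    · exact (hρ.2.1 (norm_nonneg _) hμ h).le
  set γc : ℝ → (Fin n → ℝ) × (Fin n → ℝ) := fun t => (x t, x' t) with hγc
  set W : ℝ → ℝ := fun t => V (γc t) with hW
  -- continuity of W
  have hxc : ContinuousOn x (Icc 0 τ) := fun t ht => (hx t ht).continuousWithinAt
  have hx'c : ContinuousOn x' (Icc 0 τ) := fun t ht => (hx' t ht).continuousWithinAt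
  have hγcont : ContinuousOn γc (Icc 0 τ) := hxc.prodMk hx'c
  have hWcont : ContinuousOn W (Icc 0 τ) := hVl.continuous.comp_continuousOn hγcont
  -- continuity of vector field
  have hfc : Continuous fun q : (Fin n → ℝ) × (Fin n → ℝ) => ((f q.1 u, f q.2 u') :
      (Fin n → ℝ) × (Fin n → ℝ)) := by
    have h1 := hf.continuous
    exact (h1.comp (continuous_fst.prodMk continuous_const)).prodMk
      (h1.comp (continuous_snd.prodMk continuous_const))
  -- the liminf slope condition
  have hslope : ∀ t ∈ Ico 0 τ, ∀ r, -κc * W t + ρ μ < r →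
      ∃ᶠ z' in 𝓝[>] t, (z' - t)⁻¹ * (W z' - W t) < r := by
    intro t ht r hr
    set p : (Fin n → ℝ) × (Fin n → ℝ) := γc t with hp
    set g : (Fin n → ℝ) × (Fin n → ℝ) := (f (x t) u, f (x' t) u') with hg
    -- local Lipschitz data for V at p
    obtain ⟨K, s, hsnhd, hVlip⟩ := hVl p
    obtain ⟨δ₀, hδ₀, hball₀⟩ := Metric.mem_nhds_iff.1 hsnhd
    obtain ⟨Vt, hVtlip, hVeq⟩ := (hVlip.mono hball₀).extend_real
    have hVeqn : ∀ q ∈ Metric.ball p δ₀, V =ᶠ[𝓝 q] Vt := fun q hq =>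
      eventuallyEq_of_mem (Metric.isOpen_ball.mem_nhds hq) hVeq
    set r₁ : ℝ := (-κc * W t + ρ μ + r) / 2 with hr₁
    have hr₁lt : -κc * W t + ρ μ < r₁ := by rw [hr₁]; linarith
    have hr₁lt' : r₁ < r := by rw [hr₁]; linarith
    -- find δ' ≤ δ₀ such that the fderiv bound holds on ball p δ'
    have hΦ : ContinuousAt (fun q : (Fin n → ℝ) × (Fin n → ℝ) => -κc * V q + ρ μ +
        K * ‖g - (f q.1 u, f q.2 u')‖) p := by
      apply ContinuousAt.add
      · exact ((continuous_const.mul hVl.continuous).add continuous_const).continuousAt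
      · exact (continuous_const.mul ((continuous_const.sub hfc).norm)).continuousAt
    have hgp : g - ((f p.1 u, f p.2 u') : (Fin n → ℝ) × (Fin n → ℝ)) = 0 := by
      simp [hp, hg, hγc]
    have hΦp : -κc * V p + ρ μ + K * ‖g - (f p.1 u, f p.2 u')‖ < r₁ := by
      rw [hgp, norm_zero, mul_zero, add_zero]
      exact hr₁lt
    have hev : ∀ᶠ q in 𝓝 p, -κc * V q + ρ μ + K * ‖g - (f q.1 u, f q.2 u')‖ < r₁ :=
      hΦ.eventually_lt continuousAt_const hΦp
    obtain ⟨δ₁, hδ₁, hball₁⟩ := Metric.eventually_nhds_iff_ball.1 hev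
    set δ' : ℝ := min δ₀ δ₁ with hδ'
    have hδ'pos : 0 < δ' := lt_min hδ₀ hδ₁
    have hq' : ∀ q ∈ Metric.ball p δ', DifferentiableAt ℝ Vt q →
        fderiv ℝ Vt q g ≤ r₁ := by
      intro q hq hdVt
      have hq₀ : q ∈ Metric.ball p δ₀ := Metric.ball_subset_ball (min_le_left _ _) hq
      have hq₁ : q ∈ Metric.ball p δ₁ := Metric.ball_subset_ball (min_le_right _ _) hq
      have heq := hVeqn q hq₀
      have hdV : DifferentiableAt ℝ V q := (heq.differentiableAt_iff).2 hdVt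
      have hfd : fderiv ℝ V q = fderiv ℝ Vt q := heq.fderiv_eq
      have hsplit : fderiv ℝ Vt q g = fderiv ℝ Vt q (f q.1 u, f q.2 u') +
          fderiv ℝ Vt q (g - (f q.1 u, f q.2 u')) := by
        rw [(fderiv ℝ Vt q).map_sub]; ring
      have hbound1 : fderiv ℝ Vt q (f q.1 u, f q.2 u') ≤ -κc * V q + ρ μ := by
        rw [← hfd]
        have h2 := hc2 q.1 q.2 u u' hu hu' (by rw [Prod.mk.eta]; exact hdV)
        rw [Prod.mk.eta] at h2
        linarith
      have hbound2 : fderiv ℝ Vt q (g - (f q.1 u, f q.2 u')) ≤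
          K * ‖g - (f q.1 u, f q.2 u')‖ := by
        calc fderiv ℝ Vt q (g - (f q.1 u, f q.2 u'))
            ≤ ‖fderiv ℝ Vt q (g - (f q.1 u, f q.2 u'))‖ := le_abs_self _
          _ ≤ ‖fderiv ℝ Vt q‖ * ‖g - (f q.1 u, f q.2 u')‖ :=
              (fderiv ℝ Vt q).le_opNorm _
          _ ≤ K * ‖g - (f q.1 u, f q.2 u')‖ := by
              gcongr
              exact norm_fderiv_le_of_lipschitz ℝ hVtlip
      have h3 := hball₁ q hq₁
      linarith
    -- derivative of the curve
    have hγd : HasDerivWithinAt γc g (Icc 0 τ) t :=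
      (hx t (Ico_subset_Icc_self ht)).prodMk (hx' t (Ico_subset_Icc_self ht))
    have hmem : Icc 0 τ \ {t} ∈ 𝓝[>] t :=
      mem_of_superset (Ioc_mem_nhdsGT_of_mem ⟨le_rfl, ht.2⟩)
        (fun y hy => ⟨⟨ht.1.trans hy.1.le, hy.2⟩, ne_of_gt hy.1⟩)
    have htend : Tendsto (slope γc t) (𝓝[>] t) (𝓝 g) :=
      (hasDerivWithinAt_iff_tendsto_slope.1 hγd).mono_left (nhdsWithin_le_of_mem hmem)
    -- thresholds
    set ε₁ : ℝ := (r - r₁) / (2 * (K + 1)) with hε₁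
    have hε₁pos : 0 < ε₁ := div_pos (by linarith) (by positivity)
    set h₀ : ℝ := δ' / (2 * (‖g‖ + 1)) with hh₀
    have hh₀pos : 0 < h₀ := by positivity
    -- eventual facts
    have ev1 : ∀ᶠ z' in 𝓝[>] t, z' ∈ Ioc t τ :=
      Ioc_mem_nhdsGT_of_mem ⟨le_rfl, ht.2⟩
    have ev2 : ∀ᶠ z' in 𝓝[>] t, ‖slope γc t z' - g‖ < ε₁ := by
      filter_upwards [htend (Metric.ball_mem_nhds g hε₁pos)] with z' hz'
      have h4 : dist (slope γc t z') g < ε₁ := Metric.mem_ball.1 hz'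
      rwa [dist_eq_norm] at h4
    have ev3 : ∀ᶠ z' in 𝓝[>] t, z' < t + h₀ := by
      have h7 : Iio (t + h₀) ∈ 𝓝[>] t :=
        mem_nhdsWithin_of_mem_nhds (Iio_mem_nhds (by linarith))
      filter_upwards [h7] with y hy using hy
    have ev4 : ∀ᶠ z' in 𝓝[>] t, γc z' ∈ Metric.ball p δ₀ := by
      have hcw : ContinuousWithinAt γc (Icc 0 τ) t :=
        hγcont t (Ico_subset_Icc_self ht)
      have h5 : ∀ᶠ z' in 𝓝[Icc 0 τ] t, γc z' ∈ Metric.ball p δ₀ :=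
        hcw (Metric.isOpen_ball.mem_nhds (Metric.mem_ball_self hδ₀))
      have h6 : Icc 0 τ ∈ 𝓝[>] t := mem_of_superset (Ioc_mem_nhdsGT_of_mem ⟨le_rfl, ht.2⟩)
        (Ioc_subset_Icc_self.trans (Icc_subset_Icc ht.1 le_rfl))
      exact (nhdsWithin_le_of_mem h6) h5
    refine ((ev1.and (ev2.and (ev3.and ev4))).mono ?_).frequently
    rintro z' ⟨hz1, hz2, hz3, hz4⟩
    set h : ℝ := z' - t with hhd
    have hhpos : 0 < h := sub_pos.2 hz1.1
    have hhsmall : h < h₀ := by rw [hhd]; linarith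
    have hhg : h * ‖g‖ < δ' := by
      have h1 : h * ‖g‖ ≤ h * (‖g‖ + 1) := by nlinarith [norm_nonneg g]
      have h2 : h * (‖g‖ + 1) < h₀ * (‖g‖ + 1) :=
        mul_lt_mul_of_pos_right hhsmall (by positivity)
      have h3 : h₀ * (‖g‖ + 1) = δ' / 2 := by rw [hh₀]; field_simp
      linarith
    -- lemC
    have hkey := by
      haveI := Measure.prod.instIsAddHaarMeasure (volume : Measure (Fin n → ℝ))
        (volume : Measure (Fin n → ℝ))
      exact lemC ((volume : Measure (Fin n → ℝ)).prod (volume : Measure (Fin n → ℝ)))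
        hVtlip p g hq' hhpos hhg
    -- relate γc z' with p + h • g
    have hdecomp : γc z' - (p + h • g) = h • (slope γc t z' - g) := by
      rw [smul_sub, slope_def_module, smul_inv_smul₀ hhpos.ne']
      rw [hp]; abel
    have hnorm : ‖γc z' - (p + h • g)‖ ≤ h * ε₁ := by
      rw [hdecomp, norm_smul, Real.norm_eq_abs, abs_of_pos hhpos]
      exact mul_le_mul_of_nonneg_left hz2.le hhpos.le
    have hWz : W z' - W t ≤ r₁ * h + K * (h * ε₁) := by
      have e1 : W z' = Vt (γc z') := hVeq hz4
      have e2 : W t = Vt p := hVeq (Metric.mem_ball_self hδ₀)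
      have e3 : Vt (γc z') - Vt (p + h • g) ≤ K * (h * ε₁) := by
        have hd := hVtlip.dist_le_mul (γc z') (p + h • g)
        rw [Real.dist_eq, dist_eq_norm] at hd
        have h6 := (abs_le.1 (hd.trans
          (mul_le_mul_of_nonneg_left hnorm (NNReal.coe_nonneg K)))).2
        linarith
      rw [e1, e2]
      linarith [hkey, e3]
    rw [inv_mul_lt_iff₀ hhpos]
    have hK1 : (K : ℝ) / (2 * (K + 1)) ≤ 1 / 2 := by
      rw [div_le_div_iff₀ (by positivity) (by norm_num)]
      have := NNReal.coe_nonneg K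
      linarith
    have hKε : (K : ℝ) * ε₁ ≤ (r - r₁) / 2 := by
      have hrr : (0:ℝ) ≤ r - r₁ := by linarith
      calc (K : ℝ) * ε₁ = ((K : ℝ) / (2 * (K + 1))) * (r - r₁) := by
            rw [hε₁]; ring
        _ ≤ (1 / 2) * (r - r₁) := mul_le_mul_of_nonneg_right hK1 hrr
        _ = (r - r₁) / 2 := by ring
    calc W z' - W t ≤ r₁ * h + K * (h * ε₁) := hWz
      _ = (r₁ + K * ε₁) * h := by ring
      _ ≤ (r₁ + (r - r₁) / 2) * h :=
          mul_le_mul_of_nonneg_right (by linarith) hhpos.le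
      _ < r * h := mul_lt_mul_of_pos_right (by linarith) hhpos
      _ = (z' - t) * r := by rw [hhd]; ring
  -- Grönwall
  have hgron := le_gronwallBound_of_liminf_deriv_right_le (f := W)
    (f' := fun t => -κc * W t + ρ μ) (δ := W 0) (K := -κc) (ε := ρ μ)
    hWcont hslope le_rfl (fun t _ => le_rfl) τ ⟨hτ.le, le_rfl⟩
  rw [sub_zero, gronwallBound_of_K_ne_0 (neg_ne_zero.2 hκc)] at hgron
  have hgron' : W τ ≤ W 0 * Real.exp (-(κc * τ)) +
      ρ μ / -κc * (Real.exp (-(κc * τ)) - 1) := by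
    rw [show -(κc * τ) = -κc * τ by ring]
    exact hgron
  -- triangle step
  have hWτ : W τ = V (x τ, x' τ) := by simp only [hW, hγc]
  have hW0 : W 0 = V (x 0, x' 0) := by simp only [hW, hγc]
  have h2 : γ ‖z - x' τ‖ ≤ γ η := by
    rcases eq_or_lt_of_le hz with h | h
    · rw [h]
    · exact (hγ.2.1 (norm_nonneg _) hη h).le
  have htriz : V (x τ, z) ≤ W τ + γ η := by
    rw [hWτ]
    have := htri (x τ) z (x' τ)
    linarith
  have hconv : ρ μ / -κc * (Real.exp (-(κc * τ)) - 1) =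
      ((1 - Real.exp (-(κc * τ))) / κc) * ρ μ := by
    rw [div_mul_eq_mul_div, div_mul_eq_mul_div,
      div_eq_div_iff (neg_ne_zero.2 hκc) hκc]
    ring
  rw [hconv, hW0] at hgron'
  calc V (x τ, z) ≤ W τ + γ η := htriz
    _ ≤ (V (x 0, x' 0) * Real.exp (-(κc * τ)) +
        ((1 - Real.exp (-(κc * τ))) / κc) * ρ μ) + γ η := by linarith
    _ = Real.exp (-(κc * τ)) * V (x 0, x' 0) + γ η +
        ((1 - Real.exp (-(κc * τ))) / κc) * ρ μ := by ring
end

section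
/- Consider an impulsive system Σ=(ℝⁿ,𝕌,𝒰_τ,f,g) with jump parameters τ>0 and p₁,p₂∈ℕ≥1, p₁≤p₂, its transition system T_τ(Σ), and its symbolic model T̂_τ(Σ) with state quantization η>0 and input quantization μ>0 such that for every u∈𝕌 there exists û∈[𝕌]_μ with ‖û−u‖≤μ. Suppose Assumptions 1 and 2 hold with data V, α̲, ᾱ, ρ_uc, ρ_ud, κ_c>0, 0<κ_d<1, γ̂, κ_c≠0. Then 𝒱((x,l),(x̂,l)) = V(x,x̂) is an alternating simulation function from T_τ(Σ) to T̂_τ(Σ): (i) α̲(‖x−x̂‖) ≤ 𝒱((x,l),(x̂,l)) for all states; and (ii) for every (x,l)∈X, (x̂,l)∈X̂, and ν∈𝒰_τ, choosing û∈[𝕌]_μ with ‖û−ν(0)‖≤μ, for every (x̂⁺,l⁺)∈F̂((x̂,l),û) there exists (x⁺,l⁺)∈F((x,l),ν) such that 𝒱((x⁺,l⁺),(x̂⁺,l⁺)) ≤ σ̃·𝒱((x,l),(x̂,l)) + ε̃, where σ̃ = max{e^{−κ_cτ}, κ_d} < 1 and ε̃ = γ̂(η) + max{((1−e^{−κ_cτ})/κ_c)·ρ_uc(μ),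 ρ_ud(μ)}. -/
open MeasureTheory Set Filter Real Metric

lemma lip_ftc {ψ : ℝ → ℝ} {C : NNReal} (hψ : LipschitzWith C ψ) {M h : ℝ} (hh : 0 ≤ h)
    (hae : ∀ᵐ s : ℝ, s ∈ Set.Ioo 0 h → ∃ d : ℝ, d ≤ M ∧ HasDerivAt ψ d s) :
    ψ h - ψ 0 ≤ M * h := by
  have lipbound : ∀ a b : ℝ, |ψ a - ψ b| ≤ (C : ℝ) * |a - b| := by
    intro a b
    have := hψ.dist_le_mul a b
    rwa [Real.dist_eq, Real.dist_eq] at this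
  rcases le_or_gt (C : ℝ) M with hCM | hMC
  · have := (le_abs_self (ψ h - ψ 0)).trans (lipbound h 0)
    have h2 : |h - 0| = h := by rw [sub_zero, abs_of_nonneg hh]
    rw [h2] at this
    nlinarith
  -- θ is monotone
  set θ : ℝ → ℝ := fun s => (C : ℝ) * s - ψ s with hθdef
  have hθ : Monotone θ := by
    intro a b hab
    have := (le_abs_self (ψ b - ψ a)).trans (lipbound b a)
    have h2 : |b - a| = b - a := abs_of_nonneg (by linarith)
    rw [h2] at this
    simp only [hθdef]
    nlinarith
  have hθcont : Continuous θ :=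
    (continuous_const.mul continuous_id).sub hψ.continuous
  set μθ := hθ.stieltjesFunction.measure with hμθ
  -- the Stieltjes function of θ is θ itself
  have hstey : ∀ x, hθ.stieltjesFunction x = θ x := by
    intro x
    rw [hθ.stieltjesFunction_eq]
    exact rightLim_eq_of_tendsto
      (hθcont.continuousAt.continuousWithinAt.tendsto)
  have key : ∀ᵐ x : ℝ, x ∈ Set.Ioo 0 h →
      ENNReal.ofReal ((C : ℝ) - M) ≤ μθ.rnDeriv volume x := by
    filter_upwards [hθ.ae_hasDerivAt, hae, Measure.rnDeriv_lt_top μθ volume]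
      with x hx1 hx2 hx3 hxm
    obtain ⟨d, hdM, hd⟩ := hx2 hxm
    have hθd : HasDerivAt θ ((C : ℝ) - d) x := by
      have := ((hasDerivAt_id x).const_mul (C : ℝ)).sub hd
      simp only [mul_one] at this
      exact this
    have : (μθ.rnDeriv volume x).toReal = (C : ℝ) - d := hx1.unique hθd
    refine ENNReal.ofReal_le_of_le_toReal ?_
    rw [this]; linarith
  have step1 : ENNReal.ofReal ((C : ℝ) - M) * volume (Set.Ioo 0 h)
      ≤ ∫⁻ x in Set.Ioo 0 h, μθ.rnDeriv volume x ∂volume := by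
    rw [← MeasureTheory.setLIntegral_const]
    refine MeasureTheory.lintegral_mono_ae ?_
    exact (ae_restrict_iff' measurableSet_Ioo).2 key
  have step2 : ∫⁻ x in Set.Ioo 0 h, μθ.rnDeriv volume x ∂volume ≤ μθ (Set.Ioc 0 h) :=
    (Measure.setLIntegral_rnDeriv_le _).trans (measure_mono Set.Ioo_subset_Ioc_self)
  have step3 : μθ (Set.Ioc 0 h) = ENNReal.ofReal (θ h - θ 0) := by
    rw [hμθ, StieltjesFunction.measure_Ioc, hstey, hstey]
  have final : ((C : ℝ) - M) * h ≤ θ h - θ 0 := by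
    have := (step1.trans step2).trans_eq step3
    rw [Real.volume_Ioo, sub_zero, ← ENNReal.ofReal_mul (by linarith)] at this
    exact (ENNReal.ofReal_le_ofReal_iff (sub_nonneg.2 (hθ hh))).1 this
  simp only [hθdef] at final
  nlinarith

lemma ae_line {E : Type*} [NormedAddCommGroup E] [NormedSpace ℝ E] [MeasureSpace E]
    [BorelSpace E] [SigmaFinite (volume : Measure E)]
    [(volume : Measure E).IsAddRightInvariant]
    {N : Set E} (hN : MeasurableSet N) (h0 : volume N = 0) (v : E) :
    ∀ᵐ q : E, ∀ᵐ s : ℝ, q + s • v ∉ N := by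
  have hcont : Continuous fun p : ℝ × E => p.2 + p.1 • v :=
    continuous_snd.add (continuous_fst.smul continuous_const)
  set A : Set (ℝ × E) := (fun p : ℝ × E => p.2 + p.1 • v) ⁻¹' N with hAdef
  have hA : MeasurableSet A := hcont.measurable hN
  have hA0 : ((volume : Measure ℝ).prod (volume : Measure E)) A = 0 := by
    rw [Measure.measure_prod_null hA]
    refine Filter.Eventually.of_forall fun s => ?_
    show volume (Prod.mk s ⁻¹' A) = 0
    have : Prod.mk s ⁻¹' A = (fun q : E => q + s • v) ⁻¹' N := rfl
    rw [this, measure_preimage_add_right]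
    exact h0
  set B : Set (E × ℝ) := Prod.swap ⁻¹' A with hBdef
  have hB : MeasurableSet B := measurable_swap hA
  have hB0 : ((volume : Measure E).prod (volume : Measure ℝ)) B = 0 := by
    rw [Measure.measurePreserving_swap.measure_preimage hA.nullMeasurableSet]
    exact hA0
  rw [Measure.measure_prod_null hB] at hB0
  filter_upwards [hB0] with q hq
  have : Prod.mk q ⁻¹' B = {s : ℝ | q + s • v ∈ N} := rfl
  rw [this] at hq
  rw [ae_iff]
  simpa using hq

set_option maxHeartbeats 2000000 in
lemma flow_est {n m : ℕ} (𝕌 : Set (Fin m → ℝ))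
    (f : (Fin n → ℝ) → (Fin m → ℝ) → (Fin n → ℝ))
    (hfc : Continuous fun p : (Fin n → ℝ) × (Fin m → ℝ) => f p.1 p.2)
    {τ : ℝ} (hτ : 0 < τ)
    (φ : (Fin n → ℝ) → (Fin m → ℝ) → ℝ → (Fin n → ℝ))
    (hφ0 : ∀ x u, φ x u 0 = x)
    (hφ : ∀ x u, u ∈ 𝕌 → ∀ t : ℝ, HasDerivAt (φ x u) (f (φ x u t) u) t)
    (V : (Fin n → ℝ) × (Fin n → ℝ) → ℝ)
    (hVl : LocallyLipschitz V)
    {κc R : ℝ} (hκc : 0 < κc)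
    (x x' : Fin n → ℝ) (u u' : Fin m → ℝ) (hu : u ∈ 𝕌) (hu' : u' ∈ 𝕌)
    (hc2' : ∀ z1 z2 : Fin n → ℝ, DifferentiableAt ℝ V (z1, z2) →
      fderiv ℝ V (z1, z2) (f z1 u, f z2 u') ≤ -κc * V (z1, z2) + R) :
    V (φ x u τ, φ x' u' τ)
      ≤ Real.exp (-(κc * τ)) * V (x, x') + (1 - Real.exp (-(κc * τ))) / κc * R := by
  haveI hHaar : (volume : Measure ((Fin n → ℝ) × (Fin n → ℝ))).IsAddHaarMeasure := by
    rw [show (volume : Measure ((Fin n → ℝ) × (Fin n → ℝ))) = (volume.prod volume) from rfl]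
    haveI := isAddHaarMeasure_volume_pi (Fin n)
    infer_instance
  set c : ℝ → (Fin n → ℝ) × (Fin n → ℝ) := fun s => (φ x u s, φ x' u' s) with hcdef
  have hcd : ∀ t, HasDerivAt c (f (c t).1 u, f (c t).2 u') t :=
    fun t => (hφ x u hu t).prodMk (hφ x' u' hu' t)
  have hccont : Continuous c := by
    rw [continuous_iff_continuousAt]; exact fun t => (hcd t).continuousAt
  have hVc : Continuous V := hVl.continuous
  set W : ℝ → ℝ := fun s => V (c s) with hWdef
  have main : ∀ s ∈ Icc (0:ℝ) τ, W s ≤ gronwallBound (W 0) (-κc) R (s - 0) := by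
    apply le_gronwallBound_of_liminf_deriv_right_le (f' := fun s => -κc * W s + R)
    · exact (hVc.comp hccont).continuousOn
    · -- the liminf condition
      intro t ht r hr
      set p : (Fin n → ℝ) × (Fin n → ℝ) := c t with hpdef
      set v : (Fin n → ℝ) × (Fin n → ℝ) := (f p.1 u, f p.2 u') with hvdef
      set ε₀ : ℝ := (r - (-κc * W t + R)) / 4 with hε₀def
      have hε₀ : 0 < ε₀ := by rw [hε₀def]; linarith
      obtain ⟨K, s0, hs0, hVK⟩ := hVl p
      obtain ⟨R0, hR0pos, hR0sub⟩ : ∃ R0 > 0, closedBall p R0 ⊆ s0 := by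
        rcases Metric.mem_nhds_iff.1 hs0 with ⟨ε, hε, hb⟩
        exact ⟨ε/2, half_pos hε, (closedBall_subset_ball (half_lt_self hε)).trans hb⟩
      obtain ⟨Vt, hVt, hEq⟩ := (hVK.mono hR0sub).extend_real
      have hVeq : ∀ z ∈ ball p R0, V =ᶠ[nhds z] Vt := fun z hz =>
        Filter.eventuallyEq_of_mem (isOpen_ball.mem_nhds hz)
          (fun w hw => hEq (ball_subset_closedBall hw))
      -- choose δ by continuity
      set G : (Fin n → ℝ) × (Fin n → ℝ) → ℝ := fun z =>
        -κc * V z + (K:ℝ) * ‖(f z.1 u - f p.1 u, f z.2 u' - f p.2 u')‖ with hGdef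
      have hGc : ContinuousAt G p := by
        have hf1 : Continuous fun z : (Fin n → ℝ) × (Fin n → ℝ) => f z.1 u :=
          hfc.comp (continuous_fst.prodMk continuous_const)
        have hf2 : Continuous fun z : (Fin n → ℝ) × (Fin n → ℝ) => f z.2 u' :=
          hfc.comp (continuous_snd.prodMk continuous_const)
        exact ((continuous_const.mul hVc).add (continuous_const.mul
          (((hf1.sub continuous_const).prodMk (hf2.sub continuous_const)).norm))).continuousAt
      have hGp : G p = -κc * W t := by simp [hGdef]; exact Or.inl rfl
      have hGev : ∀ᶠ z in nhds p, G z < -κc * W t + ε₀ := by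
        refine hGc.eventually_lt_const ?_
        rw [hGp]; linarith
      obtain ⟨δ, hδpos, hδball⟩ := Metric.eventually_nhds_iff_ball.1 hGev
      set δ' : ℝ := min (δ/2) (R0/2) with hδ'def
      have hδ'pos : 0 < δ' := lt_min (half_pos hδpos) (half_pos hR0pos)
      have hδ'ball : closedBall p δ' ⊆ ball p δ := fun z hz => by
        have := mem_closedBall.1 hz
        exact mem_ball.2 (lt_of_le_of_lt this (lt_of_le_of_lt (min_le_left _ _) (half_lt_self hδpos)))
      have hδ'R0 : closedBall p δ' ⊆ ball p R0 := fun z hz => by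
        have := mem_closedBall.1 hz
        exact mem_ball.2 (lt_of_le_of_lt this (lt_of_le_of_lt (min_le_right _ _) (half_lt_self hR0pos)))
      set M : ℝ := -κc * W t + R + ε₀ with hMdef
      -- pointwise derivative bound
      have hptb : ∀ z : (Fin n → ℝ) × (Fin n → ℝ), z ∈ closedBall p δ' →
          DifferentiableAt ℝ Vt z → fderiv ℝ Vt z v ≤ M := by
        intro z hz hdz
        have heq : V =ᶠ[nhds z] Vt := hVeq z (hδ'R0 hz)
        have hdV : DifferentiableAt ℝ V z := hdz.congr_of_eventuallyEq heq
        have hfd : fderiv ℝ V z = fderiv ℝ Vt z := heq.fderiv_eq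
        set w : (Fin n → ℝ) × (Fin n → ℝ) := (f z.1 u, f z.2 u') with hwdef
        have hsplit : fderiv ℝ Vt z v = fderiv ℝ Vt z (v - w) + fderiv ℝ Vt z w := by
          rw [← map_add, sub_add_cancel]
        have h1 : fderiv ℝ Vt z w ≤ -κc * V z + R := by
          rw [← hfd]
          have hdV' : DifferentiableAt ℝ V (z.1, z.2) := by rw [Prod.mk.eta]; exact hdV
          have := hc2' z.1 z.2 hdV'
          simpa only [Prod.mk.eta] using this
        have h2 : fderiv ℝ Vt z (v - w) ≤ (K:ℝ) * ‖w - v‖ := by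
          calc fderiv ℝ Vt z (v - w) ≤ ‖fderiv ℝ Vt z (v - w)‖ := le_abs_self _
            _ ≤ ‖fderiv ℝ Vt z‖ * ‖v - w‖ := ContinuousLinearMap.le_opNorm _ _
            _ ≤ (K:ℝ) * ‖v - w‖ := by
                exact mul_le_mul_of_nonneg_right (norm_fderiv_le_of_lipschitz ℝ hVt) (norm_nonneg _)
            _ = (K:ℝ) * ‖w - v‖ := by rw [norm_sub_rev]
        have hwv : ‖w - v‖ = ‖(f z.1 u - f p.1 u, f z.2 u' - f p.2 u')‖ := rfl
        have hGz : -κc * V z + (K:ℝ) * ‖(f z.1 u - f p.1 u, f z.2 u' - f p.2 u')‖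
            < -κc * W t + ε₀ := hδball z (hδ'ball hz)
        calc fderiv ℝ Vt z v = fderiv ℝ Vt z (v - w) + fderiv ℝ Vt z w := hsplit
          _ ≤ (K:ℝ) * ‖w - v‖ + (-κc * V z + R) := add_le_add h2 h1
          _ = (-κc * V z + (K:ℝ) * ‖(f z.1 u - f p.1 u, f z.2 u' - f p.2 u')‖) + R := by
              rw [hwv]; ring
          _ ≤ (-κc * W t + ε₀) + R := by linarith
          _ = M := by rw [hMdef]; ring
      -- Rademacher and good lines
      set Nbad : Set ((Fin n → ℝ) × (Fin n → ℝ)) := {z | ¬ DifferentiableAt ℝ Vt z} with hNdef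
      have hNmeas : MeasurableSet Nbad := (measurableSet_of_differentiableAt ℝ Vt).compl
      have hN0 : volume Nbad = 0 := by
        have := hVt.ae_differentiableAt_of_real (μ := volume)
        rwa [ae_iff] at this
      have hgood := ae_line hNmeas hN0 v
      -- eventual statements near t
      have hlittle : (fun z => c z - c t - (z - t) • v) =o[nhds t] fun z => z - t := by
        have := hcd t
        rw [hasDerivAt_iff_isLittleO] at this
        exact this
      have hsm : ∀ᶠ z in nhds t, ‖c z - c t - (z - t) • v‖ ≤ ε₀ / ((K:ℝ) + 1) * ‖z - t‖ :=
        Asymptotics.isLittleO_iff.mp hlittle (by positivity)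
      have hcz : ∀ᶠ z in nhds t, c z ∈ closedBall p δ' :=
        hccont.continuousAt (Metric.closedBall_mem_nhds p hδ'pos)
      have hz2 : ∀ᶠ z in nhds t, |z - t| * ‖v‖ ≤ δ' / 2 := by
        have htend : Filter.Tendsto (fun z : ℝ => |z - t| * ‖v‖) (nhds t) (nhds 0) := by
          have h0 : Filter.Tendsto (fun z : ℝ => z - t) (nhds t) (nhds (t - t)) :=
            (continuous_id.sub continuous_const).tendsto t
          rw [sub_self] at h0
          simpa using (h0.abs.mul_const ‖v‖)
        exact htend.eventually_le_const (by positivity)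
      apply Filter.Eventually.frequently
      filter_upwards [hsm.filter_mono nhdsWithin_le_nhds, hcz.filter_mono nhdsWithin_le_nhds,
        hz2.filter_mono nhdsWithin_le_nhds, self_mem_nhdsWithin] with z hz1 hzcb hzv hzt
      have hh : 0 < z - t := sub_pos.2 hzt
      set h : ℝ := z - t with hhdef
      -- choose a good base point q
      set rq : ℝ := min (ε₀ * h / (2*((K:ℝ)+1))) (δ'/2) with hrqdef
      have hrqpos : 0 < rq := by
        apply lt_min
        · positivity
        · positivity
      obtain ⟨q, hq1, hq2⟩ : ∃ q : (Fin n → ℝ) × (Fin n → ℝ),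
          (∀ᵐ s : ℝ, q + s • v ∉ Nbad) ∧ dist q p ≤ rq := by
        by_contra hcon
        push_neg at hcon
        have hsub : ball p rq ⊆ {q : (Fin n → ℝ) × (Fin n → ℝ) |
            ¬ (∀ᵐ s : ℝ, q + s • v ∉ Nbad)} := by
          intro q hq hgq
          exact absurd (mem_ball.1 hq).le (not_le.2 (hcon q hgq))
        have h1 : volume (ball p rq) = 0 :=
          le_antisymm (le_trans (measure_mono hsub) (by rw [nonpos_iff_eq_zero, ← ae_iff]; exact hgood)) zero_le
        exact absurd h1 (measure_ball_pos volume p hrqpos).ne'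
      -- the Lipschitz function along the line
      set ψ : ℝ → ℝ := fun s => Vt (q + s • v) with hψdef
      have hlinelip : LipschitzWith ‖v‖₊ (fun s : ℝ => q + s • v) := by
        apply LipschitzWith.of_dist_le_mul
        intro s1 s2
        have : (q + s1 • v) - (q + s2 • v) = (s1 - s2) • v := by
          rw [add_sub_add_left_eq_sub, ← sub_smul]
        rw [dist_eq_norm, this, norm_smul, Real.dist_eq]
        rw [Real.norm_eq_abs]
        rw [coe_nnnorm, mul_comm]
      have hψlip : LipschitzWith (K * ‖v‖₊) ψ := hVt.comp hlinelip
      have hsegment : ∀ s ∈ Icc (0:ℝ) h, q + s • v ∈ closedBall p δ' := by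
        intro s hs
        have h1 : ‖(q + s • v) - p‖ ≤ ‖q - p‖ + |s| * ‖v‖ := by
          have : (q + s • v) - p = (q - p) + s • v := by abel
          rw [this]
          refine (norm_add_le _ _).trans ?_
          rw [norm_smul, Real.norm_eq_abs]
        have h2 : ‖q - p‖ ≤ δ'/2 := by
          rw [← dist_eq_norm]; exact hq2.trans (min_le_right _ _)
        have h3 : |s| * ‖v‖ ≤ |h| * ‖v‖ := by
          apply mul_le_mul_of_nonneg_right _ (norm_nonneg _)
          rw [abs_of_nonneg hs.1, abs_of_nonneg hh.le]; exact hs.2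
        rw [mem_closedBall, dist_eq_norm]
        calc ‖(q + s • v) - p‖ ≤ ‖q - p‖ + |s| * ‖v‖ := h1
          _ ≤ δ'/2 + δ'/2 := add_le_add h2 (h3.trans hzv)
          _ = δ' := add_halves δ'
      have hae : ∀ᵐ s : ℝ, s ∈ Set.Ioo 0 h → ∃ d : ℝ, d ≤ M ∧ HasDerivAt ψ d s := by
        filter_upwards [hq1] with s hs hsin
        have hdiff : DifferentiableAt ℝ Vt (q + s • v) := not_not.1 hs
        refine ⟨fderiv ℝ Vt (q + s • v) v,
          hptb _ (hsegment s (Ioo_subset_Icc_self hsin)) hdiff, ?_⟩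
        have hline : HasDerivAt (fun s : ℝ => q + s • v) v s := by
          simpa using ((hasDerivAt_id s).smul_const v).const_add q
        exact hdiff.hasFDerivAt.comp_hasDerivAt s hline
      have hftc : ψ h - ψ 0 ≤ M * h := lip_ftc hψlip hh.le hae
      -- assemble
      have hz1' : ‖c z - c t - h • v‖ ≤ ε₀ / ((K:ℝ) + 1) * h := by
        have : ‖(h : ℝ)‖ = h := by rw [Real.norm_eq_abs, abs_of_nonneg hh.le]
        calc ‖c z - c t - h • v‖ ≤ ε₀ / ((K:ℝ) + 1) * ‖z - t‖ := hz1
          _ = ε₀ / ((K:ℝ) + 1) * h := by rw [show z - t = h from rfl, this]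
      have hVtlip : ∀ a b, |Vt a - Vt b| ≤ (K:ℝ) * dist a b := by
        intro a b
        have := hVt.dist_le_mul a b
        rwa [Real.dist_eq] at this
      have e1 : |Vt (c z) - Vt (p + h • v)| ≤ ε₀ * h := by
        have := hVtlip (c z) (p + h • v)
        have hd : dist (c z) (p + h • v) ≤ ε₀ / ((K:ℝ) + 1) * h := by
          rw [dist_eq_norm]
          calc ‖c z - (p + h • v)‖ = ‖c z - c t - h • v‖ := by rw [hpdef]; abel_nf
            _ ≤ ε₀ / ((K:ℝ) + 1) * h := hz1'
        have hK1 : (0:ℝ) < (K:ℝ) + 1 := by positivity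
        calc |Vt (c z) - Vt (p + h • v)| ≤ (K:ℝ) * (ε₀ / ((K:ℝ) + 1) * h) :=
              this.trans (mul_le_mul_of_nonneg_left hd K.coe_nonneg)
          _ ≤ ε₀ * h := by
              rw [div_mul_eq_mul_div, mul_div_assoc']
              rw [div_le_iff₀ hK1]
              nlinarith [hε₀.le, hh.le, K.coe_nonneg]
      have e2 : |Vt (p + h • v) - ψ h| ≤ ε₀ * h / 2 := by
        have := hVtlip (p + h • v) (q + h • v)
        have hd : dist (p + h • v) (q + h • v) = dist p q := by
          simp [dist_eq_norm]
        rw [hψdef]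
        simp only
        refine this.trans ?_
        rw [hd, dist_comm]
        calc (K:ℝ) * dist q p ≤ (K:ℝ) * (ε₀ * h / (2*((K:ℝ)+1))) :=
              mul_le_mul_of_nonneg_left (hq2.trans (min_le_left _ _)) K.coe_nonneg
          _ ≤ ε₀ * h / 2 := by
              rw [mul_div_assoc']
              rw [div_le_div_iff₀ (by positivity) (by norm_num)]
              nlinarith [hε₀.le, hh.le, K.coe_nonneg]
      have e3 : |ψ 0 - Vt p| ≤ ε₀ * h / 2 := by
        have hψ0 : ψ 0 = Vt q := by simp [hψdef]
        rw [hψ0]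
        refine (hVtlip q p).trans ?_
        calc (K:ℝ) * dist q p ≤ (K:ℝ) * (ε₀ * h / (2*((K:ℝ)+1))) :=
              mul_le_mul_of_nonneg_left (hq2.trans (min_le_left _ _)) K.coe_nonneg
          _ ≤ ε₀ * h / 2 := by
              rw [mul_div_assoc']
              rw [div_le_div_iff₀ (by positivity) (by norm_num)]
              nlinarith [hε₀.le, hh.le, K.coe_nonneg]
      -- values of V vs Vt at the endpoints
      have hWz : W z = Vt (c z) := by
        rw [hWdef]
        exact hEq (ball_subset_closedBall (hδ'R0 hzcb))
      have hWt : W t = Vt p := by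
        rw [hWdef]
        exact hEq (ball_subset_closedBall (hδ'R0 (mem_closedBall_self hδ'pos.le)))
      have habs1 := abs_le.1 e1
      have habs2 := abs_le.1 e2
      have habs3 := abs_le.1 e3
      have hMr : M + 3 * ε₀ ≤ r := by
        rw [hMdef, hε₀def]; linarith
      clear_value ψ
      clear_value M
      clear_value ε₀
      clear_value h
      have hWbound : W z - W t ≤ M * h + 2 * (ε₀ * h) := by
        rw [hWz, hWt]
        have : Vt (c z) - Vt p = (Vt (c z) - Vt (p + h • v)) + (Vt (p + h • v) - ψ h)
            + (ψ h - ψ 0) + (ψ 0 - Vt p) := by ring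
        rw [this]
        linarith [habs1.2, habs2.2, habs3.2, hftc]
      rw [inv_mul_lt_iff₀ hh]
      calc W z - W t ≤ M * h + 2 * (ε₀ * h) := hWbound
        _ < r * h := by nlinarith [hε₀, hh, hMr]
        _ = h * r := by ring
    · exact le_rfl
    · intro s hs; exact le_rfl
  have hWτ := main τ ⟨hτ.le, le_rfl⟩
  rw [gronwallBound_of_K_ne_0 (neg_ne_zero.2 hκc.ne')] at hWτ
  have hW0 : W 0 = V (x, x') := by simp [hWdef, hcdef, hφ0]
  rw [hW0] at hWτ
  have harith : V (x,x') * Real.exp (-κc * (τ - 0)) + R / (-κc) * (Real.exp (-κc * (τ - 0)) - 1)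
      = Real.exp (-(κc * τ)) * V (x, x') + (1 - Real.exp (-(κc * τ))) / κc * R := by
    rw [show -κc * (τ - 0) = -(κc * τ) by ring]
    field_simp [hκc.ne']
    ring
  have hWτ' : W τ ≤ V (x,x') * Real.exp (-κc * (τ - 0))
      + R / (-κc) * (Real.exp (-κc * (τ - 0)) - 1) := hWτ
  rw [harith] at hWτ'
  exact hWτ'

/-- reverse direction, case `κc > 0`, `κd < 1`: under Assumptions 1 and 2,
`𝒱((x,l),(x̂,l)) = V(x,x̂)` is an alternating simulation function from `T_τ(Σ)` to the
symbolic model `T̂_τ(Σ)`: (i) `α₁(‖x-x̂‖) ≤ V(x,x̂)`; and (ii) for every state pair, every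
input curve `ν ∈ 𝒰_τ` of `T_τ(Σ)`, the quantized input `û ∈ [𝕌]_μ` with `‖û - ν(0)‖ ≤ μ`
matches every symbolic transition by a concrete one with
`V(x⁺,x̂⁺) ≤ σ̃ V(x,x̂) + ε̃`, `σ̃ = max(e^{-κc τ}, κd) < 1`,
`ε̃ = γ̂(η) + max(((1-e^{-κc τ})/κc) ρ_uc(μ), ρ_ud(μ))`.
The continuous flow is represented by `φ x u ·`, the unique solution of `ẋ = f(x,u)` from
`x` under the constant input `u`; since curves in `𝒰_τ` are constant on `[0,τ)`,
`𝐱_{x,ν}(τ⁻) = φ x (ν 0) τ`. -/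
theorem stmt11 {n m : ℕ} (𝕌 : Set (Fin m → ℝ))
    (f g : (Fin n → ℝ) → (Fin m → ℝ) → (Fin n → ℝ))
    (hf : LocallyLipschitz fun p : (Fin n → ℝ) × (Fin m → ℝ) => f p.1 p.2)
    (hg : LocallyLipschitz fun p : (Fin n → ℝ) × (Fin m → ℝ) => g p.1 p.2)
    (τ : ℝ) (hτ : 0 < τ) (p₁ p₂ : ℕ) (hp₁ : 1 ≤ p₁) (hp : p₁ ≤ p₂)
    (η μ : ℝ) (hη : 0 < η) (hμ : 0 < μ)
    (φ : (Fin n → ℝ) → (Fin m → ℝ) → ℝ → (Fin n → ℝ))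
    (hφ0 : ∀ x u, φ x u 0 = x)
    (hφ : ∀ x u, u ∈ 𝕌 → ∀ t : ℝ, HasDerivAt (φ x u) (f (φ x u t) u) t)
    (V : (Fin n → ℝ) × (Fin n → ℝ) → ℝ)
    (hVl : LocallyLipschitz V) (hVnn : ∀ p, 0 ≤ V p)
    (α₁ α₂ ρc ρd γ : ℝ → ℝ)
    (hα₁ : KInf α₁) (hα₂ : KInf α₂) (hρc : KInf ρc) (hρd : KInf ρd) (hγ : KInf γ)
    (κc κd : ℝ) (hκc : 0 < κc) (hκd0 : 0 < κd) (hκd1 : κd < 1)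
    (hc1 : ∀ x x' : Fin n → ℝ, α₁ ‖x - x'‖ ≤ V (x, x') ∧ V (x, x') ≤ α₂ ‖x - x'‖)
    (hc2 : ∀ (x x' : Fin n → ℝ) (u u' : Fin m → ℝ), u ∈ 𝕌 → u' ∈ 𝕌 →
      DifferentiableAt ℝ V (x, x') →
      fderiv ℝ V (x, x') (f x u, f x' u') ≤ -κc * V (x, x') + ρc ‖u - u'‖)
    (hc3 : ∀ (x x' : Fin n → ℝ) (u u' : Fin m → ℝ), u ∈ 𝕌 → u' ∈ 𝕌 →
      V (g x u, g x' u') ≤ κd * V (x, x') + ρd ‖u - u'‖)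
    (htri : ∀ x y z : Fin n → ℝ, V (x, y) ≤ V (x, z) + γ ‖y - z‖)
    -- the input quantization: every `u ∈ 𝕌` is `μ`-close to a point of `Û = [𝕌]_μ`
    (hquant : ∀ u ∈ 𝕌, ∃ uh : Fin m → ℝ,
      (uh ∈ 𝕌 ∧ ∀ i, ∃ k : ℤ, uh i = (k : ℝ) * μ) ∧ ‖uh - u‖ ≤ μ) :
    let σ : ℝ := max (Real.exp (-(κc * τ))) κd
    let εt : ℝ := γ η + max (((1 - Real.exp (-(κc * τ))) / κc) * ρc μ) (ρd μ)
    let grid : Set (Fin n → ℝ) := {a | ∀ i, ∃ k : ℤ, a i = (k : ℝ) * η}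
    let Uhat : Set (Fin m → ℝ) := {u | u ∈ 𝕌 ∧ ∀ i, ∃ k : ℤ, u i = (k : ℝ) * μ}
    σ < 1 ∧
    -- condition (i)
    (∀ (x x' : Fin n → ℝ) (l : ℕ), l ≤ p₂ → α₁ ‖x - x'‖ ≤ V (x, x')) ∧
    -- condition (ii): inputs of `T_τ(Σ)` are curves `ν ∈ 𝒰_τ`
    (∀ (x x' : Fin n → ℝ) (l : ℕ), l ≤ p₂ → x' ∈ grid →
      ∀ ν : ℝ → (Fin m → ℝ), (∀ t, ν t ∈ 𝕌) →
        (∀ k : ℕ, ∀ t ∈ Set.Ico ((k : ℝ) * τ) ((k + 1 : ℝ) * τ), ν t = ν ((k : ℝ) * τ)) →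
        ∃ uh : Fin m → ℝ, uh ∈ Uhat ∧ ‖uh - ν 0‖ ≤ μ ∧
          ∀ (x'p : Fin n → ℝ) (lp : ℕ),
            -- transitions of the symbolic model `T̂_τ(Σ)` under `uh`
            (x'p ∈ grid ∧
              ((l < p₂ ∧ ‖x'p - φ x' uh τ‖ ≤ η ∧ lp = l + 1) ∨
               (p₁ ≤ l ∧ l ≤ p₂ ∧ ‖x'p - g x' uh‖ ≤ η ∧ lp = 0))) →
            -- matched by a transition of `T_τ(Σ)` under `ν`
            ∃ xp : Fin n → ℝ,
              ((l < p₂ ∧ xp = φ x (ν 0) τ ∧ lp = l + 1) ∨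
               (p₁ ≤ l ∧ l ≤ p₂ ∧ xp = g x (ν 0) ∧ lp = 0)) ∧
              V (xp, x'p) ≤ σ * V (x, x') + εt) := by
  intro σ εt grid Uhat
  have hexp1 : Real.exp (-(κc * τ)) < 1 := by
    have h1 : Real.exp (-(κc * τ)) < Real.exp 0 := Real.exp_lt_exp.2 (by nlinarith)
    rwa [Real.exp_zero] at h1
  have hexp0 : 0 < Real.exp (-(κc * τ)) := Real.exp_pos _
  have hσ1 : σ < 1 := max_lt hexp1 hκd1
  refine ⟨hσ1, fun x x' l _ => (hc1 x x').1, ?_⟩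
  intro x x' l hl hgrid ν hν hνc
  obtain ⟨uh, huh, hdist⟩ := hquant (ν 0) (hν 0)
  refine ⟨uh, huh, hdist, ?_⟩
  intro x'p lp hsym
  obtain ⟨hx'grid, htrans⟩ := hsym
  have hργmono : MonotoneOn γ (Set.Ici 0) := hγ.2.1.monotoneOn
  have hρcmono : MonotoneOn ρc (Set.Ici 0) := hρc.2.1.monotoneOn
  have hρdmono : MonotoneOn ρd (Set.Ici 0) := hρd.2.1.monotoneOn
  have hnorm : ‖ν 0 - uh‖ ≤ μ := by rw [norm_sub_rev]; exact hdist
  have hρcle : ρc ‖ν 0 - uh‖ ≤ ρc μ :=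
    hρcmono (Set.mem_Ici.2 (norm_nonneg _)) (Set.mem_Ici.2 hμ.le) hnorm
  have hρdle : ρd ‖ν 0 - uh‖ ≤ ρd μ :=
    hρdmono (Set.mem_Ici.2 (norm_nonneg _)) (Set.mem_Ici.2 hμ.le) hnorm
  have hVxx : 0 ≤ V (x, x') := hVnn _
  have hc0 : 0 ≤ (1 - Real.exp (-(κc * τ))) / κc := div_nonneg (by linarith) hκc.le
  rcases htrans with ⟨hlp2, hclose, hlpeq⟩ | ⟨hp1l, hlp2, hclose, hlpeq⟩
  · -- flow transition
    refine ⟨φ x (ν 0) τ, Or.inl ⟨hlp2, rfl, hlpeq⟩, ?_⟩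
    have hγle : γ ‖x'p - φ x' uh τ‖ ≤ γ η :=
      hργmono (Set.mem_Ici.2 (norm_nonneg _)) (Set.mem_Ici.2 hη.le) hclose
    have hfb := flow_est 𝕌 f hf.continuous hτ φ hφ0 hφ V hVl hκc x x' (ν 0) uh (hν 0) huh.1
      (fun z1 z2 hd => hc2 z1 z2 (ν 0) uh (hν 0) huh.1 hd)
    have h1 := htri (φ x (ν 0) τ) x'p (φ x' uh τ)
    have h2 : Real.exp (-(κc * τ)) * V (x, x') ≤ σ * V (x, x') :=
      mul_le_mul_of_nonneg_right (le_max_left _ _) hVxx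
    have h3 : (1 - Real.exp (-(κc * τ))) / κc * ρc ‖ν 0 - uh‖
        ≤ (1 - Real.exp (-(κc * τ))) / κc * ρc μ :=
      mul_le_mul_of_nonneg_left hρcle hc0
    have h4 : (1 - Real.exp (-(κc * τ))) / κc * ρc μ
        ≤ max (((1 - Real.exp (-(κc * τ))) / κc) * ρc μ) (ρd μ) := le_max_left _ _
    show V (φ x (ν 0) τ, x'p) ≤ σ * V (x, x')
      + (γ η + max (((1 - Real.exp (-(κc * τ))) / κc) * ρc μ) (ρd μ))
    linarith
  · -- jump transition
    refine ⟨g x (ν 0), Or.inr ⟨hp1l, hlp2, rfl, hlpeq⟩, ?_⟩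
    have hγle : γ ‖x'p - g x' uh‖ ≤ γ η :=
      hργmono (Set.mem_Ici.2 (norm_nonneg _)) (Set.mem_Ici.2 hη.le) hclose
    have h1 := htri (g x (ν 0)) x'p (g x' uh)
    have h2 := hc3 x x' (ν 0) uh (hν 0) huh.1
    have h3 : κd * V (x, x') ≤ σ * V (x, x') :=
      mul_le_mul_of_nonneg_right (le_max_right _ _) hVxx
    have h4 : ρd μ ≤ max (((1 - Real.exp (-(κc * τ))) / κc) * ρc μ) (ρd μ) := le_max_right _ _
    show V (g x (ν 0), x'p) ≤ σ * V (x, x')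
      + (γ η + max (((1 - Real.exp (-(κc * τ))) / κc) * ρc μ) (ρd μ))
    linarith
end

section
/- Consider an impulsive system Σ=(ℝⁿ,𝕌,𝒰_τ,f,g) with jump parameters τ>0 and p₁,p₂∈ℕ≥1, p₁≤p₂, its transition system T_τ(Σ), and its symbolic model T̂_τ(Σ) with state quantization η>0 and input quantization μ≥0. Suppose Assumptions 1 and 2 hold with data V, α̲, ᾱ, ρ_uc, ρ_ud, κ_c>0, 0<κ_d<1, γ̂. Then 𝒱((x,l),(x̂,l)) = V(x,x̂) is an alternating simulation function from T̂_τ(Σ) to T_τ(Σ): (i) α̲(‖x−x̂‖) ≤ 𝒱((x,l),(x̂,l)) for all (x,l)∈X, (x̂,l)∈X̂; and (ii) for every (x,l)∈X, (x̂,l)∈X̂, and û∈[𝕌]_μ, choosing the input ν(·)=û for T_τ(Σ), for every (x⁺,l⁺)∈F((x,l),ν) there exists (x̂⁺,l⁺)∈F̂((x̂,l),û) such that 𝒱((x⁺,l⁺),(x̂⁺,l⁺)) ≤ σ̃·𝒱((x,l),(x̂,l)) + ε̃, with σ̃ = max{e^{−κ_cτ}, κ_d} < 1, ρ̃_u = 0,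 and ε̃ = γ̂(η). -/
open Set Metric MeasureTheory Filter Real
open scoped NNReal Topology


/-- A locally Lipschitz real-valued function is Lipschitz on every compact set. -/
lemma locLip_lipschitzOnWith {X : Type*} [MetricSpace X] {f : X → ℝ}
    (hf : LocallyLipschitz f) {s : Set X} (hs : IsCompact s) :
    ∃ K : ℝ≥0, LipschitzOnWith K f s := by
  rcases s.eq_empty_or_nonempty with rfl | hne
  · exact ⟨0, by simp⟩
  -- local data
  have hloc : ∀ x : X, ∃ (K : ℝ≥0) (ε : ℝ), 0 < ε ∧ LipschitzOnWith K f (ball x (2 * ε)) := by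
    intro x
    obtain ⟨K, t, ht, hK⟩ := hf x
    obtain ⟨δ, hδ, hb⟩ := Metric.mem_nhds_iff.1 ht
    exact ⟨K, δ / 2, by linarith, (hK.mono ((ball_subset_ball (by linarith)).trans hb))⟩
  choose Kf εf hεf hKf using hloc
  -- finite subcover
  obtain ⟨t, hts, hcov⟩ := hs.elim_nhds_subcover (fun x => ball x (εf x))
    (fun x _ => ball_mem_nhds x (hεf x))
  have htne : t.Nonempty := by
    rcases hne with ⟨p, hp⟩
    rcases mem_iUnion₂.1 (hcov hp) with ⟨x, hx, _⟩
    exact ⟨x, hx⟩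
  set εm : ℝ := t.inf' htne εf with hεm
  have hεm0 : 0 < εm := by
    rw [hεm, Finset.lt_inf'_iff]
    exact fun x _ => hεf x
  set Km : ℝ≥0 := t.sup' htne Kf with hKm
  -- bound on f on s
  obtain ⟨M, hM⟩ : ∃ M, ∀ p ∈ s, |f p| ≤ M := by
    obtain ⟨r, hr⟩ := (hs.image hf.continuous).isBounded.subset_closedBall 0
    exact ⟨r, fun p hp => by
      simpa [Real.dist_eq] using mem_closedBall.1 (hr (Set.mem_image_of_mem f hp))⟩
  have hM0 : 0 ≤ M := by
    rcases hne with ⟨p, hp⟩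
    exact le_trans (abs_nonneg _) (hM p hp)
  set Kr : ℝ := (Km : ℝ) + 2 * M / εm + 1 with hKr
  have hKr0 : 0 ≤ Kr := by positivity
  refine ⟨Kr.toNNReal, LipschitzOnWith.of_dist_le_mul fun p hp q hq => ?_⟩
  rw [Real.coe_toNNReal _ hKr0]
  rcases lt_or_ge (dist p q) εm with hlt | hge
  · -- close points: inside one chart
    rcases mem_iUnion₂.1 (hcov hp) with ⟨x, hx, hpx⟩
    have hqx : q ∈ ball x (2 * εf x) := by
      have h1 : εm ≤ εf x := Finset.inf'_le _ hx
      have := mem_ball.1 hpx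
      have : dist q x < 2 * εf x := by
        calc dist q x ≤ dist q p + dist p x := dist_triangle _ _ _
        _ < εm + εf x := by rw [dist_comm q p]; exact add_lt_add hlt this
        _ ≤ 2 * εf x := by linarith
      exact mem_ball.2 this
    have hpx' : p ∈ ball x (2 * εf x) :=
      mem_ball.2 (lt_of_lt_of_le (mem_ball.1 hpx) (by have := hεf x; linarith))
    have := (hKf x).dist_le_mul p hpx' q hqx
    calc dist (f p) (f q) ≤ (Kf x : ℝ) * dist p q := this
      _ ≤ Kr * dist p q := by
        apply mul_le_mul_of_nonneg_right _ dist_nonneg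
        have h1 : (Kf x : ℝ) ≤ (Km : ℝ) := NNReal.coe_le_coe.2 (Finset.le_sup' Kf hx)
        have h2 : 0 ≤ 2 * M / εm := by positivity
        rw [hKr]; linarith
  · -- far points: use the bound
    have : dist (f p) (f q) ≤ 2 * M := by
      rw [Real.dist_eq]
      calc |f p - f q| ≤ |f p| + |f q| := abs_sub _ _
        _ ≤ 2 * M := by have := hM p hp; have := hM q hq; linarith
    calc dist (f p) (f q) ≤ 2 * M := this
      _ = 2 * M / εm * εm := by field_simp
      _ ≤ 2 * M / εm * dist p q := by
        apply mul_le_mul_of_nonneg_left hge (by positivity)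
      _ ≤ Kr * dist p q := by
        apply mul_le_mul_of_nonneg_right _ dist_nonneg
        have : (0:ℝ) ≤ (Km : ℝ) := (Km : ℝ≥0).coe_nonneg
        linarith



/-- 1-D comparison: a Lipschitz function whose derivative is `≤ M` a.e. on `[0,h]`
satisfies `ψ h - ψ 0 ≤ M * h`. -/
lemma lip_ae_deriv_le {ψ : ℝ → ℝ} {K : ℝ≥0} (hLip : LipschitzWith K ψ)
    {S : Set ℝ} {h M : ℝ} (hh : 0 < h)
    (hS : volume (Icc 0 h \ S) = 0)
    (hd : ∀ s ∈ S ∩ Icc 0 h, ∃ d, HasDerivAt ψ d s ∧ d ≤ M) :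
    ψ h - ψ 0 ≤ M * h := by
  have key : ∀ ε > (0:ℝ), ∀ ε' > (0:ℝ), ψ h - ψ 0 ≤ M * h + ((K:ℝ) + |M| + 1) * ε' + ε * h := by
    intro ε hε ε' hε'
    obtain ⟨G, hGsub, hGopen, hGm⟩ :=
      Set.exists_isOpen_lt_of_lt (Icc 0 h \ S) (ENNReal.ofReal ε')
        (by rw [hS]; exact ENNReal.ofReal_pos.2 hε')
    set C : ℝ := (K:ℝ) + |M| + 1 with hC
    have hC0 : 0 < C := by positivity
    set u : ℝ → ℝ := fun t => (volume (G ∩ Ioc 0 t)).toReal with hu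
    have humeas : ∀ t, volume (G ∩ Ioc 0 t) ≠ ⊤ :=
      fun t => (lt_of_le_of_lt (measure_mono inter_subset_left)
        (lt_of_lt_of_le hGm le_top)).ne
    have humono : ∀ {a b : ℝ}, a ≤ b → u a ≤ u b := by
      intro a b hab
      exact ENNReal.toReal_mono (humeas b)
        (measure_mono (inter_subset_inter_right _ (Ioc_subset_Ioc_right hab)))
    have huub : ∀ {b : ℝ}, 0 ≤ b → u b ≤ b := by
      intro b hb
      have : volume (G ∩ Ioc 0 b) ≤ ENNReal.ofReal b := by
        have h0 : volume (G ∩ Ioc 0 b) ≤ volume (Ioc (0:ℝ) b) := measure_mono inter_subset_right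
        rwa [Real.volume_Ioc, sub_zero] at h0
      simpa [hu, ENNReal.toReal_ofReal hb] using ENNReal.toReal_mono ENNReal.ofReal_ne_top this
    have hu0 : u 0 = 0 := by simp [hu]
    have huneg : ∀ {a : ℝ}, a ≤ 0 → u a = 0 := by
      intro a ha
      simp only [hu]
      rw [Ioc_eq_empty (by simpa using ha), inter_empty, measure_empty, ENNReal.toReal_zero]
    have huadd : ∀ {a b : ℝ}, a ≤ b → u b - u a ≤ b - a := by
      intro a b hab
      rcases le_or_gt 0 a with ha | ha
      · have hsplit : G ∩ Ioc 0 b ⊆ (G ∩ Ioc 0 a) ∪ Ioc a b := by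
          rintro w ⟨hwG, hw0, hwb⟩
          rcases le_or_gt w a with hwa | hwa
          · exact Or.inl ⟨hwG, hw0, hwa⟩
          · exact Or.inr ⟨hwa, hwb⟩
        have h3 : volume (G ∩ Ioc 0 b) ≤ volume (G ∩ Ioc 0 a) + ENNReal.ofReal (b - a) := by
          rw [← Real.volume_Ioc]
          exact le_trans (measure_mono hsplit)
            (measure_union_le (μ := (volume : Measure ℝ)) _ _)
        have h4 := ENNReal.toReal_mono
          (ENNReal.add_ne_top.2 ⟨humeas a, ENNReal.ofReal_ne_top⟩) h3
        rw [ENNReal.toReal_add (humeas a) ENNReal.ofReal_ne_top,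
          ENNReal.toReal_ofReal (by linarith)] at h4
        simp only [hu] at *
        linarith
      · rcases le_or_gt b 0 with hb | hb
        · rw [huneg ha.le, huneg hb]; linarith
        · rw [huneg ha.le]; have := huub hb.le; linarith
    have huLip : LipschitzWith 1 u := by
      refine LipschitzWith.of_dist_le_mul fun a b => ?_
      rw [NNReal.coe_one, one_mul, Real.dist_eq, Real.dist_eq]
      rcases le_total a b with hab | hab
      · rw [abs_sub_comm (u a), abs_of_nonneg (sub_nonneg.2 (humono hab)),
          abs_sub_comm a, abs_of_nonneg (sub_nonneg.2 hab)]
        exact huadd hab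
      · rw [abs_of_nonneg (sub_nonneg.2 (humono hab)), abs_of_nonneg (sub_nonneg.2 hab)]
        exact huadd hab
    -- the comparison function
    set F : ℝ → ℝ := fun t => ψ t - M * t - C * u t - ε * t with hF
    have hFcont : ContinuousOn F (Icc 0 h) :=
      (((hLip.continuous.sub (continuous_const.mul continuous_id)).sub
        (continuous_const.mul huLip.continuous)).sub
        (continuous_const.mul continuous_id)).continuousOn
    have hslope : ∀ x ∈ Ico 0 h, ∀ r : ℝ, -ε/2 < r →
        ∃ᶠ z in 𝓝[>] x, (z - x)⁻¹ * (F z - F x) < r := by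
      intro x hx r hr
      have hfreq : ∀ᶠ z in 𝓝[>] x, (z - x)⁻¹ * (F z - F x) ≤ -ε/2 := by
        by_cases hxG : x ∈ G
        · -- inside the open cover: the `u` term dominates
          obtain ⟨r₀, hr₀, hball⟩ := Metric.isOpen_iff.1 hGopen x hxG
          filter_upwards [Ioo_mem_nhdsGT_of_mem (Set.left_mem_Ico.2 (lt_add_of_pos_right x hr₀))]
            with z hz
          obtain ⟨hz1, hz2⟩ := hz
          have hzx : 0 < z - x := by linarith
          have hIoc : Ioc x z ⊆ G := by
            intro w hw
            apply hball
            rw [mem_ball, Real.dist_eq, abs_of_pos (by linarith [hw.1])]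
            · linarith [hw.2]
          -- u z - u x = z - x
          have huz : u z - u x = z - x := by
            have hdisj : Disjoint (G ∩ Ioc 0 x) (Ioc x z) := by
              refine Set.disjoint_left.2 ?_
              rintro w ⟨_, _, hwx⟩ hw2
              exact absurd hw2.1 (not_lt.2 hwx)
            have hunion : G ∩ Ioc 0 z = (G ∩ Ioc 0 x) ∪ Ioc x z := by
              ext w
              constructor
              · rintro ⟨hwG, hw0, hwz⟩
                rcases le_or_gt w x with hwx | hwx
                · exact Or.inl ⟨hwG, hw0, hwx⟩
                · exact Or.inr ⟨hwx, hwz⟩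
              · rintro (⟨hwG, hw0, hwx⟩ | ⟨hwx, hwz⟩)
                · exact ⟨hwG, hw0, le_trans hwx (by linarith)⟩
                · exact ⟨hIoc ⟨hwx, hwz⟩, by constructor <;> linarith [hx.1]⟩
            simp only [hu]
            rw [hunion, measure_union hdisj measurableSet_Ioc,
              ENNReal.toReal_add (humeas x) (by simp), Real.volume_Ioc,
              ENNReal.toReal_ofReal (by linarith)]
            ring
          have hψ : ψ z - ψ x ≤ (K:ℝ) * (z - x) := by
            have := hLip.dist_le_mul z x
            rw [Real.dist_eq, Real.dist_eq, abs_of_pos hzx] at this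
            calc ψ z - ψ x ≤ |ψ z - ψ x| := le_abs_self _
              _ ≤ (K:ℝ) * (z - x) := this
          have hFz : F z - F x ≤ (-ε/2) * (z - x) := by
            simp only [hF]
            have hM' : -(M * (z - x)) ≤ |M| * (z - x) := by
              have := neg_abs_le M
              nlinarith
            have : ψ z - ψ x - M * (z - x) - C * (u z - u x) - ε * (z - x)
                ≤ (-ε/2) * (z-x) := by
              rw [huz]
              have : C * (z - x) = ((K:ℝ) + |M| + 1) * (z - x) := by rw [hC]
              nlinarith
            nlinarith [this]
          rw [inv_mul_le_iff₀ hzx]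
          calc F z - F x ≤ -ε/2 * (z - x) := hFz
            _ = (z - x) * (-ε/2) := by ring
        · -- differentiability point
          have hxS : x ∈ S ∩ Icc 0 h := by
            rcases (em (x ∈ S)) with hxs | hxs
            · exact ⟨hxs, Ico_subset_Icc_self hx⟩
            · exact absurd (hGsub ⟨Ico_subset_Icc_self hx, hxs⟩) hxG
          obtain ⟨d, hdd, hdM⟩ := hd x hxS
          have htend : Tendsto (fun z => (z - x)⁻¹ * (ψ z - ψ x)) (𝓝[>] x) (𝓝 d) := by
            have := hasDerivAt_iff_tendsto_slope.1 hdd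
            have h2 := this.mono_left (nhdsWithin_mono x (fun z hz => ne_of_gt hz : Ioi x ⊆ {x}ᶜ))
            refine h2.congr (fun z => ?_)
            rw [slope_def_field]
            rw [div_eq_inv_mul]
          have hev1 : ∀ᶠ z in 𝓝[>] x, (z - x)⁻¹ * (ψ z - ψ x) < d + ε/4 :=
            htend.eventually (Filter.Tendsto.eventually_lt_const (by linarith) tendsto_id)
          filter_upwards [hev1, self_mem_nhdsWithin] with z hz1 hz2
          have hzx : 0 < z - x := sub_pos.2 hz2
          have huz : 0 ≤ u z - u x := sub_nonneg.2 (humono hz2.le)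
          have : F z - F x = (ψ z - ψ x) - M * (z - x) - C * (u z - u x) - ε * (z - x) := by
            simp only [hF]; ring
          rw [inv_mul_le_iff₀ hzx, this]
          have hψ' : ψ z - ψ x ≤ (d + ε/4) * (z - x) := by
            rw [inv_mul_lt_iff₀ hzx] at hz1
            linarith [hz1]
          nlinarith
      have hne : (𝓝[>] x).NeBot := by infer_instance
      exact (hfreq.mono fun z hz => lt_of_le_of_lt hz hr).frequently
    have := le_gronwallBound_of_liminf_deriv_right_le (f := F) (f' := fun _ => -ε/2)
      (δ := F 0) (K := 0) (ε := 0) (a := 0) (b := h) hFcont hslope le_rfl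
      (fun x _ => by simp only [zero_mul, zero_add]; linarith)
    have hFh := this h (Set.right_mem_Icc.2 hh.le)
    rw [gronwallBound_K0] at hFh
    simp only [hF, hu0] at hFh
    have huh : u h ≤ ε' := by
      have h2 : volume (G ∩ Ioc 0 h) ≤ ENNReal.ofReal ε' :=
        le_trans (measure_mono (Set.inter_subset_left (s := G) (t := Ioc 0 h))) hGm.le
      have h3 := ENNReal.toReal_mono ENNReal.ofReal_ne_top h2
      rw [ENNReal.toReal_ofReal hε'.le] at h3
      exact h3
    have huhnn : 0 ≤ u h := by simp only [hu]; positivity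
    have hCu : C * u h ≤ C * ε' := mul_le_mul_of_nonneg_left huh hC0.le
    simp only [mul_zero, sub_zero, zero_mul, add_zero] at hFh
    linarith [hC]
  -- pass to the limit
  refine le_of_forall_pos_le_add fun θ hθ => ?_
  have h1 := key (θ/(2*h)) (by positivity) (θ/(2*((K:ℝ) + |M| + 1))) (by positivity)
  have hC0 : (0:ℝ) < (K:ℝ) + |M| + 1 := by positivity
  have e1 : ((K:ℝ) + |M| + 1) * (θ/(2*((K:ℝ) + |M| + 1))) = θ/2 := by field_simp
  have e2 : (θ/(2*h)) * h = θ/2 := by field_simp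
  rw [e1, e2] at h1
  linarith



lemma good_directions {n : ℕ} {N : Set ((Fin n → ℝ) × (Fin n → ℝ))}
    (hNm : MeasurableSet N) (hN : volume N = 0) (v : (Fin n → ℝ) × (Fin n → ℝ)) :
    ∀ᵐ y : (Fin n → ℝ) × (Fin n → ℝ), ∀ᵐ s : ℝ, y + s • v ∉ N := by
  have hmap : Measurable fun p : ℝ × ((Fin n → ℝ) × (Fin n → ℝ)) => p.2 + p.1 • v :=
    (measurable_snd.add (measurable_fst.smul_const v))
  set S : Set (ℝ × ((Fin n → ℝ) × (Fin n → ℝ))) := (fun p : ℝ × ((Fin n → ℝ) × (Fin n → ℝ)) => p.2 + p.1 • v) ⁻¹' N with hSdef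
  have hSm : MeasurableSet S := hmap hNm
  have hS0 : (volume : Measure (ℝ × ((Fin n → ℝ) × (Fin n → ℝ)))) S = 0 := by
    rw [Measure.volume_eq_prod, Measure.prod_apply hSm]
    have : ∀ s : ℝ, (volume : Measure ((Fin n → ℝ) × (Fin n → ℝ))) (Prod.mk s ⁻¹' S) = 0 := by
      intro s
      have : Prod.mk s ⁻¹' S = (fun y : ((Fin n → ℝ) × (Fin n → ℝ)) => y + s • v) ⁻¹' N := rfl
      rw [this]
      rw [show (fun y : ((Fin n → ℝ) × (Fin n → ℝ)) => y + s • v) = (fun y : ((Fin n → ℝ) × (Fin n → ℝ)) => s • v + y) by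
        funext y; exact add_comm _ _]
      haveI : (volume : Measure ((Fin n → ℝ) × (Fin n → ℝ))).IsAddLeftInvariant := by
        rw [Measure.volume_eq_prod]; infer_instance
      rw [measure_preimage_add]
      exact hN
    simp [this]
  -- swap
  have hS'm : MeasurableSet ((fun p : ((Fin n → ℝ) × (Fin n → ℝ)) × ℝ => p.1 + p.2 • v) ⁻¹' N) :=
    (measurable_fst.add (measurable_snd.smul_const v)) hNm
  have hS'0 : (volume : Measure (((Fin n → ℝ) × (Fin n → ℝ)) × ℝ)) ((fun p : ((Fin n → ℝ) × (Fin n → ℝ)) × ℝ => p.1 + p.2 • v) ⁻¹' N) = 0 := by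
    have hswap : (fun p : ((Fin n → ℝ) × (Fin n → ℝ)) × ℝ => p.1 + p.2 • v) ⁻¹' N = Prod.swap ⁻¹' S := rfl
    rw [Measure.volume_eq_prod, hswap, ← Measure.map_apply measurable_swap hSm,
      Measure.prod_swap, ← Measure.volume_eq_prod]
    exact hS0
  have := measure_eq_zero_iff_ae_notMem.1 hS'0
  have h2 : ∀ᵐ p : ((Fin n → ℝ) × (Fin n → ℝ)) × ℝ, p.1 + p.2 • v ∉ N := this
  rw [Measure.volume_eq_prod] at h2
  exact Measure.ae_ae_of_ae_prod h2

set_option maxHeartbeats 1000000 in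
lemma flow_decay {n : ℕ} (V : ((Fin n → ℝ) × (Fin n → ℝ)) → ℝ) (hVl : LocallyLipschitz V)
    (F : ((Fin n → ℝ) × (Fin n → ℝ)) → ((Fin n → ℝ) × (Fin n → ℝ))) (hFc : Continuous F)
    (κ : ℝ) (hκ : 0 < κ)
    (hder : ∀ z, DifferentiableAt ℝ V z → fderiv ℝ V z (F z) ≤ -κ * V z)
    (c : ℝ → (Fin n → ℝ) × (Fin n → ℝ)) (hc : ∀ t, HasDerivAt c (F (c t)) t)
    (τ : ℝ) (hτ : 0 < τ) :
    V (c τ) ≤ Real.exp (-κ * τ) * V (c 0) := by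
  have hccont : Continuous c := continuous_iff_continuousAt.2 fun t => (hc t).continuousAt
  set A : Set ((Fin n → ℝ) × (Fin n → ℝ)) := c '' Icc 0 τ with hA
  have hAcomp : IsCompact A := isCompact_Icc.image hccont
  obtain ⟨R, hR⟩ := hAcomp.isBounded.subset_closedBall 0
  have hz00 : c 0 ∈ A := ⟨0, by simp [hτ.le], rfl⟩
  have hR0 : 0 ≤ R := le_trans (norm_nonneg (c 0))
    (by simpa [dist_zero_right] using mem_closedBall.1 (hR hz00))
  set B : Set ((Fin n → ℝ) × (Fin n → ℝ)) := closedBall 0 (R + 2) with hB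
  have hBcomp : IsCompact B := isCompact_closedBall _ _
  obtain ⟨K, hK⟩ := locLip_lipschitzOnWith hVl hBcomp
  obtain ⟨Vt, hVtLip, hVtEq⟩ := hK.extend_real
  have hAB : A ⊆ B := hR.trans (closedBall_subset_closedBall (by linarith))
  set Kr : ℝ := (K : ℝ) with hKr
  have hKr0 : 0 ≤ Kr := K.coe_nonneg
  -- global Lipschitz bound for `Vt` in terms of norms
  have hVtlip : ∀ a b, Vt a - Vt b ≤ Kr * ‖a - b‖ := by
    intro a b
    have := hVtLip.dist_le_mul a b
    rw [Real.dist_eq, dist_eq_norm] at this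
    exact le_trans (le_abs_self _) this
  -- transfer between `V` and `Vt`
  have hmem : ∀ w : (Fin n → ℝ) × (Fin n → ℝ), ‖w‖ < R + 2 → w ∈ B := by
    intro w hw; simp [hB, mem_closedBall, dist_zero_right, hw.le]
  have htrans : ∀ w : (Fin n → ℝ) × (Fin n → ℝ), ‖w‖ < R + 2 → DifferentiableAt ℝ Vt w →
      DifferentiableAt ℝ V w ∧ fderiv ℝ V w = fderiv ℝ Vt w := by
    intro w hw hdiff
    have hev : V =ᶠ[𝓝 w] Vt := by
      have : ball (0 : (Fin n → ℝ) × (Fin n → ℝ)) (R + 2) ∈ 𝓝 w :=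
        isOpen_ball.mem_nhds (by simpa [mem_ball, dist_zero_right] using hw)
      filter_upwards [this] with a ha
      exact hVtEq (ball_subset_closedBall ha)
    exact ⟨hev.differentiableAt_iff.2 hdiff, hev.fderiv_eq⟩
  -- the differentiability set of the extension
  haveI : (volume : Measure ((Fin n → ℝ) × (Fin n → ℝ))).IsAddHaarMeasure :=
    Measure.prod.instIsAddHaarMeasure _ _
  have hD : ∀ᵐ y : (Fin n → ℝ) × (Fin n → ℝ), DifferentiableAt ℝ Vt y :=
    hVtLip.ae_differentiableAt
  set N : Set ((Fin n → ℝ) × (Fin n → ℝ)) := {y | ¬ DifferentiableAt ℝ Vt y} with hN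
  have hNm : MeasurableSet N := (measurableSet_of_differentiableAt ℝ Vt).compl
  have hN0 : volume N = 0 := by rw [hN]; exact ae_iff.1 hD
  set W : ℝ → ℝ := fun t => V (c t) with hW
  have hWcont : ContinuousOn W (Icc 0 τ) := (hVl.continuous.comp hccont).continuousOn
  -- main Gronwall estimate for every ε > 0
  have main : ∀ ε : ℝ, 0 < ε → W τ ≤ gronwallBound (W 0) (-κ) ε τ := by
    intro ε hε
    have hslope : ∀ t ∈ Ico 0 τ, ∀ r : ℝ, -κ * W t + ε < r →
        ∃ᶠ z in 𝓝[>] t, (z - t)⁻¹ * (W z - W t) < r := by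
      intro t ht r hr
      have hkey : ∀ᶠ z in 𝓝[>] t, (z - t)⁻¹ * (W z - W t) ≤ -κ * W t + ε := by
        set z₀ : (Fin n → ℝ) × (Fin n → ℝ) := c t with hz₀
        have hz₀A : z₀ ∈ A := ⟨t, Ico_subset_Icc_self ht, rfl⟩
        have hz₀R : ‖z₀‖ ≤ R := by
          simpa [dist_zero_right] using mem_closedBall.1 (hR hz₀A)
        set v : (Fin n → ℝ) × (Fin n → ℝ) := F z₀ with hv
        set ε₁ : ℝ := ε / (4 * (Kr + 1)) with hε₁def
        have hε₁ : 0 < ε₁ := by positivity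
        obtain ⟨r₁, hr₁, hFr₁⟩ := Metric.continuous_iff.1 hFc z₀ ε₁ hε₁
        set r₂ : ℝ := ε / (4 * (κ * Kr + 1)) with hr₂def
        have hr₂ : 0 < r₂ := by positivity
        set rmin : ℝ := min 1 (min r₁ r₂) with hrmin
        have hrmin0 : 0 < rmin := by
          simp only [hrmin, lt_min_iff]
          exact ⟨one_pos, hr₁, hr₂⟩
        set h₀ : ℝ := rmin / (‖v‖ + 2) with hh₀
        have hh₀0 : 0 < h₀ := by positivity
        have hlo := Asymptotics.isLittleO_iff.mp (hasDerivAt_iff_isLittleO.1 (hc t)) hε₁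
        have hlo' : ∀ᶠ z in 𝓝[>] t, ‖c z - c t - (z - t) • v‖ ≤ ε₁ * ‖z - t‖ :=
          hlo.filter_mono nhdsWithin_le_nhds
        have hmem1 : Ioo t (min τ (t + h₀)) ∈ 𝓝[>] t :=
          Ioo_mem_nhdsGT_of_mem (Set.left_mem_Ico.2 (lt_min ht.2 (lt_add_of_pos_right t hh₀0)))
        filter_upwards [hmem1, hlo'] with z hz hzlo
        set h : ℝ := z - t with hhdef
        have hh : 0 < h := sub_pos.2 hz.1
        have hzτ : z ≤ τ := (lt_of_lt_of_le hz.2 (min_le_left _ _)).le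
        have hhh₀ : h < h₀ := by
          have := hz.2
          have h2 : z < t + h₀ := lt_of_lt_of_le this (min_le_right _ _)
          simp only [hhdef]; linarith
        have hgeo : ∀ w : (Fin n → ℝ) × (Fin n → ℝ), ‖w - z₀‖ ≤ h * (‖v‖ + 2) →
            ‖w‖ < R + 2 ∧ dist w z₀ < r₁ ∧ ‖w - z₀‖ ≤ r₂ := by
          intro w hwd
          have h1 : h * (‖v‖ + 2) < h₀ * (‖v‖ + 2) := by
            apply mul_lt_mul_of_pos_right hhh₀ (by positivity)
          have h2 : h₀ * (‖v‖ + 2) = rmin := by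
            rw [hh₀]; field_simp
          have h3 : ‖w - z₀‖ < rmin := lt_of_le_of_lt hwd (by rw [← h2]; exact h1)
          have h4 : rmin ≤ 1 := min_le_left _ _
          have h5 : rmin ≤ r₁ := le_trans (min_le_right _ _) (min_le_left _ _)
          have h6 : rmin ≤ r₂ := le_trans (min_le_right _ _) (min_le_right _ _)
          refine ⟨?_, ?_, by linarith⟩
          · calc ‖w‖ ≤ ‖z₀‖ + ‖w - z₀‖ := by
                  have := norm_add_le (w - z₀) z₀
                  simpa [sub_add_cancel, add_comm] using this
              _ < R + 2 := by linarith
          · rw [dist_eq_norm]; linarith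
        -- choose a good base point y
        set δy : ℝ := min h (ε * h / (8 * (Kr + 1))) with hδydef
        have hδy : 0 < δy := by
          simp only [hδydef, lt_min_iff]
          constructor
          · exact hh
          · positivity
        have hGood := good_directions hNm hN0 v
        obtain ⟨y, hyball, hyGood⟩ : ∃ y ∈ ball z₀ δy, ∀ᵐ s : ℝ, y + s • v ∉ N := by
          by_contra hcon
          push_neg at hcon
          have hsub : ball z₀ δy ⊆ {y | ¬ ∀ᵐ s : ℝ, y + s • v ∉ N} :=
            fun y hy => hcon y hy
          have h0 : volume (ball z₀ δy) = 0 :=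
            measure_mono_null hsub (ae_iff.1 hGood)
          exact absurd h0 (measure_ball_pos volume z₀ hδy).ne'
        have hyz₀ : ‖y - z₀‖ < δy := by
          rw [← dist_eq_norm]; exact mem_ball.1 hyball
        set ψ : ℝ → ℝ := fun s => Vt (y + s • v) with hψ
        have hlin : LipschitzWith ‖v‖₊ (fun s : ℝ => y + s • v) := by
          refine LipschitzWith.of_dist_le_mul fun a b => ?_
          rw [dist_eq_norm, Real.dist_eq]
          have : y + a • v - (y + b • v) = (a - b) • v := by
            rw [sub_smul]; abel
          rw [this, norm_smul, Real.norm_eq_abs, coe_nnnorm]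
          ring_nf
          exact le_rfl
        have hψLip : LipschitzWith (K * ‖v‖₊) ψ := hVtLip.comp hlin
        set S : Set ℝ := {s | DifferentiableAt ℝ Vt (y + s • v)} with hSdef
        have hSnull : volume (Icc 0 h \ S) = 0 := by
          refine measure_mono_null ?_ (ae_iff.1 hyGood)
          intro s hs
          exact not_not_intro hs.2
        set M : ℝ := -κ * W t + ε / 2 with hM
        have hwdist : ∀ s ∈ Icc (0:ℝ) h, ‖(y + s • v) - z₀‖ ≤ h * (‖v‖ + 2) := by
          intro s hs
          have h1 : ‖(y + s • v) - z₀‖ ≤ ‖y - z₀‖ + ‖s • v‖ := by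
            have : (y + s • v) - z₀ = (y - z₀) + s • v := by abel
            rw [this]; exact norm_add_le _ _
          have h2 : ‖s • v‖ = |s| * ‖v‖ := by rw [norm_smul, Real.norm_eq_abs]
          have h3 : |s| ≤ h := by
            rw [abs_of_nonneg hs.1]; exact hs.2
          have h4 : ‖y - z₀‖ ≤ h := le_trans hyz₀.le (min_le_left _ _)
          have h5 : |s| * ‖v‖ ≤ h * ‖v‖ := mul_le_mul_of_nonneg_right h3 (norm_nonneg v)
          nlinarith [norm_nonneg v]
        have hde : ∀ s ∈ S ∩ Icc 0 h, ∃ d, HasDerivAt ψ d s ∧ d ≤ M := by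
          rintro s ⟨hsS, hsI⟩
          set w : (Fin n → ℝ) × (Fin n → ℝ) := y + s • v with hw
          have hwg := hgeo w (hwdist s hsI)
          have hwdiff : DifferentiableAt ℝ Vt w := hsS
          have hℓ : HasDerivAt (fun s : ℝ => y + s • v) v s := by
            have h1 : HasDerivAt (fun s : ℝ => s • v) ((1:ℝ) • v) s :=
              (hasDerivAt_id s).smul_const v
            rw [one_smul] at h1
            exact h1.const_add y
          refine ⟨fderiv ℝ Vt w v, hwdiff.hasFDerivAt.comp_hasDerivAt s hℓ, ?_⟩
          -- bound the derivative
          obtain ⟨hVdiff, hfde⟩ := htrans w hwg.1 hwdiff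
          have hsplit : fderiv ℝ Vt w v = fderiv ℝ Vt w (F w) + fderiv ℝ Vt w (v - F w) := by
            rw [← ContinuousLinearMap.map_add]
            congr 1
            abel
          have hterm2 : fderiv ℝ Vt w (v - F w) ≤ Kr * ε₁ := by
            have h1 : fderiv ℝ Vt w (v - F w) ≤ ‖fderiv ℝ Vt w (v - F w)‖ := le_abs_self _
            have h2 : ‖fderiv ℝ Vt w (v - F w)‖ ≤ ‖fderiv ℝ Vt w‖ * ‖v - F w‖ :=
              (fderiv ℝ Vt w).le_opNorm _
            have h3 : ‖fderiv ℝ Vt w‖ ≤ Kr := norm_fderiv_le_of_lipschitz ℝ hVtLip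
            have h4 : ‖v - F w‖ ≤ ε₁ := by
              have := hFr₁ w hwg.2.1
              rw [dist_eq_norm] at this
              calc ‖v - F w‖ = ‖F w - v‖ := norm_sub_rev _ _
                _ ≤ ε₁ := this.le
            calc fderiv ℝ Vt w (v - F w) ≤ ‖fderiv ℝ Vt w‖ * ‖v - F w‖ := le_trans h1 h2
              _ ≤ Kr * ε₁ := mul_le_mul h3 h4 (norm_nonneg _) hKr0
          have hterm1 : fderiv ℝ Vt w (F w) ≤ -κ * V w := by
            rw [← hfde]
            exact hder w hVdiff
          have hVwz : -κ * V w ≤ -κ * W t + ε / 4 := by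
            have hwB : w ∈ B := hmem w hwg.1
            have hz₀B : z₀ ∈ B := hAB hz₀A
            have h1 : V w - V z₀ ≤ Kr * ‖w - z₀‖ := by
              rw [hVtEq hwB, hVtEq hz₀B]
              exact hVtlip _ _
            have h2 : V z₀ - V w ≤ Kr * ‖w - z₀‖ := by
              rw [hVtEq hwB, hVtEq hz₀B]
              have := hVtlip z₀ w
              rwa [norm_sub_rev] at this
            have h3 : Kr * ‖w - z₀‖ ≤ Kr * r₂ := mul_le_mul_of_nonneg_left hwg.2.2 hKr0
            have hr₂eq : r₂ * (4 * (κ * Kr + 1)) = ε := by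
              rw [hr₂def]; field_simp
            have h4 : κ * (Kr * r₂) ≤ ε / 4 := by
              nlinarith [hr₂eq, hr₂.le, hκ.le, hKr0]
            have h5 : W t = V z₀ := rfl
            nlinarith [hκ.le]
          have hε₁eq : ε₁ * (4 * (Kr + 1)) = ε := by
            rw [hε₁def]; field_simp
          have hKrε₁ : Kr * ε₁ ≤ ε / 4 := by
            nlinarith [hε₁eq, hε₁.le, hKr0]
          rw [hsplit, hM]
          linarith
        have hψbound := lip_ae_deriv_le hψLip hh hSnull hde
        -- assemble the slope bound
        have hcz : c z ∈ B := hAB ⟨z, ⟨by linarith [ht.1, hz.1], hzτ⟩, rfl⟩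
        have hz₀B : z₀ ∈ B := hAB hz₀A
        have he0 : W z - W t = Vt (c z) - Vt z₀ := by
          simp only [hW]
          rw [hVtEq hcz, hVtEq hz₀B]
        have hlonorm : ‖c z - (z₀ + h • v)‖ ≤ ε₁ * h := by
          have : c z - (z₀ + h • v) = c z - c t - (z - t) • v := by
            simp only [hz₀, hhdef]; abel
          rw [this]
          calc ‖c z - c t - (z - t) • v‖ ≤ ε₁ * ‖z - t‖ := hzlo
            _ = ε₁ * h := by rw [Real.norm_eq_abs, abs_of_pos hh]
        have he1 : Vt (c z) - Vt (z₀ + h • v) ≤ Kr * (ε₁ * h) := by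
          calc Vt (c z) - Vt (z₀ + h • v) ≤ Kr * ‖c z - (z₀ + h • v)‖ := hVtlip _ _
            _ ≤ Kr * (ε₁ * h) := mul_le_mul_of_nonneg_left hlonorm hKr0
        have he2 : Vt (z₀ + h • v) - Vt (y + h • v) ≤ Kr * δy := by
          calc Vt (z₀ + h • v) - Vt (y + h • v) ≤ Kr * ‖(z₀ + h • v) - (y + h • v)‖ :=
                hVtlip _ _
            _ ≤ Kr * δy := by
                apply mul_le_mul_of_nonneg_left _ hKr0
                have : (z₀ + h • v) - (y + h • v) = z₀ - y := by abel
                rw [this, norm_sub_rev]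
                exact hyz₀.le
        have he3 : Vt (y + h • v) - Vt y ≤ M * h := by
          have h1 : ψ h = Vt (y + h • v) := rfl
          have h2 : ψ 0 = Vt y := by simp [hψ]
          rw [← h1, ← h2]
          exact hψbound
        have he4 : Vt y - Vt z₀ ≤ Kr * δy := by
          calc Vt y - Vt z₀ ≤ Kr * ‖y - z₀‖ := hVtlip _ _
            _ ≤ Kr * δy := mul_le_mul_of_nonneg_left hyz₀.le hKr0
        have hKrδy : Kr * δy ≤ ε / 8 * h := by
          have h1 : δy ≤ ε * h / (8 * (Kr + 1)) := min_le_right _ _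
          have h2 : Kr * δy ≤ Kr * (ε * h / (8 * (Kr + 1))) :=
            mul_le_mul_of_nonneg_left h1 hKr0
          have hdqeq : (ε * h / (8 * (Kr + 1))) * (8 * (Kr + 1)) = ε * h := by field_simp
          have hdq : (0:ℝ) ≤ ε * h / (8 * (Kr + 1)) := by positivity
          nlinarith [hdqeq, hdq, hKr0]
        have hKrε₁h : Kr * (ε₁ * h) ≤ ε / 4 * h := by
          have hε₁eq : ε₁ * (4 * (Kr + 1)) = ε := by
            rw [hε₁def]; field_simp
          have : Kr * ε₁ ≤ ε / 4 := by
            nlinarith [hε₁eq, hε₁.le, hKr0]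
          nlinarith [hh.le]
        have htotal : W z - W t ≤ (-κ * W t + ε) * h := by
          have : W z - W t = (Vt (c z) - Vt (z₀ + h • v)) + (Vt (z₀ + h • v) - Vt (y + h • v))
              + (Vt (y + h • v) - Vt y) + (Vt y - Vt z₀) := by
            rw [he0]; ring
          rw [this]
          have hM' : M * h = (-κ * W t + ε/2) * h := by rw [hM]
          have hexp : (-κ * W t + ε) * h
              = (-κ * W t + ε/2) * h + ε / 4 * h + ε / 8 * h + ε / 8 * h := by ring
          calc Vt (c z) - Vt (z₀ + h • v) + (Vt (z₀ + h • v) - Vt (y + h • v))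
              + (Vt (y + h • v) - Vt y) + (Vt y - Vt z₀)
              ≤ Kr * (ε₁ * h) + Kr * δy + M * h + Kr * δy := by
                linarith [he1, he2, he3, he4]
            _ ≤ ε / 4 * h + ε / 8 * h + M * h + ε / 8 * h := by
                linarith [hKrδy, hKrε₁h]
            _ = M * h + (ε / 4 * h + ε / 8 * h + ε / 8 * h) := by ring
            _ ≤ (-κ * W t + ε) * h := by
                rw [hM']; linarith [hexp]
        rw [inv_mul_le_iff₀ hh]
        calc W z - W t ≤ (-κ * W t + ε) * h := htotal
          _ = h * (-κ * W t + ε) := by ring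
      exact (hkey.mono fun z hz => lt_of_le_of_lt hz hr).frequently
    have := le_gronwallBound_of_liminf_deriv_right_le (f := W)
      (f' := fun t => -κ * W t + ε) (δ := W 0) (K := -κ) (ε := ε) (a := 0) (b := τ)
      hWcont hslope le_rfl (fun x _ => le_rfl)
    simpa using this τ (Set.right_mem_Icc.2 hτ.le)
  -- let ε → 0
  have hKne : -κ ≠ 0 := by linarith
  have hgb : ∀ ε : ℝ, 0 < ε →
      W τ ≤ W 0 * Real.exp (-κ * τ) + ε / (-κ) * (Real.exp (-κ * τ) - 1) := by
    intro ε hε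
    have := main ε hε
    rwa [gronwallBound_of_K_ne_0 hKne] at this
  have hCc : 0 ≤ (Real.exp (-κ * τ) - 1) / (-κ) := by
    have h1 : Real.exp (-κ * τ) ≤ 1 := by
      rw [Real.exp_le_one_iff]
      nlinarith
    exact div_nonneg_iff.2 (Or.inr ⟨by linarith, by linarith⟩)
  have final : W τ ≤ W 0 * Real.exp (-κ * τ) := by
    refine le_of_forall_pos_le_add fun θ hθ => ?_
    set Cc : ℝ := (Real.exp (-κ * τ) - 1) / (-κ) with hCcdef
    rcases eq_or_lt_of_le hCc with hC0 | hC0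
    · have := hgb 1 one_pos
      have he : (1:ℝ) / (-κ) * (Real.exp (-κ * τ) - 1) = Cc := by
        rw [hCcdef]; ring
      rw [he, ← hC0] at this
      linarith
    · have := hgb (θ / Cc) (by positivity)
      have he : θ / Cc / (-κ) * (Real.exp (-κ * τ) - 1) = θ / Cc * Cc := by
        rw [hCcdef]; ring
      rw [he, div_mul_cancel₀ _ (ne_of_gt hC0)] at this
      linarith
  calc V (c τ) = W τ := rfl
    _ ≤ W 0 * Real.exp (-κ * τ) := final
    _ = Real.exp (-κ * τ) * V (c 0) := by rw [hW]; ring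

/-- case `κc > 0`, `0 < κd < 1` of the main theorem: under Assumptions 1
and 2, `𝒱((x,l),(x̂,l)) = V(x,x̂)` is an alternating simulation function from the symbolic
model `T̂_τ(Σ)` to `T_τ(Σ)`: (i) `α₁(‖x-x̂‖) ≤ V(x,x̂)`; and (ii) for every `û ∈ [𝕌]_μ`,
choosing the input `ν(·) = û` for `T_τ(Σ)`, every transition of `T_τ(Σ)` is matched by a
symbolic transition with `V(x⁺,x̂⁺) ≤ σ̃ V(x,x̂) + ε̃`, where
`σ̃ = max(e^{-κc τ}, κd) < 1`, `ρ̃_u = 0`, and `ε̃ = γ̂(η)`.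
The continuous flow is represented by `φ x u ·`, the unique solution of `ẋ = f(x,u)`
from `x` under the constant input `u`, so that `𝐱_{x,û}(τ⁻) = φ x û τ`. -/
theorem stmt14 {n m : ℕ} (𝕌 : Set (Fin m → ℝ))
    (f g : (Fin n → ℝ) → (Fin m → ℝ) → (Fin n → ℝ))
    (hf : LocallyLipschitz fun p : (Fin n → ℝ) × (Fin m → ℝ) => f p.1 p.2)
    (hg : LocallyLipschitz fun p : (Fin n → ℝ) × (Fin m → ℝ) => g p.1 p.2)
    (τ : ℝ) (hτ : 0 < τ) (p₁ p₂ : ℕ) (hp₁ : 1 ≤ p₁) (hp : p₁ ≤ p₂)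
    (η μ : ℝ) (hη : 0 < η) (hμ : 0 ≤ μ)
    (φ : (Fin n → ℝ) → (Fin m → ℝ) → ℝ → (Fin n → ℝ))
    (hφ0 : ∀ x u, φ x u 0 = x)
    (hφ : ∀ x u, u ∈ 𝕌 → ∀ t : ℝ, HasDerivAt (φ x u) (f (φ x u t) u) t)
    (V : (Fin n → ℝ) × (Fin n → ℝ) → ℝ)
    (hVl : LocallyLipschitz V) (hVnn : ∀ p, 0 ≤ V p)
    (α₁ α₂ ρc ρd γ : ℝ → ℝ)
    (hα₁ : KInf α₁) (hα₂ : KInf α₂) (hρc : KInf ρc) (hρd : KInf ρd) (hγ : KInf γ)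
    (κc κd : ℝ) (hκc : 0 < κc) (hκd0 : 0 < κd) (hκd1 : κd < 1)
    (hc1 : ∀ x x' : Fin n → ℝ, α₁ ‖x - x'‖ ≤ V (x, x') ∧ V (x, x') ≤ α₂ ‖x - x'‖)
    (hc2 : ∀ (x x' : Fin n → ℝ) (u u' : Fin m → ℝ), u ∈ 𝕌 → u' ∈ 𝕌 →
      DifferentiableAt ℝ V (x, x') →
      fderiv ℝ V (x, x') (f x u, f x' u') ≤ -κc * V (x, x') + ρc ‖u - u'‖)
    (hc3 : ∀ (x x' : Fin n → ℝ) (u u' : Fin m → ℝ), u ∈ 𝕌 → u' ∈ 𝕌 →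
      V (g x u, g x' u') ≤ κd * V (x, x') + ρd ‖u - u'‖)
    (htri : ∀ x y z : Fin n → ℝ, V (x, y) ≤ V (x, z) + γ ‖y - z‖) :
    let σ : ℝ := max (Real.exp (-(κc * τ))) κd
    let grid : Set (Fin n → ℝ) := {a | ∀ i, ∃ k : ℤ, a i = (k : ℝ) * η}
    -- the input grid `Û = [𝕌]_μ` (with `[𝕌]₀ = 𝕌`)
    let Uhat : Set (Fin m → ℝ) := {u | u ∈ 𝕌 ∧ (μ = 0 ∨ ∀ i, ∃ k : ℤ, u i = (k : ℝ) * μ)}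
    σ < 1 ∧
    -- condition (i)
    (∀ (x x' : Fin n → ℝ) (l : ℕ), l ≤ p₂ → α₁ ‖x - x'‖ ≤ V (x, x')) ∧
    -- condition (ii), with the input of `T_τ(Σ)` chosen as `ν(·) = û` and `ρ̃_u = 0`
    (∀ (x x' : Fin n → ℝ) (l : ℕ), l ≤ p₂ → x' ∈ grid → ∀ uh ∈ Uhat,
      ∀ (xp : Fin n → ℝ) (lp : ℕ),
        -- transitions of `T_τ(Σ)`: flow scenario or jump scenario
        ((l < p₂ ∧ xp = φ x uh τ ∧ lp = l + 1) ∨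
         (p₁ ≤ l ∧ l ≤ p₂ ∧ xp = g x uh ∧ lp = 0)) →
        -- matched by a transition of the symbolic model `T̂_τ(Σ)`
        ∃ x'p : Fin n → ℝ, x'p ∈ grid ∧
          ((l < p₂ ∧ ‖x'p - φ x' uh τ‖ ≤ η ∧ lp = l + 1) ∨
           (p₁ ≤ l ∧ l ≤ p₂ ∧ ‖x'p - g x' uh‖ ≤ η ∧ lp = 0)) ∧
          V (xp, x'p) ≤ σ * V (x, x') + γ η) := by
  intro σ grid Uhat
  have hσexp : Real.exp (-(κc * τ)) ≤ σ := le_max_left _ _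
  have hσκd : κd ≤ σ := le_max_right _ _
  have hγmono : MonotoneOn γ (Set.Ici 0) := hγ.2.1.monotoneOn
  have hγ0 : γ 0 = 0 := hγ.2.2.1
  have hρc0 : ρc 0 = 0 := hρc.2.2.1
  have hρd0 : ρd 0 = 0 := hρd.2.2.1
  -- rounding to the grid
  have round : ∀ yt : Fin n → ℝ, ∃ xq : Fin n → ℝ, xq ∈ grid ∧ ‖xq - yt‖ ≤ η := by
    intro yt
    refine ⟨fun i => (⌊yt i / η⌋ : ℝ) * η, fun i => ⟨⌊yt i / η⌋, rfl⟩, ?_⟩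
    rw [pi_norm_le_iff_of_nonneg hη.le]
    intro i
    simp only [Pi.sub_apply]
    rw [Real.norm_eq_abs]
    have h1 : (⌊yt i / η⌋ : ℝ) ≤ yt i / η := Int.floor_le _
    have h2 : yt i / η - 1 < (⌊yt i / η⌋ : ℝ) := Int.sub_one_lt_floor _
    have h3 : yt i / η * η = yt i := div_mul_cancel₀ _ hη.ne'
    rw [abs_le]
    constructor <;> nlinarith
  refine ⟨?_, ?_, ?_⟩
  · exact max_lt (Real.exp_lt_one_iff.2 (by nlinarith)) hκd1
  · intro x x' l _
    exact (hc1 x x').1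
  · intro x x' l hl hx'grid uh hUh xp lp htrans
    obtain ⟨hu𝕌, -⟩ := hUh
    have hmatch : ∀ yt : Fin n → ℝ, V (xp, yt) ≤ σ * V (x, x') →
        ∃ xq : Fin n → ℝ, xq ∈ grid ∧ ‖xq - yt‖ ≤ η ∧ V (xp, xq) ≤ σ * V (x, x') + γ η := by
      intro yt hV
      obtain ⟨xq, hq1, hq2⟩ := round yt
      refine ⟨xq, hq1, hq2, ?_⟩
      calc V (xp, xq) ≤ V (xp, yt) + γ ‖xq - yt‖ := htri _ _ _
        _ ≤ σ * V (x, x') + γ η := by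
            have := hγmono (mem_Ici.2 (norm_nonneg (xq - yt))) (mem_Ici.2 hη.le) hq2
            linarith
    rcases htrans with ⟨hlt, hxp, hlp⟩ | ⟨hge, hle, hxp, hlp⟩
    · -- flow transition
      have hflow : V (φ x uh τ, φ x' uh τ) ≤ Real.exp (-(κc * τ)) * V (x, x') := by
        set F : ((Fin n → ℝ) × (Fin n → ℝ)) → ((Fin n → ℝ) × (Fin n → ℝ)) :=
          fun z => (f z.1 uh, f z.2 uh) with hF
        have hFc : Continuous F := by
          apply Continuous.prodMk
          · exact hf.continuous.comp (continuous_fst.prodMk continuous_const)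
          · exact hf.continuous.comp (continuous_snd.prodMk continuous_const)
        have hder : ∀ z, DifferentiableAt ℝ V z → fderiv ℝ V z (F z) ≤ -κc * V z := by
          intro z hz
          have := hc2 z.1 z.2 uh uh hu𝕌 hu𝕌 hz
          simpa [sub_self, hρc0] using this
        set c : ℝ → (Fin n → ℝ) × (Fin n → ℝ) := fun t => (φ x uh t, φ x' uh t) with hcdef
        have hcder : ∀ t, HasDerivAt c (F (c t)) t :=
          fun t => (hφ x uh hu𝕌 t).prodMk (hφ x' uh hu𝕌 t)
        have := flow_decay V hVl F hFc κc hκc hder c hcder τ hτ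
        have hc0 : c 0 = (x, x') := by simp [hcdef, hφ0]
        have hcτ : c τ = (φ x uh τ, φ x' uh τ) := rfl
        rw [hc0, hcτ, neg_mul] at this
        exact this
      have hVb : V (xp, φ x' uh τ) ≤ σ * V (x, x') := by
        rw [hxp]
        calc V (φ x uh τ, φ x' uh τ) ≤ Real.exp (-(κc * τ)) * V (x, x') := hflow
          _ ≤ σ * V (x, x') := mul_le_mul_of_nonneg_right hσexp (hVnn _)
      obtain ⟨xq, hq1, hq2, hq3⟩ := hmatch _ hVb
      exact ⟨xq, hq1, Or.inl ⟨hlt, hq2, hlp⟩, hq3⟩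
    · -- jump transition
      have hVb : V (xp, g x' uh) ≤ σ * V (x, x') := by
        rw [hxp]
        have := hc3 x x' uh uh hu𝕌 hu𝕌
        rw [sub_self, norm_zero, hρd0] at this
        calc V (g x uh, g x' uh) ≤ κd * V (x, x') + 0 := by linarith
          _ = κd * V (x, x') := by ring
          _ ≤ σ * V (x, x') := mul_le_mul_of_nonneg_right hσκd (hVnn _)
      obtain ⟨xq, hq1, hq2, hq3⟩ := hmatch _ hVb
      exact ⟨xq, hq1, Or.inr ⟨hge, hle, hq2, hlp⟩, hq3⟩
end
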